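/- arXiv:math-ph/0311010 — 7 statements merged into one kernel-verified Lean document; each statement's English description precedes it below -/
import Mathlib

section
/- Let v ∈ ℝ³. Define β_σ = 1/12 if |σ|² = 2 and β_σ = 1/24 if |σ|² = 3, for σ ∈ ℤ³. Then the sum over all σ ∈ ℤ³ with |σ|² = 2 or |σ|² = 3 of β_σ (v·σ)² equals |v|². -/
private def latS : Finset (Fin 3 → ℤ) :=
  {![1,1,0], ![1,-1,0], ![-1,1,0], ![-1,-1,0],
   ![1,0,1], ![1,0,-1], ![-1,0,1], ![-1,0,-1],
   ![0,1,1], ![0,1,-1], ![0,-1,1], ![0,-1,-1],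
   ![1,1,1], ![1,1,-1], ![1,-1,1], ![1,-1,-1],
   ![-1,1,1], ![-1,1,-1], ![-1,-1,1], ![-1,-1,-1]}

private lemma latS_mem (σ : Fin 3 → ℤ) :
    (∑ i, (σ i) ^ 2 = 2 ∨ ∑ i, (σ i) ^ 2 = 3) ↔ σ ∈ (↑latS : Set (Fin 3 → ℤ)) := by
  rw [Finset.mem_coe]
  constructor
  · rintro h
    have hb : ∀ i, -1 ≤ σ i ∧ σ i ≤ 1 := by
      intro i
      have h3 : ∑ i, (σ i)^2 ≤ 3 := by rcases h with h|h <;> omega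
      have hi : (σ i)^2 ≤ 3 :=
        le_trans (Finset.single_le_sum (fun j _ => sq_nonneg (σ j)) (Finset.mem_univ i)) h3
      constructor <;> nlinarith
    have he : σ = ![σ 0, σ 1, σ 2] := by
      funext i; fin_cases i <;> simp
    simp only [Fin.sum_univ_three] at h
    obtain ⟨h00,h01⟩ := hb 0
    obtain ⟨h10,h11⟩ := hb 1
    obtain ⟨h20,h21⟩ := hb 2
    rw [he]
    interval_cases (σ 0) <;> interval_cases (σ 1) <;> interval_cases (σ 2) <;>
      revert h <;> decide
  · intro hσ
    fin_cases hσ <;> decide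

theorem lattice_vectors_quadratic_identity (v : EuclideanSpace ℝ (Fin 3)) :
    ∑ᶠ (σ : Fin 3 → ℤ) (_ : (∑ i, (σ i) ^ 2 = 2 ∨ ∑ i, (σ i) ^ 2 = 3)),
      (if ∑ i, (σ i) ^ 2 = 2 then (1 : ℝ) / 12 else 1 / 24) *
        (∑ i, v i * (σ i : ℝ)) ^ 2 = ‖v‖ ^ 2 := by
  simp only [latS_mem]
  rw [finsum_mem_coe_finset, EuclideanSpace.norm_eq,
    Real.sq_sqrt (by positivity : (0:ℝ) ≤ ∑ i, ‖v i‖ ^ 2)]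
  rw [latS]
  repeat rw [Finset.sum_insert (by decide)]
  rw [Finset.sum_singleton]
  norm_num [Fin.sum_univ_three, Real.norm_eq_abs, sq_abs, Matrix.cons_val_two, Matrix.tail_cons, Matrix.head_cons]
  ring
end

section
/- Let b > 0 and s > 0, and set f(p) = p²s⁻²/(p² + s⁻²) + b·s·p² for p ∈ ℝ³. Suppose r vectors w_j ∈ ℝ³ and weights β_j > 0 satisfy Σ_j β_j (p·w_j)² ≤ |p|² for all p, and b = 2(Σ_j β_j)^{1/2}. Then for all p ∈ ℝ³, f(p) ≥ Σ_j 4β_j sin²((p·w_j)/2). -/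
open Real

theorem fourier_space_finite_difference_bound (b s : ℝ) (hs : 0 < s)
    (r : ℕ) (w : Fin r → EuclideanSpace ℝ (Fin 3)) (β : Fin r → ℝ)
    (hβ : ∀ j, 0 < β j)
    (hbound : ∀ p : EuclideanSpace ℝ (Fin 3),
      ∑ j, β j * (inner ℝ p (w j) : ℝ) ^ 2 ≤ ‖p‖ ^ 2)
    (hb : b = 2 * Real.sqrt (∑ j, β j)) :
    ∀ p : EuclideanSpace ℝ (Fin 3),
      ‖p‖ ^ 2 * s⁻¹ ^ 2 / (‖p‖ ^ 2 + s⁻¹ ^ 2) + b * s * ‖p‖ ^ 2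
        ≥ ∑ j, 4 * β j * Real.sin ((inner ℝ p (w j) : ℝ) / 2) ^ 2 := by
  intro p
  set q : ℝ := ‖p‖ ^ 2 with hq
  have hq0 : 0 ≤ q := by positivity
  have hβsum : 0 ≤ ∑ j, β j := Finset.sum_nonneg fun j _ => (hβ j).le
  have hb0 : 0 ≤ b := by rw [hb]; positivity
  have hb2 : b ^ 2 = 4 * ∑ j, β j := by
    rw [hb, mul_pow, sq_sqrt hβsum]; ring
  have h1 : (∑ j, 4 * β j * Real.sin ((inner ℝ p (w j) : ℝ) / 2) ^ 2) ≤ q := by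
    calc (∑ j, 4 * β j * Real.sin ((inner ℝ p (w j) : ℝ) / 2) ^ 2)
        ≤ ∑ j, β j * (inner ℝ p (w j) : ℝ) ^ 2 := by
          apply Finset.sum_le_sum
          intro j _
          have h3 := Real.sin_sq_le_sq (x := (inner ℝ p (w j) : ℝ) / 2)
          nlinarith [(hβ j).le, h3]
      _ ≤ q := hbound p
  have h2 : (∑ j, 4 * β j * Real.sin ((inner ℝ p (w j) : ℝ) / 2) ^ 2) ≤ b ^ 2 := by
    rw [hb2, Finset.mul_sum]
    apply Finset.sum_le_sum
    intro j _
    have h3 := Real.sin_sq_le_one ((inner ℝ p (w j) : ℝ) / 2)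
    nlinarith [(hβ j).le, h3]
  have hden : 0 < q + s⁻¹ ^ 2 := by positivity
  have hfirst : 0 ≤ q * s⁻¹ ^ 2 / (q + s⁻¹ ^ 2) := by positivity
  by_cases h : b ≤ s * q
  · have : b ^ 2 ≤ b * s * q := by nlinarith
    linarith
  · push_neg at h
    have key : q ≤ q * s⁻¹ ^ 2 / (q + s⁻¹ ^ 2) + b * s * q := by
      rw [div_add' _ _ _ hden.ne', le_div_iff₀ hden]
      have hsinv : s⁻¹ > 0 := by positivity
      have hss : s * s⁻¹ = 1 := mul_inv_cancel₀ hs.ne'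
      have key2 : q * (s * q) * s⁻¹ ≤ q * b * s⁻¹ :=
        mul_le_mul_of_nonneg_right
          (mul_le_mul_of_nonneg_left h.le hq0) hsinv.le
      have hnn : 0 ≤ b * s * (q * q) := by positivity
      have e1 : q * q = q * (s * q) * s⁻¹ := by field_simp
      have e2 : b * s * q * (q + s⁻¹ ^ 2) = b * s * (q * q) + q * b * s⁻¹ := by
        field_simp
      nlinarith [key2, hnn, e1, e2]
    linarith
end

section
/- There exists a constant C > 0 such that for every finitely supported map S : ℤ³ → ℝ, (Σ_{σ∈ℤ³} |S(σ)|⁶)^{1/3} ≤ C·T(S), where T(S) = Σ_{|σ₁−σ₂|=√2} (1/12)(S(σ₁)−S(σ₂))² + Σ_{|σ₁−σ₂|=√3} (1/24)(S(σ₁)−S(σ₂))². -/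
open Finset Function

abbrev V3 := Fin 3 → ℤ

noncomputable section

def boxF (M : ℤ) : Finset V3 := Fintype.piFinset fun _ => Finset.Icc (-M) M

lemma mem_boxF {M : ℤ} {x : V3} : x ∈ boxF M ↔ ∀ i, -M ≤ x i ∧ x i ≤ M := by
  simp [boxF, Fintype.mem_piFinset]

/-- Cauchy–Schwarz with square roots. -/
lemma cs_sqrt {α : Type*} (s : Finset α) (f g : α → ℝ) :
    ∑ i ∈ s, f i * g i ≤ Real.sqrt (∑ i ∈ s, f i ^ 2) * Real.sqrt (∑ i ∈ s, g i ^ 2) := by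
  calc ∑ i ∈ s, f i * g i ≤ |∑ i ∈ s, f i * g i| := le_abs_self _
    _ = Real.sqrt ((∑ i ∈ s, f i * g i) ^ 2) := (Real.sqrt_sq_eq_abs _).symm
    _ ≤ Real.sqrt ((∑ i ∈ s, f i ^ 2) * (∑ i ∈ s, g i ^ 2)) := by
        apply Real.sqrt_le_sqrt
        exact Finset.sum_mul_sq_le_sq_mul_sq s f g
    _ = _ := Real.sqrt_mul (by positivity) _

lemma tele_int (φ : ℤ → ℝ) (a b : ℤ) (h : a ≤ b) :
    ∑ t ∈ Finset.Ico a b, (φ (t + 1) - φ t) = φ b - φ a := by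
  obtain ⟨n, rfl⟩ := Int.le.dest h
  clear h
  induction n with
  | zero => simp
  | succ n ih =>
      have h1 : (a + ((n:ℤ) + 1)) = (a + n) + 1 := by ring
      have h2 : ((n + 1 : ℕ) : ℤ) = (n : ℤ) + 1 := by push_cast; ring
      rw [h2, h1]
      have h3 : Finset.Ico a (a + (n:ℤ) + 1) = insert (a + (n:ℤ)) (Finset.Ico a (a + (n:ℤ))) := by
        ext t; simp
      rw [h3, Finset.sum_insert (by simp)]
      rw [show a + (n:ℤ) + 1 = a + ((n:ℤ)+1) by ring] at *
      rw [ih]; ring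

lemma quart_diff (a b : ℝ) : |a ^ 4 - b ^ 4| ≤ 2 * (|a| ^ 3 + |b| ^ 3) * |a - b| := by
  have h : a ^ 4 - b ^ 4 = (a - b) * (a ^ 3 + a ^ 2 * b + a * b ^ 2 + b ^ 3) := by ring
  rw [h, abs_mul, mul_comm]
  apply mul_le_mul_of_nonneg_right _ (abs_nonneg _)
  have h1 : |a ^ 3 + a ^ 2 * b + a * b ^ 2 + b ^ 3| ≤ |a| ^ 3 + |a| ^ 2 * |b| + |a| * |b| ^ 2 + |b| ^ 3 := by
    calc |a ^ 3 + a ^ 2 * b + a * b ^ 2 + b ^ 3|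
        ≤ |a ^ 3 + a ^ 2 * b + a * b ^ 2| + |b ^ 3| := abs_add_le _ _
      _ ≤ |a ^ 3 + a ^ 2 * b| + |a * b ^ 2| + |b ^ 3| := by gcongr; exact abs_add_le _ _
      _ ≤ |a ^ 3| + |a ^ 2 * b| + |a * b ^ 2| + |b ^ 3| := by gcongr; exact abs_add_le _ _
      _ = |a| ^ 3 + |a| ^ 2 * |b| + |a| * |b| ^ 2 + |b| ^ 3 := by
          rw [abs_mul, abs_mul, abs_pow, abs_pow, abs_pow, abs_pow]
  refine h1.trans ?_
  nlinarith [abs_nonneg a, abs_nonneg b, sq_nonneg (|a| - |b|), sq_nonneg (|a| + |b|),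
    mul_nonneg (abs_nonneg a) (abs_nonneg b)]

lemma amgm3 (x y z : ℝ) (hx : 0 ≤ x) (hy : 0 ≤ y) (hz : 0 ≤ z) :
    27 * (x * y * z) ≤ (x + y + z) ^ 3 := by
  nlinarith [sq_nonneg (x - y), sq_nonneg (y - z), sq_nonneg (x - z), mul_nonneg hx hy,
    mul_nonneg hy hz, mul_nonneg hx hz, sq_nonneg (x + y + z), mul_nonneg (mul_nonneg hx hy) hz]

end


lemma eta3 (x : V3) : ![x 0, x 1, x 2] = x := by
  funext i; fin_cases i <;> rfl

lemma triple_sum_eq (s0 s1 s2 : Finset ℤ) (φ : V3 → ℝ) :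
    ∑ x ∈ Fintype.piFinset (fun i : Fin 3 => ![s0, s1, s2] i), φ x
      = ∑ t0 ∈ s0, ∑ t1 ∈ s1, ∑ t2 ∈ s2, φ ![t0, t1, t2] := by
  have h : ∑ t0 ∈ s0, ∑ t1 ∈ s1, ∑ t2 ∈ s2, φ ![t0, t1, t2]
      = ∑ p ∈ s0 ×ˢ s1 ×ˢ s2, φ ![p.1, p.2.1, p.2.2] := by
    rw [Finset.sum_product]
    exact Finset.sum_congr rfl fun t0 _ => by rw [Finset.sum_product]
  rw [h]
  apply Finset.sum_nbij' (i := fun x => ((x 0 : ℤ), ((x 1 : ℤ), (x 2 : ℤ))))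
    (j := fun p => ![p.1, p.2.1, p.2.2])
  · intro x hx
    rw [Fintype.mem_piFinset] at hx
    simp only [Finset.mem_product]
    exact ⟨hx 0, hx 1, hx 2⟩
  · intro p hp
    simp only [Finset.mem_product] at hp
    rw [Fintype.mem_piFinset]
    intro i; fin_cases i
    · exact hp.1
    · exact hp.2.1
    · exact hp.2.2
  · intro x hx; exact eta3 x
  · intro p hp; rfl
  · intro x hx; rw [eta3]

/-- Loomis–Whitney / discrete Gagliardo–Nirenberg trilinear estimate. -/
lemma lw (I : Finset ℤ) (a b c : ℤ → ℤ → ℝ) (ha : ∀ x y, 0 ≤ a x y) :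
    ∑ t0 ∈ I, ∑ t1 ∈ I, ∑ t2 ∈ I, a t1 t2 * b t0 t2 * c t0 t1
      ≤ Real.sqrt (∑ t1 ∈ I, ∑ t2 ∈ I, a t1 t2 ^ 2) *
        Real.sqrt (∑ t0 ∈ I, ∑ t2 ∈ I, b t0 t2 ^ 2) *
        Real.sqrt (∑ t0 ∈ I, ∑ t1 ∈ I, c t0 t1 ^ 2) := by
  have cs_sqrt : ∀ {α : Type} (s : Finset α) (f g : α → ℝ),
      ∑ i ∈ s, f i * g i ≤ Real.sqrt (∑ i ∈ s, f i ^ 2) * Real.sqrt (∑ i ∈ s, g i ^ 2) := by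
    intro α s f g
    calc ∑ i ∈ s, f i * g i ≤ |∑ i ∈ s, f i * g i| := le_abs_self _
      _ = Real.sqrt ((∑ i ∈ s, f i * g i) ^ 2) := (Real.sqrt_sq_eq_abs _).symm
      _ ≤ Real.sqrt ((∑ i ∈ s, f i ^ 2) * (∑ i ∈ s, g i ^ 2)) :=
          Real.sqrt_le_sqrt (Finset.sum_mul_sq_le_sq_mul_sq s f g)
      _ = _ := Real.sqrt_mul (by positivity) _
  set β : ℤ → ℝ := fun t2 => Real.sqrt (∑ t0 ∈ I, b t0 t2 ^ 2) with hβ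
  set γ : ℤ → ℝ := fun t1 => Real.sqrt (∑ t0 ∈ I, c t0 t1 ^ 2) with hγ
  have step1 : ∑ t0 ∈ I, ∑ t1 ∈ I, ∑ t2 ∈ I, a t1 t2 * b t0 t2 * c t0 t1
      ≤ ∑ t1 ∈ I, ∑ t2 ∈ I, a t1 t2 * (β t2 * γ t1) := by
    rw [Finset.sum_comm]
    apply Finset.sum_le_sum; intro t1 _
    rw [Finset.sum_comm]
    apply Finset.sum_le_sum; intro t2 _
    have : ∑ t0 ∈ I, a t1 t2 * b t0 t2 * c t0 t1
        = a t1 t2 * ∑ t0 ∈ I, b t0 t2 * c t0 t1 := by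
      rw [Finset.mul_sum]; apply Finset.sum_congr rfl; intro t0 _; ring
    rw [this]
    apply mul_le_mul_of_nonneg_left _ (ha t1 t2)
    exact cs_sqrt I (fun t0 => b t0 t2) (fun t0 => c t0 t1)
  refine step1.trans ?_
  have step2 : ∑ t1 ∈ I, ∑ t2 ∈ I, a t1 t2 * (β t2 * γ t1)
      ≤ Real.sqrt (∑ t1 ∈ I, ∑ t2 ∈ I, a t1 t2 ^ 2) *
        Real.sqrt (∑ t1 ∈ I, ∑ t2 ∈ I, (β t2 * γ t1) ^ 2) := by
    have h1 : ∑ t1 ∈ I, ∑ t2 ∈ I, a t1 t2 * (β t2 * γ t1)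
        = ∑ p ∈ I ×ˢ I, a p.1 p.2 * (β p.2 * γ p.1) := by
      rw [Finset.sum_product]
    have h2 : ∑ t1 ∈ I, ∑ t2 ∈ I, a t1 t2 ^ 2 = ∑ p ∈ I ×ˢ I, a p.1 p.2 ^ 2 := by
      rw [Finset.sum_product]
    have h3 : ∑ t1 ∈ I, ∑ t2 ∈ I, (β t2 * γ t1) ^ 2 = ∑ p ∈ I ×ˢ I, (β p.2 * γ p.1) ^ 2 := by
      rw [Finset.sum_product]
    rw [h1, h2, h3]
    exact cs_sqrt (I ×ˢ I) (fun p => a p.1 p.2) (fun p => β p.2 * γ p.1)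
  refine step2.trans ?_
  rw [mul_assoc]
  apply mul_le_mul_of_nonneg_left _ (Real.sqrt_nonneg _)
  have : ∑ t1 ∈ I, ∑ t2 ∈ I, (β t2 * γ t1) ^ 2
      = (∑ t0 ∈ I, ∑ t2 ∈ I, b t0 t2 ^ 2) * (∑ t0 ∈ I, ∑ t1 ∈ I, c t0 t1 ^ 2) := by
    have hb2 : ∀ t2, β t2 ^ 2 = ∑ t0 ∈ I, b t0 t2 ^ 2 := fun t2 =>
      Real.sq_sqrt (by positivity)
    have hc2 : ∀ t1, γ t1 ^ 2 = ∑ t0 ∈ I, c t0 t1 ^ 2 := fun t1 =>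
      Real.sq_sqrt (by positivity)
    calc ∑ t1 ∈ I, ∑ t2 ∈ I, (β t2 * γ t1) ^ 2
        = ∑ t1 ∈ I, (∑ t2 ∈ I, β t2 ^ 2) * γ t1 ^ 2 := by
          apply Finset.sum_congr rfl; intro t1 _
          rw [Finset.sum_mul]; apply Finset.sum_congr rfl; intro t2 _; ring
      _ = (∑ t2 ∈ I, β t2 ^ 2) * ∑ t1 ∈ I, γ t1 ^ 2 := by rw [← Finset.mul_sum]
      _ = _ := by
          simp_rw [hb2, hc2]
          rw [Finset.sum_comm (s := I) (t := I) (f := fun t2 t0 => b t0 t2 ^ 2),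
            Finset.sum_comm (s := I) (t := I) (f := fun t1 t0 => c t0 t1 ^ 2)]
  rw [this, Real.sqrt_mul (by positivity)]

lemma abs_pow_six (a : ℝ) : |a| ^ 6 = a ^ 6 := by
  rw [show (6:ℕ) = 2*3 by rfl, pow_mul, pow_mul, sq_abs]

lemma sum_f6_le (f : V3 → ℝ) (N : ℤ) (h0 : ∀ x, x ∉ boxF N → f x = 0) (s : Finset V3) :
    ∑ x ∈ s, f x ^ 6 ≤ ∑ x ∈ boxF (N+1), f x ^ 6 := by
  classical
  have h1 : ∑ x ∈ s, f x ^ 6 = ∑ x ∈ s.filter (· ∈ boxF N), f x ^ 6 := by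
    rw [Finset.sum_filter_of_ne]
    intro x _ hx
    by_contra hmem
    rw [h0 x hmem] at hx; simp at hx
  rw [h1]
  apply Finset.sum_le_sum_of_subset_of_nonneg
  · intro x hx
    rw [Finset.mem_filter] at hx
    have := mem_boxF.1 hx.2
    rw [mem_boxF]; intro i; have := this i; omega
  · intro x _ _; positivity

lemma sigma_bound (f : V3 → ℝ) (N : ℤ) (h0 : ∀ x, x ∉ boxF N → f x = 0)
    (e : V3) (y : ℤ × (ℤ × ℤ) → V3) (hyinj : Function.Injective y)
    (hybox : ∀ q ∈ (Finset.Icc (-(N+1)) N) ×ˢ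
        ((Finset.Icc (-(N+1)) (N+1)) ×ˢ (Finset.Icc (-(N+1)) (N+1))), y q ∈ boxF (N+1)) :
    ∑ q ∈ (Finset.Icc (-(N+1)) N) ×ˢ
        ((Finset.Icc (-(N+1)) (N+1)) ×ˢ (Finset.Icc (-(N+1)) (N+1))),
        |f (y q + e) ^ 4 - f (y q) ^ 4|
      ≤ Real.sqrt (∑ x ∈ boxF (N+1), (f (x + e) - f x) ^ 2) *
        (4 * Real.sqrt (∑ x ∈ boxF (N+1), f x ^ 6)) := by
  classical
  set Q := (Finset.Icc (-(N+1)) N) ×ˢ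
      ((Finset.Icc (-(N+1)) (N+1)) ×ˢ (Finset.Icc (-(N+1)) (N+1))) with hQ
  set A := ∑ x ∈ boxF (N+1), f x ^ 6 with hAdef
  have hA : 0 ≤ A := by positivity
  have step1 : ∑ q ∈ Q, |f (y q + e) ^ 4 - f (y q) ^ 4|
      ≤ ∑ q ∈ Q, |f (y q + e) - f (y q)| * (2 * (|f (y q + e)| ^ 3 + |f (y q)| ^ 3)) := by
    apply Finset.sum_le_sum
    intro q _
    have := quart_diff (f (y q + e)) (f (y q))
    calc |f (y q + e) ^ 4 - f (y q) ^ 4|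
        ≤ 2 * (|f (y q + e)| ^ 3 + |f (y q)| ^ 3) * |f (y q + e) - f (y q)| := this
      _ = _ := by ring
  refine step1.trans ?_
  refine (cs_sqrt Q _ _).trans ?_
  have hu : ∑ q ∈ Q, |f (y q + e) - f (y q)| ^ 2 ≤ ∑ x ∈ boxF (N+1), (f (x + e) - f x) ^ 2 := by
    have h1 : ∑ q ∈ Q, |f (y q + e) - f (y q)| ^ 2 = ∑ q ∈ Q, (f (y q + e) - f (y q)) ^ 2 := by
      apply Finset.sum_congr rfl; intro q _; rw [sq_abs]
    rw [h1]
    have h2 : ∑ q ∈ Q, (f (y q + e) - f (y q)) ^ 2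
        = ∑ x ∈ Q.image y, (f (x + e) - f x) ^ 2 := by
      rw [Finset.sum_image (fun a _ b _ h => hyinj h)]
    rw [h2]
    apply Finset.sum_le_sum_of_subset_of_nonneg
    · intro x hx
      obtain ⟨q, hq, rfl⟩ := Finset.mem_image.1 hx
      exact hybox q hq
    · intro x _ _; positivity
  have hv : ∑ q ∈ Q, (2 * (|f (y q + e)| ^ 3 + |f (y q)| ^ 3)) ^ 2 ≤ 16 * A := by
    have hpt : ∀ q, (2 * (|f (y q + e)| ^ 3 + |f (y q)| ^ 3)) ^ 2
        ≤ 8 * f (y q + e) ^ 6 + 8 * f (y q) ^ 6 := by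
      intro q
      have e1 : (|f (y q + e)| ^ 3) ^ 2 = f (y q + e) ^ 6 := by
        rw [← pow_mul]; exact abs_pow_six _
      have e2 : (|f (y q)| ^ 3) ^ 2 = f (y q) ^ 6 := by
        rw [← pow_mul]; exact abs_pow_six _
      nlinarith [sq_nonneg (|f (y q + e)| ^ 3 - |f (y q)| ^ 3)]
    calc ∑ q ∈ Q, (2 * (|f (y q + e)| ^ 3 + |f (y q)| ^ 3)) ^ 2
        ≤ ∑ q ∈ Q, (8 * f (y q + e) ^ 6 + 8 * f (y q) ^ 6) := Finset.sum_le_sum fun q _ => hpt q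
      _ = 8 * ∑ q ∈ Q, f (y q + e) ^ 6 + 8 * ∑ q ∈ Q, f (y q) ^ 6 := by
          rw [Finset.sum_add_distrib, Finset.mul_sum, Finset.mul_sum]
      _ ≤ 8 * A + 8 * A := by
          have i1 : ∑ q ∈ Q, f (y q + e) ^ 6 = ∑ x ∈ Q.image (fun q => y q + e), f x ^ 6 := by
            rw [Finset.sum_image]
            intro a _ b _ h
            exact hyinj (by simpa using h)
          have i2 : ∑ q ∈ Q, f (y q) ^ 6 = ∑ x ∈ Q.image y, f x ^ 6 := by
            rw [Finset.sum_image (fun a _ b _ h => hyinj h)]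
          rw [i1, i2]
          exact add_le_add
            (mul_le_mul_of_nonneg_left (sum_f6_le f N h0 _) (by norm_num))
            (mul_le_mul_of_nonneg_left (sum_f6_le f N h0 _) (by norm_num))
      _ = 16 * A := by ring
  calc Real.sqrt (∑ q ∈ Q, |f (y q + e) - f (y q)| ^ 2) *
        Real.sqrt (∑ q ∈ Q, (2 * (|f (y q + e)| ^ 3 + |f (y q)| ^ 3)) ^ 2)
      ≤ Real.sqrt (∑ x ∈ boxF (N+1), (f (x + e) - f x) ^ 2) * Real.sqrt (16 * A) := by
        exact mul_le_mul (Real.sqrt_le_sqrt hu) (Real.sqrt_le_sqrt hv)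
          (Real.sqrt_nonneg _) (Real.sqrt_nonneg _)
    _ = _ := by
        rw [show (16 : ℝ) * A = 4 ^ 2 * A by ring, Real.sqrt_mul (by positivity),
          Real.sqrt_sq (by norm_num)]

lemma upd_cons0 (t0 t1 t2 s : ℤ) :
    Function.update (![t0, t1, t2] : V3) 0 s = ![s, t1, t2] := by
  funext i; fin_cases i <;> simp [Function.update]
lemma upd_cons1 (t0 t1 t2 s : ℤ) :
    Function.update (![t0, t1, t2] : V3) 1 s = ![t0, s, t2] := by
  funext i; fin_cases i <;> simp [Function.update]
lemma upd_cons2 (t0 t1 t2 s : ℤ) :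
    Function.update (![t0, t1, t2] : V3) 2 s = ![t0, t1, s] := by
  funext i; fin_cases i <;> simp [Function.update]
lemma add_single0 (t0 t1 t2 : ℤ) :
    (![t0, t1, t2] : V3) + Pi.single 0 1 = ![t0 + 1, t1, t2] := by
  funext i; fin_cases i <;> simp [Pi.single_apply]
lemma add_single1 (t0 t1 t2 : ℤ) :
    (![t0, t1, t2] : V3) + Pi.single 1 1 = ![t0, t1 + 1, t2] := by
  funext i; fin_cases i <;> simp [Pi.single_apply]
lemma add_single2 (t0 t1 t2 : ℤ) :
    (![t0, t1, t2] : V3) + Pi.single 2 1 = ![t0, t1, t2 + 1] := by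
  funext i; fin_cases i <;> simp [Pi.single_apply]

lemma core (f : V3 → ℝ) (N : ℤ) (h0 : ∀ x, x ∉ boxF N → f x = 0) :
    ∑ x ∈ boxF (N+1), f x ^ 6
      ≤ 4096 * ((∑ x ∈ boxF (N+1), (f (x + Pi.single 0 1) - f x) ^ 2) *
          ((∑ x ∈ boxF (N+1), (f (x + Pi.single 1 1) - f x) ^ 2) *
           (∑ x ∈ boxF (N+1), (f (x + Pi.single 2 1) - f x) ^ 2))) := by
  classical
  set I := Finset.Icc (-(N+1)) (N+1) with hI
  set J := Finset.Icc (-(N+1)) N with hJ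
  set g : Fin 3 → V3 → ℝ := fun i x =>
    ∑ t ∈ J, |f (Function.update x i (t+1)) ^ 4 - f (Function.update x i t) ^ 4| with hg
  have hgnn : ∀ i x, 0 ≤ g i x := fun i x => Finset.sum_nonneg fun t _ => abs_nonneg _
  have hFg : ∀ i x, f x ^ 4 ≤ g i x := by
    intro i x
    by_cases hx : x ∈ boxF N
    · have hxi := (mem_boxF.1 hx) i
      have hzero : f (Function.update x i (-(N+1))) = 0 := by
        apply h0
        intro hmem
        have h2 := (mem_boxF.1 hmem) i
        rw [Function.update_self] at h2
        omega
      have htele := tele_int (fun t => f (Function.update x i t) ^ 4) (-(N+1)) (x i) (by omega)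
      have hupd : Function.update x i (x i) = x := Function.update_eq_self i x
      calc f x ^ 4
          = f (Function.update x i (x i)) ^ 4 - f (Function.update x i (-(N+1))) ^ 4 := by
            rw [hupd, hzero]; ring
        _ = ∑ t ∈ Finset.Ico (-(N+1)) (x i),
              (f (Function.update x i (t+1)) ^ 4 - f (Function.update x i t) ^ 4) := htele.symm
        _ ≤ ∑ t ∈ Finset.Ico (-(N+1)) (x i),
              |f (Function.update x i (t+1)) ^ 4 - f (Function.update x i t) ^ 4| :=
            Finset.sum_le_sum fun t _ => le_abs_self _
        _ ≤ g i x := by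
            apply Finset.sum_le_sum_of_subset_of_nonneg
            · intro t ht
              rw [Finset.mem_Ico] at ht
              rw [hJ, Finset.mem_Icc]
              omega
            · intro t _ _; exact abs_nonneg _
    · have hfx : f x = 0 := h0 x hx
      have : f x ^ 4 = 0 := by rw [hfx]; norm_num
      rw [this]; exact hgnn i x
  have hP2 : ∀ x : V3, f x ^ 6 ≤
      Real.sqrt (g 0 x) * (Real.sqrt (g 1 x) * Real.sqrt (g 2 x)) := by
    intro x
    have hFnn : (0:ℝ) ≤ f x ^ 4 := by positivity
    have hcube : (f x ^ 4) ^ 3 ≤ g 0 x * (g 1 x * g 2 x) := by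
      calc (f x ^ 4) ^ 3 = f x ^ 4 * (f x ^ 4 * f x ^ 4) := by ring
        _ ≤ g 0 x * (g 1 x * g 2 x) := by
            apply mul_le_mul (hFg 0 x) _ (by positivity) (hgnn 0 x)
            exact mul_le_mul (hFg 1 x) (hFg 2 x) hFnn (hgnn 1 x)
    have h6 : f x ^ 6 = Real.sqrt ((f x ^ 4) ^ 3) := by
      have h : (f x ^ 4) ^ 3 = (f x ^ 6) ^ 2 := by ring
      rw [h, Real.sqrt_sq (by positivity)]
    rw [h6]
    calc Real.sqrt ((f x ^ 4) ^ 3) ≤ Real.sqrt (g 0 x * (g 1 x * g 2 x)) :=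
          Real.sqrt_le_sqrt hcube
      _ = _ := by rw [Real.sqrt_mul (hgnn 0 x), Real.sqrt_mul (hgnn 1 x)]
  have hgind : ∀ i x s, g i (Function.update x i s) = g i x := by
    intro i x s
    simp only [hg]
    apply Finset.sum_congr rfl
    intro t _
    rw [Function.update_idem, Function.update_idem]
  set a : ℤ → ℤ → ℝ := fun t1 t2 => Real.sqrt (g 0 ![0, t1, t2]) with ha
  set b : ℤ → ℤ → ℝ := fun t0 t2 => Real.sqrt (g 1 ![t0, 0, t2]) with hb
  set c : ℤ → ℤ → ℝ := fun t0 t1 => Real.sqrt (g 2 ![t0, t1, 0]) with hc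
  have hax : ∀ t0 t1 t2 : ℤ, Real.sqrt (g 0 ![t0, t1, t2]) = a t1 t2 := by
    intro t0 t1 t2
    have h1 : (![t0, t1, t2] : V3) = Function.update (![0, t1, t2] : V3) 0 t0 := by
      rw [upd_cons0]
    rw [h1, hgind, ha]
  have hbx : ∀ t0 t1 t2 : ℤ, Real.sqrt (g 1 ![t0, t1, t2]) = b t0 t2 := by
    intro t0 t1 t2
    have h1 : (![t0, t1, t2] : V3) = Function.update (![t0, 0, t2] : V3) 1 t1 := by
      rw [upd_cons1]
    rw [h1, hgind, hb]
  have hcx : ∀ t0 t1 t2 : ℤ, Real.sqrt (g 2 ![t0, t1, t2]) = c t0 t1 := by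
    intro t0 t1 t2
    have h1 : (![t0, t1, t2] : V3) = Function.update (![t0, t1, 0] : V3) 2 t2 := by
      rw [upd_cons2]
    rw [h1, hgind, hc]
  have hbox_eq : boxF (N+1) = Fintype.piFinset fun i : Fin 3 => ![I, I, I] i := by
    unfold boxF
    congr 1
    funext i
    fin_cases i <;> rfl
  have hsum1 : ∑ x ∈ boxF (N+1), f x ^ 6 ≤
      ∑ t0 ∈ I, ∑ t1 ∈ I, ∑ t2 ∈ I, a t1 t2 * b t0 t2 * c t0 t1 := by
    rw [hbox_eq, triple_sum_eq]
    refine Finset.sum_le_sum fun t0 _ => Finset.sum_le_sum fun t1 _ =>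
      Finset.sum_le_sum fun t2 _ => ?_
    calc f ![t0, t1, t2] ^ 6
        ≤ Real.sqrt (g 0 ![t0, t1, t2]) *
            (Real.sqrt (g 1 ![t0, t1, t2]) * Real.sqrt (g 2 ![t0, t1, t2])) := hP2 _
      _ = a t1 t2 * b t0 t2 * c t0 t1 := by rw [hax, hbx, hcx]; ring
  have hLW := lw I a b c (fun x y => Real.sqrt_nonneg _)
  have hSa : ∑ t1 ∈ I, ∑ t2 ∈ I, a t1 t2 ^ 2 = ∑ t1 ∈ I, ∑ t2 ∈ I, g 0 ![0, t1, t2] := by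
    refine Finset.sum_congr rfl fun t1 _ => Finset.sum_congr rfl fun t2 _ => ?_
    rw [ha]; exact Real.sq_sqrt (hgnn _ _)
  have hSb : ∑ t0 ∈ I, ∑ t2 ∈ I, b t0 t2 ^ 2 = ∑ t0 ∈ I, ∑ t2 ∈ I, g 1 ![t0, 0, t2] := by
    refine Finset.sum_congr rfl fun t0 _ => Finset.sum_congr rfl fun t2 _ => ?_
    rw [hb]; exact Real.sq_sqrt (hgnn _ _)
  have hSc : ∑ t0 ∈ I, ∑ t1 ∈ I, c t0 t1 ^ 2 = ∑ t0 ∈ I, ∑ t1 ∈ I, g 2 ![t0, t1, 0] := by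
    refine Finset.sum_congr rfl fun t0 _ => Finset.sum_congr rfl fun t1 _ => ?_
    rw [hc]; exact Real.sq_sqrt (hgnn _ _)
  set A := ∑ x ∈ boxF (N+1), f x ^ 6 with hAdef
  set D0 := ∑ x ∈ boxF (N+1), (f (x + Pi.single 0 1) - f x) ^ 2 with hD0
  set D1 := ∑ x ∈ boxF (N+1), (f (x + Pi.single 1 1) - f x) ^ 2 with hD1
  set D2 := ∑ x ∈ boxF (N+1), (f (x + Pi.single 2 1) - f x) ^ 2 with hD2
  have hAnn : 0 ≤ A := by
    rw [hAdef]; exact Finset.sum_nonneg fun x _ => by positivity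
  have hD0nn : 0 ≤ D0 := by rw [hD0]; exact Finset.sum_nonneg fun x _ => sq_nonneg _
  have hD1nn : 0 ≤ D1 := by rw [hD1]; exact Finset.sum_nonneg fun x _ => sq_nonneg _
  have hD2nn : 0 ≤ D2 := by rw [hD2]; exact Finset.sum_nonneg fun x _ => sq_nonneg _
  -- Sigma bounds via sigma_bound
  have hS0 : ∑ t1 ∈ I, ∑ t2 ∈ I, g 0 ![0, t1, t2] ≤ Real.sqrt D0 * (4 * Real.sqrt A) := by
    have hinj : Function.Injective (fun q : ℤ × (ℤ × ℤ) => (![q.1, q.2.1, q.2.2] : V3)) := by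
      rintro ⟨s, u, v⟩ ⟨s', u', v'⟩ h
      have e0 := congrFun h 0
      have e1 := congrFun h 1
      have e2 := congrFun h 2
      simp only [Matrix.cons_val_zero, Matrix.cons_val_one, Matrix.head_cons,
        Matrix.cons_val_two, Matrix.tail_cons] at e0 e1 e2
      simp [e0, e1, e2]
    have hbox : ∀ q ∈ J ×ˢ (I ×ˢ I), (![q.1, q.2.1, q.2.2] : V3) ∈ boxF (N+1) := by
      rintro ⟨s, u, v⟩ hq
      simp only [Finset.mem_product, hJ, hI, Finset.mem_Icc] at hq
      rw [mem_boxF]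
      intro i
      fin_cases i <;> (simp; try omega)
    have key := sigma_bound f N h0 (Pi.single 0 1) (fun q => ![q.1, q.2.1, q.2.2]) hinj hbox
    have lhs_eq : ∑ t1 ∈ I, ∑ t2 ∈ I, g 0 ![0, t1, t2]
        = ∑ q ∈ J ×ˢ (I ×ˢ I),
            |f (![q.1, q.2.1, q.2.2] + Pi.single 0 1) ^ 4 - f ![q.1, q.2.1, q.2.2] ^ 4| := by
      calc ∑ t1 ∈ I, ∑ t2 ∈ I, g 0 ![0, t1, t2]
          = ∑ t1 ∈ I, ∑ t2 ∈ I, ∑ t ∈ J, |f ![t+1, t1, t2] ^ 4 - f ![t, t1, t2] ^ 4| := by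
            refine Finset.sum_congr rfl fun t1 _ => Finset.sum_congr rfl fun t2 _ => ?_
            simp only [hg]
            refine Finset.sum_congr rfl fun t _ => ?_
            rw [upd_cons0, upd_cons0]
        _ = ∑ t1 ∈ I, ∑ t ∈ J, ∑ t2 ∈ I, |f ![t+1, t1, t2] ^ 4 - f ![t, t1, t2] ^ 4| :=
            Finset.sum_congr rfl fun t1 _ => Finset.sum_comm
        _ = ∑ t ∈ J, ∑ t1 ∈ I, ∑ t2 ∈ I, |f ![t+1, t1, t2] ^ 4 - f ![t, t1, t2] ^ 4| :=
            Finset.sum_comm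
        _ = _ := by
            rw [Finset.sum_product]
            refine Finset.sum_congr rfl fun t _ => ?_
            rw [Finset.sum_product]
            refine Finset.sum_congr rfl fun t1 _ => Finset.sum_congr rfl fun t2 _ => ?_
            rw [add_single0]
    rw [lhs_eq]
    exact key
  have hS1 : ∑ t0 ∈ I, ∑ t2 ∈ I, g 1 ![t0, 0, t2] ≤ Real.sqrt D1 * (4 * Real.sqrt A) := by
    have hinj : Function.Injective (fun q : ℤ × (ℤ × ℤ) => (![q.2.1, q.1, q.2.2] : V3)) := by
      rintro ⟨s, u, v⟩ ⟨s', u', v'⟩ h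
      have e0 := congrFun h 0
      have e1 := congrFun h 1
      have e2 := congrFun h 2
      simp only [Matrix.cons_val_zero, Matrix.cons_val_one, Matrix.head_cons,
        Matrix.cons_val_two, Matrix.tail_cons] at e0 e1 e2
      simp [e0, e1, e2]
    have hbox : ∀ q ∈ J ×ˢ (I ×ˢ I), (![q.2.1, q.1, q.2.2] : V3) ∈ boxF (N+1) := by
      rintro ⟨s, u, v⟩ hq
      simp only [Finset.mem_product, hJ, hI, Finset.mem_Icc] at hq
      rw [mem_boxF]
      intro i
      fin_cases i <;> (simp; try omega)
    have key := sigma_bound f N h0 (Pi.single 1 1) (fun q => ![q.2.1, q.1, q.2.2]) hinj hbox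
    have lhs_eq : ∑ t0 ∈ I, ∑ t2 ∈ I, g 1 ![t0, 0, t2]
        = ∑ q ∈ J ×ˢ (I ×ˢ I),
            |f (![q.2.1, q.1, q.2.2] + Pi.single 1 1) ^ 4 - f ![q.2.1, q.1, q.2.2] ^ 4| := by
      calc ∑ t0 ∈ I, ∑ t2 ∈ I, g 1 ![t0, 0, t2]
          = ∑ t0 ∈ I, ∑ t2 ∈ I, ∑ t ∈ J, |f ![t0, t+1, t2] ^ 4 - f ![t0, t, t2] ^ 4| := by
            refine Finset.sum_congr rfl fun t0 _ => Finset.sum_congr rfl fun t2 _ => ?_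
            simp only [hg]
            refine Finset.sum_congr rfl fun t _ => ?_
            rw [upd_cons1, upd_cons1]
        _ = ∑ t0 ∈ I, ∑ t ∈ J, ∑ t2 ∈ I, |f ![t0, t+1, t2] ^ 4 - f ![t0, t, t2] ^ 4| :=
            Finset.sum_congr rfl fun t0 _ => Finset.sum_comm
        _ = ∑ t ∈ J, ∑ t0 ∈ I, ∑ t2 ∈ I, |f ![t0, t+1, t2] ^ 4 - f ![t0, t, t2] ^ 4| :=
            Finset.sum_comm
        _ = _ := by
            rw [Finset.sum_product]
            refine Finset.sum_congr rfl fun t _ => ?_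
            rw [Finset.sum_product]
            refine Finset.sum_congr rfl fun t0 _ => Finset.sum_congr rfl fun t2 _ => ?_
            rw [add_single1]
    rw [lhs_eq]
    exact key
  have hS2 : ∑ t0 ∈ I, ∑ t1 ∈ I, g 2 ![t0, t1, 0] ≤ Real.sqrt D2 * (4 * Real.sqrt A) := by
    have hinj : Function.Injective (fun q : ℤ × (ℤ × ℤ) => (![q.2.1, q.2.2, q.1] : V3)) := by
      rintro ⟨s, u, v⟩ ⟨s', u', v'⟩ h
      have e0 := congrFun h 0
      have e1 := congrFun h 1
      have e2 := congrFun h 2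
      simp only [Matrix.cons_val_zero, Matrix.cons_val_one, Matrix.head_cons,
        Matrix.cons_val_two, Matrix.tail_cons] at e0 e1 e2
      simp [e0, e1, e2]
    have hbox : ∀ q ∈ J ×ˢ (I ×ˢ I), (![q.2.1, q.2.2, q.1] : V3) ∈ boxF (N+1) := by
      rintro ⟨s, u, v⟩ hq
      simp only [Finset.mem_product, hJ, hI, Finset.mem_Icc] at hq
      rw [mem_boxF]
      intro i
      fin_cases i <;> (simp; try omega)
    have key := sigma_bound f N h0 (Pi.single 2 1) (fun q => ![q.2.1, q.2.2, q.1]) hinj hbox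
    have lhs_eq : ∑ t0 ∈ I, ∑ t1 ∈ I, g 2 ![t0, t1, 0]
        = ∑ q ∈ J ×ˢ (I ×ˢ I),
            |f (![q.2.1, q.2.2, q.1] + Pi.single 2 1) ^ 4 - f ![q.2.1, q.2.2, q.1] ^ 4| := by
      calc ∑ t0 ∈ I, ∑ t1 ∈ I, g 2 ![t0, t1, 0]
          = ∑ t0 ∈ I, ∑ t1 ∈ I, ∑ t ∈ J, |f ![t0, t1, t+1] ^ 4 - f ![t0, t1, t] ^ 4| := by
            refine Finset.sum_congr rfl fun t0 _ => Finset.sum_congr rfl fun t1 _ => ?_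
            simp only [hg]
            refine Finset.sum_congr rfl fun t _ => ?_
            rw [upd_cons2, upd_cons2]
        _ = ∑ t0 ∈ I, ∑ t ∈ J, ∑ t1 ∈ I, |f ![t0, t1, t+1] ^ 4 - f ![t0, t1, t] ^ 4| :=
            Finset.sum_congr rfl fun t0 _ => Finset.sum_comm
        _ = ∑ t ∈ J, ∑ t0 ∈ I, ∑ t1 ∈ I, |f ![t0, t1, t+1] ^ 4 - f ![t0, t1, t] ^ 4| :=
            Finset.sum_comm
        _ = _ := by
            rw [Finset.sum_product]
            refine Finset.sum_congr rfl fun t _ => ?_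
            rw [Finset.sum_product]
            refine Finset.sum_congr rfl fun t0 _ => Finset.sum_congr rfl fun t1 _ => ?_
            rw [add_single2]
    rw [lhs_eq]
    exact key
  -- combine
  have hAle : A ≤ Real.sqrt (Real.sqrt D0 * (4 * Real.sqrt A)) *
      (Real.sqrt (Real.sqrt D1 * (4 * Real.sqrt A)) *
       Real.sqrt (Real.sqrt D2 * (4 * Real.sqrt A))) := by
    have h1 := hsum1.trans hLW
    rw [hSa, hSb, hSc] at h1
    refine h1.trans ?_
    have m0 := Real.sqrt_le_sqrt hS0
    have m1 := Real.sqrt_le_sqrt hS1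
    have m2 := Real.sqrt_le_sqrt hS2
    calc Real.sqrt (∑ t1 ∈ I, ∑ t2 ∈ I, g 0 ![0, t1, t2]) *
          Real.sqrt (∑ t0 ∈ I, ∑ t2 ∈ I, g 1 ![t0, 0, t2]) *
          Real.sqrt (∑ t0 ∈ I, ∑ t1 ∈ I, g 2 ![t0, t1, 0])
        ≤ Real.sqrt (Real.sqrt D0 * (4 * Real.sqrt A)) *
          Real.sqrt (Real.sqrt D1 * (4 * Real.sqrt A)) *
          Real.sqrt (Real.sqrt D2 * (4 * Real.sqrt A)) := by
          apply mul_le_mul _ m2 (Real.sqrt_nonneg _)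
            (mul_nonneg (Real.sqrt_nonneg _) (Real.sqrt_nonneg _))
          exact mul_le_mul m0 m1 (Real.sqrt_nonneg _) (Real.sqrt_nonneg _)
      _ = _ := by ring
  have hX0nn : (0:ℝ) ≤ Real.sqrt D0 * (4 * Real.sqrt A) :=
    mul_nonneg (Real.sqrt_nonneg _) (mul_nonneg (by norm_num) (Real.sqrt_nonneg _))
  have hX1nn : (0:ℝ) ≤ Real.sqrt D1 * (4 * Real.sqrt A) :=
    mul_nonneg (Real.sqrt_nonneg _) (mul_nonneg (by norm_num) (Real.sqrt_nonneg _))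
  have hX2nn : (0:ℝ) ≤ Real.sqrt D2 * (4 * Real.sqrt A) :=
    mul_nonneg (Real.sqrt_nonneg _) (mul_nonneg (by norm_num) (Real.sqrt_nonneg _))
  have hsq1 : A ^ 2 ≤ Real.sqrt D0 * (4 * Real.sqrt A) *
      (Real.sqrt D1 * (4 * Real.sqrt A) * (Real.sqrt D2 * (4 * Real.sqrt A))) := by
    have h2 := pow_le_pow_left₀ hAnn hAle 2
    refine h2.trans_eq ?_
    rw [mul_pow, mul_pow, Real.sq_sqrt hX0nn, Real.sq_sqrt hX1nn, Real.sq_sqrt hX2nn]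
  have e0 : Real.sqrt D0 ^ 2 = D0 := Real.sq_sqrt hD0nn
  have e1 : Real.sqrt D1 ^ 2 = D1 := Real.sq_sqrt hD1nn
  have e2 : Real.sqrt D2 ^ 2 = D2 := Real.sq_sqrt hD2nn
  have eA : Real.sqrt A ^ 2 = A := Real.sq_sqrt hAnn
  have hsq1' : A ^ 2 ≤ 64 * (Real.sqrt D0 * Real.sqrt D1 * Real.sqrt D2) * (A * Real.sqrt A) := by
    refine hsq1.trans_eq ?_
    have hr : ∀ x y z w : ℝ, x * (4*w) * (y * (4*w) * (z * (4*w)))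
        = 64 * (x*y*z) * (w^2 * w) := by intros; ring
    rw [hr, eA]
  have h4 : (A ^ 2) ^ 2 ≤ (64 * (Real.sqrt D0 * Real.sqrt D1 * Real.sqrt D2) *
      (A * Real.sqrt A)) ^ 2 := pow_le_pow_left₀ (sq_nonneg A) hsq1' 2
  have h5 : (64 * (Real.sqrt D0 * Real.sqrt D1 * Real.sqrt D2) * (A * Real.sqrt A)) ^ 2
      = 4096 * (D0 * (D1 * D2)) * (A ^ 2 * A) := by
    have hr : (64 * (Real.sqrt D0 * Real.sqrt D1 * Real.sqrt D2) * (A * Real.sqrt A)) ^ 2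
        = 4096 * (Real.sqrt D0 ^ 2 * (Real.sqrt D1 ^ 2 * Real.sqrt D2 ^ 2)) *
          (A ^ 2 * Real.sqrt A ^ 2) := by ring
    rw [hr, e0, e1, e2, eA]
  rw [h5] at h4
  rcases eq_or_lt_of_le hAnn with hA0 | hA0
  · rw [← hA0]
    exact mul_nonneg (by norm_num) (mul_nonneg hD0nn (mul_nonneg hD1nn hD2nn))
  · have hA3 : 0 < A ^ 2 * A := mul_pos (pow_pos hA0 2) hA0
    have h6 : A * (A ^ 2 * A) ≤ 4096 * (D0 * (D1 * D2)) * (A ^ 2 * A) := by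
      calc A * (A ^ 2 * A) = (A ^ 2) ^ 2 := by ring
        _ ≤ _ := h4
    exact le_of_mul_le_mul_right h6 hA3

lemma pair_part (S : V3 → ℝ) (N : ℤ) (hsupp : ∀ x, x ∉ boxF N → S x = 0)
    (k : ℤ) (hk : k ≤ 3) (w : ℝ) (hw : 0 < w) (v : V3) (hv : ∑ i, v i ^ 2 = k)
    (hv1 : ∀ i, -1 ≤ v i ∧ v i ≤ 1) :
    0 ≤ (∑ᶠ (p : V3 × V3) (_ : ∑ i, (p.1 i - p.2 i) ^ 2 = k), w * (S p.1 - S p.2) ^ 2) ∧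
    w * ∑ x ∈ boxF (N+2), (S (x + v) - S x) ^ 2
      ≤ ∑ᶠ (p : V3 × V3) (_ : ∑ i, (p.1 i - p.2 i) ^ 2 = k), w * (S p.1 - S p.2) ^ 2 := by
  classical
  set P : V3 × V3 → Prop := fun p => ∑ i, (p.1 i - p.2 i) ^ 2 = k with hP
  set h : V3 × V3 → ℝ := fun p => w * (S p.1 - S p.2) ^ 2 with hh
  set t : Finset (V3 × V3) := (boxF (N+3) ×ˢ boxF (N+3)).filter P with ht
  have hrep : (∑ᶠ (p : V3 × V3) (_ : P p), h p) = ∑ p ∈ t, h p := by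
    have hrep0 : (∑ᶠ (p : V3 × V3) (_ : P p), h p) = ∑ᶠ p ∈ {p' : V3 × V3 | P p'}, h p := rfl
    rw [hrep0]
    apply finsum_mem_eq_sum_of_subset
    · rintro ⟨p1, p2⟩ ⟨hp, hsup⟩
      have hPp : P (p1, p2) := hp
      have hPp' : ∑ j, (p1 j - p2 j) ^ 2 = k := hp
      have hcoord : ∀ i, -1 ≤ p1 i - p2 i ∧ p1 i - p2 i ≤ 1 := by
        intro i
        have hle : (p1 i - p2 i) ^ 2 ≤ k := by
          rw [← hPp']
          exact Finset.single_le_sum (f := fun j => (p1 j - p2 j) ^ 2)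
            (fun j _ => sq_nonneg _) (Finset.mem_univ i)
        constructor <;> nlinarith [hle]
      have hne : S p1 ≠ S p2 := by
        intro he
        apply hsup
        simp only [hh, he]
        ring
      have hone : p1 ∈ boxF (N+1) ∨ p2 ∈ boxF (N+1) := by
        rcases ne_or_eq (S p1) 0 with h1 | h1
        · left
          have : p1 ∈ boxF N := by
            by_contra hc; exact h1 (hsupp _ hc)
          rw [mem_boxF] at this ⊢
          intro i; have := this i; omega
        · right
          have h2 : S p2 ≠ 0 := by rw [h1] at hne; exact fun hc => hne hc.symm
          have : p2 ∈ boxF N := by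
            by_contra hc; exact h2 (hsupp _ hc)
          rw [mem_boxF] at this ⊢
          intro i; have := this i; omega
      have hboth : p1 ∈ boxF (N+3) ∧ p2 ∈ boxF (N+3) := by
        rcases hone with h1 | h1 <;> rw [mem_boxF] at h1 <;>
          refine ⟨mem_boxF.2 fun i => ?_, mem_boxF.2 fun i => ?_⟩ <;>
          (have := h1 i; have := hcoord i; omega)
      rw [ht]
      simp only [Finset.coe_filter, Set.mem_setOf_eq, Finset.mem_product]
      exact ⟨⟨hboth.1, hboth.2⟩, hPp⟩
    · intro p hp
      rw [ht] at hp
      simp only [Finset.mem_coe, Finset.mem_filter] at hp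
      exact hp.2
  have hnn : ∀ p ∈ t, 0 ≤ h p := fun p _ => mul_nonneg hw.le (sq_nonneg _)
  constructor
  · rw [hrep]; exact Finset.sum_nonneg hnn
  · rw [hrep]
    have himg : ∑ x ∈ boxF (N+2), w * (S (x + v) - S x) ^ 2
        = ∑ p ∈ (boxF (N+2)).image (fun x => (x + v, x)), h p := by
      rw [Finset.sum_image]
      intro x _ y _ hxy
      exact (Prod.ext_iff.1 hxy).2
    rw [Finset.mul_sum, himg]
    apply Finset.sum_le_sum_of_subset_of_nonneg
    · intro p hp
      obtain ⟨x, hx, rfl⟩ := Finset.mem_image.1 hp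
      rw [ht, Finset.mem_filter, Finset.mem_product]
      rw [mem_boxF] at hx
      refine ⟨⟨?_, ?_⟩, ?_⟩
      · rw [mem_boxF]; intro i
        have := hx i; have := hv1 i
        dsimp only
        simp only [Pi.add_apply]
        omega
      · rw [mem_boxF]; intro i; have := hx i; dsimp only; omega
      · show ∑ i, ((x + v) i - x i) ^ 2 = k
        rw [← hv]
        refine Finset.sum_congr rfl fun i _ => ?_
        simp only [Pi.add_apply]
        ring
    · intro p hp _
      exact mul_nonneg hw.le (sq_nonneg _)

lemma axis_bound (S : V3 → ℝ) (N : ℤ) (i : Fin 3) :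
    ∑ x ∈ boxF (N+1), (S (x + Pi.single i 1) - S x) ^ 2
      ≤ 2 * (∑ y ∈ boxF (N+2), (S (y + (fun _ => 1)) - S y) ^ 2)
        + 2 * (∑ y ∈ boxF (N+2), (S (y + (fun j => if j = i then 0 else 1)) - S y) ^ 2) := by
  classical
  set v : V3 := fun j => if j = i then 0 else 1 with hv
  set w1 : V3 := fun _ => 1 with hw1
  have key : ∀ x : V3, (S (x + Pi.single i 1) - S x) ^ 2
      ≤ 2 * (S ((x - v) + w1) - S (x - v)) ^ 2 + 2 * (S ((x - v) + v) - S (x - v)) ^ 2 := by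
    intro x
    have e1 : (x - v) + w1 = x + Pi.single i 1 := by
      funext j
      simp only [Pi.add_apply, Pi.sub_apply, hv, hw1, Pi.single_apply]
      by_cases hj : j = i <;> simp [hj] <;> ring
    have e2 : (x - v) + v = x := by funext j; simp
    rw [e1, e2]
    nlinarith [sq_nonneg ((S (x + Pi.single i 1) - S (x - v)) + (S x - S (x - v)))]
  calc ∑ x ∈ boxF (N+1), (S (x + Pi.single i 1) - S x) ^ 2
      ≤ ∑ x ∈ boxF (N+1), (2 * (S ((x - v) + w1) - S (x - v)) ^ 2
          + 2 * (S ((x - v) + v) - S (x - v)) ^ 2) := Finset.sum_le_sum fun x _ => key x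
    _ = 2 * (∑ x ∈ boxF (N+1), (S ((x - v) + w1) - S (x - v)) ^ 2)
        + 2 * (∑ x ∈ boxF (N+1), (S ((x - v) + v) - S (x - v)) ^ 2) := by
        rw [Finset.sum_add_distrib, Finset.mul_sum, Finset.mul_sum]
    _ ≤ _ := by
        have hshift : ∀ φ : V3 → ℝ, (∀ y, 0 ≤ φ y) →
            ∑ x ∈ boxF (N+1), φ (x - v) ≤ ∑ y ∈ boxF (N+2), φ y := by
          intro φ hφ
          have himg : ∑ x ∈ boxF (N+1), φ (x - v)
              = ∑ y ∈ (boxF (N+1)).image (fun x => x - v), φ y := by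
            rw [Finset.sum_image]
            intro x _ y _ hxy
            have := congrArg (· + v) hxy
            simpa using this
          rw [himg]
          apply Finset.sum_le_sum_of_subset_of_nonneg
          · intro y hy
            obtain ⟨x, hx, rfl⟩ := Finset.mem_image.1 hy
            rw [mem_boxF] at hx ⊢
            intro j
            have h1 := hx j
            simp only [Pi.sub_apply, hv]
            by_cases hj : j = i
            · subst hj; rw [if_pos rfl]; omega
            · rw [if_neg hj]; omega
          · intro y _ _; exact hφ y
        have h1 := hshift (fun y => (S (y + w1) - S y) ^ 2) (fun y => sq_nonneg _)
        have h2 := hshift (fun y => (S (y + v) - S y) ^ 2) (fun y => sq_nonneg _)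
        have hc1 : (0:ℝ) ≤ 2 := by norm_num
        exact add_le_add (mul_le_mul_of_nonneg_left h1 hc1)
          (mul_le_mul_of_nonneg_left h2 hc1)

/-- The lattice energy `T(S)` on `ℤ³`, summing over (ordered) pairs at distance `√2`
with weight `1/12` and pairs at distance `√3` with weight `1/24`. -/
noncomputable def latticeT (S : (Fin 3 → ℤ) → ℝ) : ℝ :=
  (∑ᶠ (p : (Fin 3 → ℤ) × (Fin 3 → ℤ)) (_ : ∑ i, (p.1 i - p.2 i) ^ 2 = 2),
      (1 / 12 : ℝ) * (S p.1 - S p.2) ^ 2)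
    + ∑ᶠ (p : (Fin 3 → ℤ) × (Fin 3 → ℤ)) (_ : ∑ i, (p.1 i - p.2 i) ^ 2 = 3),
        (1 / 24 : ℝ) * (S p.1 - S p.2) ^ 2

theorem discrete_sobolev_inequality :
    ∃ C > (0 : ℝ), ∀ S : (Fin 3 → ℤ) → ℝ, (Function.support S).Finite →
      (∑ᶠ σ : Fin 3 → ℤ, |S σ| ^ 6) ^ ((1 : ℝ) / 3) ≤ C * latticeT S := by
  refine ⟨1152, by norm_num, fun S hS => ?_⟩
  classical
  obtain ⟨N, hsupp⟩ : ∃ N : ℤ, ∀ x : V3, x ∉ boxF N → S x = 0 := by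
    set B := ∑ y ∈ hS.toFinset, ∑ j, |y j| with hB
    refine ⟨1 + B, fun x hx => ?_⟩
    by_contra hne
    apply hx
    have hxs : x ∈ hS.toFinset := by
      rwa [Set.Finite.mem_toFinset, Function.mem_support]
    rw [mem_boxF]
    intro i
    have h1 : |x i| ≤ ∑ j, |x j| :=
      Finset.single_le_sum (f := fun j => |x j|) (fun j _ => abs_nonneg _) (Finset.mem_univ i)
    have h2 : ∑ j, |x j| ≤ B :=
      Finset.single_le_sum (f := fun y => ∑ j, |y j|)
        (fun y _ => Finset.sum_nonneg fun j _ => abs_nonneg _) hxs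
    have h3 := abs_le.mp (h1.trans h2)
    constructor <;> linarith [h3.1, h3.2]
  set L := latticeT S with hL
  -- the two parts of the energy
  have h3pair := pair_part S N hsupp 3 (by norm_num) (1/24 : ℝ) (by norm_num)
    (fun _ => 1) (by simp) (fun i => by norm_num)
  have h2pair : ∀ i : Fin 3,
      0 ≤ (∑ᶠ (p : V3 × V3) (_ : ∑ j, (p.1 j - p.2 j) ^ 2 = 2),
          (1/12 : ℝ) * (S p.1 - S p.2) ^ 2) ∧
      (1/12 : ℝ) * ∑ x ∈ boxF (N+2), (S (x + (fun j => if j = i then 0 else 1)) - S x) ^ 2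
        ≤ ∑ᶠ (p : V3 × V3) (_ : ∑ j, (p.1 j - p.2 j) ^ 2 = 2),
            (1/12 : ℝ) * (S p.1 - S p.2) ^ 2 := by
    intro i
    refine pair_part S N hsupp 2 (by norm_num) (1/12 : ℝ) (by norm_num)
      (fun j => if j = i then 0 else 1) ?_ (fun j => by split <;> norm_num)
    fin_cases i <;> decide
  set T2 := ∑ᶠ (p : V3 × V3) (_ : ∑ j, (p.1 j - p.2 j) ^ 2 = 2),
      (1/12 : ℝ) * (S p.1 - S p.2) ^ 2 with hT2def
  set T3 := ∑ᶠ (p : V3 × V3) (_ : ∑ j, (p.1 j - p.2 j) ^ 2 = 3),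
      (1/24 : ℝ) * (S p.1 - S p.2) ^ 2 with hT3def
  have hlat : L = T2 + T3 := rfl
  have hT2nn : 0 ≤ T2 := (h2pair 0).1
  have hT3nn : 0 ≤ T3 := h3pair.1
  have hLnn : 0 ≤ L := by rw [hlat]; linarith
  -- bounds on per-vector sums
  have hw1 : ∑ x ∈ boxF (N+2), (S (x + (fun _ => 1)) - S x) ^ 2 ≤ 24 * T3 := by
    have := h3pair.2
    linarith
  have hvi : ∀ i : Fin 3,
      ∑ x ∈ boxF (N+2), (S (x + (fun j => if j = i then 0 else 1)) - S x) ^ 2 ≤ 12 * T2 := by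
    intro i
    have := (h2pair i).2
    linarith
  -- axis derivative bounds
  have hD : ∀ i : Fin 3,
      ∑ x ∈ boxF (N+1), (S (x + Pi.single i 1) - S x) ^ 2 ≤ 48 * L := by
    intro i
    have hab := axis_bound S N i
    have h1 := hw1
    have h2 := hvi i
    rw [hlat]
    linarith
  have hDnn : ∀ i : Fin 3,
      0 ≤ ∑ x ∈ boxF (N+1), (S (x + Pi.single i 1) - S x) ^ 2 :=
    fun i => Finset.sum_nonneg fun x _ => sq_nonneg _
  -- core inequality
  have hcore := core S N hsupp
  set A := ∑ x ∈ boxF (N+1), S x ^ 6 with hAdef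
  have hAnn : 0 ≤ A := by
    rw [hAdef]; exact Finset.sum_nonneg fun x _ => by positivity
  have h48 : (0:ℝ) ≤ 48 * L := by linarith
  have hprod : (∑ x ∈ boxF (N+1), (S (x + Pi.single 0 1) - S x) ^ 2) *
      ((∑ x ∈ boxF (N+1), (S (x + Pi.single 1 1) - S x) ^ 2) *
       (∑ x ∈ boxF (N+1), (S (x + Pi.single 2 1) - S x) ^ 2))
      ≤ (48 * L) * ((48 * L) * (48 * L)) := by
    apply mul_le_mul (hD 0) _ (mul_nonneg (hDnn 1) (hDnn 2)) h48
    exact mul_le_mul (hD 1) (hD 2) (hDnn 2) h48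
  have hA3 : A ≤ (1152 * L) ^ 3 := by
    calc A ≤ 4096 * ((∑ x ∈ boxF (N+1), (S (x + Pi.single 0 1) - S x) ^ 2) *
        ((∑ x ∈ boxF (N+1), (S (x + Pi.single 1 1) - S x) ^ 2) *
         (∑ x ∈ boxF (N+1), (S (x + Pi.single 2 1) - S x) ^ 2))) := hcore
      _ ≤ 4096 * ((48 * L) * ((48 * L) * (48 * L))) := by
          exact mul_le_mul_of_nonneg_left hprod (by norm_num)
      _ = 452984832 * L ^ 3 := by ring
      _ ≤ 1528823808 * L ^ 3 := by nlinarith [pow_nonneg hLnn 3]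
      _ = (1152 * L) ^ 3 := by ring
  -- convert the finsum
  have hLHS : ∑ᶠ σ : Fin 3 → ℤ, |S σ| ^ 6 = A := by
    have h1 : (fun σ : V3 => |S σ| ^ 6) = fun σ => S σ ^ 6 := funext fun σ => abs_pow_six _
    rw [h1, hAdef]
    apply finsum_eq_finset_sum_of_support_subset
    intro x hx
    have hxne : S x ≠ 0 := by
      intro hc
      apply hx
      simp [Function.mem_support, hc]
    have : x ∈ boxF N := by
      by_contra hc; exact hxne (hsupp x hc)
    rw [mem_boxF] at this
    rw [Finset.mem_coe, mem_boxF]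
    intro i; have := this i; omega
  rw [hLHS]
  have h1152 : (0:ℝ) ≤ 1152 * L := by linarith
  calc A ^ ((1:ℝ)/3) ≤ ((1152 * L) ^ 3) ^ ((1:ℝ)/3) :=
        Real.rpow_le_rpow hAnn hA3 (by norm_num)
    _ = 1152 * L := by
        rw [← Real.rpow_natCast (1152 * L) 3, ← Real.rpow_mul h1152,
          show ((3:ℕ):ℝ) * ((1:ℝ)/3) = 1 by norm_num, Real.rpow_one]
end

section
/- Let S : ℤ³ → ℝ be finitely supported and let φ : ℝ³ → ℝ be its piecewise-trilinear interpolation: on each unit cube centered at μ ∈ (1/2,1/2,1/2)+ℤ³, φ(x) = Σ_{τ∈ℤ³, |τ|=√3} λ_τ(x−μ) S(μ+τ/2) with λ_τ(x) = (1/2+τ₁x₁)(1/2+τ₂x₂)(1/2+τ₃x₃). Then ∫_{ℝ³} |∇φ|² = T(S). -/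
open MeasureTheory

/-- The piecewise-trilinear interpolation of a map `S : ℤ³ → ℝ`: on each unit cube
it is the trilinear interpolation of the values of `S` at the eight corners, with the
trilinear basis weights. -/
noncomputable def trilinearInterp (S : (Fin 3 → ℤ) → ℝ)
    (x : EuclideanSpace ℝ (Fin 3)) : ℝ :=
  ∑ ε : Fin 3 → Bool,
    (∏ i, if ε i then x i - (⌊x i⌋ : ℝ) else 1 - (x i - (⌊x i⌋ : ℝ))) *
      S (fun i => ⌊x i⌋ + if ε i then 1 else 0)

namespace TrilinearProofAux

open Set Finset

noncomputable section

abbrev E3 := EuclideanSpace ℝ (Fin 3)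

def wB (b : Bool) (t : ℝ) : ℝ := if b then t else 1 - t
def sB (b : Bool) : ℝ := if b then 1 else -1
def JB (a b : Bool) : ℝ := if a = b then 1/3 else 1/6

def corner (μ : Fin 3 → ℤ) (ε : Fin 3 → Bool) : Fin 3 → ℤ :=
  fun i => μ i + if ε i then 1 else 0

def ham (q : (Fin 3 → Bool) × (Fin 3 → Bool)) : ℕ :=
  (Finset.univ.filter (fun i => q.1 i ≠ q.2 i)).card

def Wt (q : (Fin 3 → Bool) × (Fin 3 → Bool)) : ℝ := if 2 ≤ ham q then 1/24 else 0

def δfun (q : (Fin 3 → Bool) × (Fin 3 → Bool)) : Fin 3 → ℤ :=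
  fun i => (if q.1 i then 1 else 0) - (if q.2 i then 1 else 0)

def localE (c : (Fin 3 → Bool) → ℝ) : ℝ :=
  ∑ q : (Fin 3 → Bool) × (Fin 3 → Bool), Wt q * (c q.1 - c q.2)^2

def cubeE (c : (Fin 3 → Bool) → ℝ) : ℝ :=
  ∑ k : Fin 3, ∑ q : (Fin 3 → Bool) × (Fin 3 → Bool),
    (c q.1 * sB (q.1 k)) * (c q.2 * sB (q.2 k)) *
      ∏ j, (if j = k then 1 else JB (q.1 j) (q.2 j))

lemma sum_pibool (f : (Fin 3 → Bool) → ℝ) :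
    ∑ ε : Fin 3 → Bool, f ε =
      f ![false,false,false] + f ![true,false,false] + f ![false,true,false] + f ![true,true,false]
      + f ![false,false,true] + f ![true,false,true] + f ![false,true,true] + f ![true,true,true] := by
  rw [show (Finset.univ : Finset (Fin 3 → Bool)) =
    {![false,false,false], ![true,false,false], ![false,true,false], ![true,true,false],
     ![false,false,true], ![true,false,true], ![false,true,true], ![true,true,true]} from by decide]
  simp (config := { decide := true }) only [Finset.sum_insert, Finset.mem_insert,
    Finset.mem_singleton, Finset.sum_singleton]
  ring

set_option maxHeartbeats 3000000 in
/-- The key per-cube algebraic identity. -/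
lemma cubeE_eq_localE (c : (Fin 3 → Bool) → ℝ) : cubeE c = localE c := by
  simp only [cubeE, localE, Fintype.sum_prod_type, Fin.sum_univ_three, Fin.prod_univ_three,
    sum_pibool]
  simp (config := { decide := true }) only [Matrix.cons_val_zero, Matrix.cons_val_one,
    Matrix.head_cons, Matrix.cons_val_two, Matrix.tail_cons, wB, sB, JB, Wt, ham,
    if_true, if_false]
  norm_num
  ring

/-! ### Calculus on a cube -/

def locP (S : (Fin 3 → ℤ) → ℝ) (μ : Fin 3 → ℤ) (x : E3) : ℝ :=
  ∑ ε : Fin 3 → Bool, (∏ i, wB (ε i) (x i - μ i)) * S (corner μ ε)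

def Lmap (S : (Fin 3 → ℤ) → ℝ) (μ : Fin 3 → ℤ) (x : E3) : E3 →L[ℝ] ℝ :=
  ∑ ε : Fin 3 → Bool, S (corner μ ε) •
    ∑ i : Fin 3, (∏ j ∈ Finset.univ.erase i, wB (ε j) (x j - μ j)) •
      (sB (ε i) • EuclideanSpace.proj (𝕜 := ℝ) i)

lemma hasFDerivAt_coord (i : Fin 3) (x : E3) :
    HasFDerivAt (fun x : E3 => x i) (EuclideanSpace.proj (𝕜 := ℝ) i) x :=
  (EuclideanSpace.proj (𝕜 := ℝ) i).hasFDerivAt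

lemma hasFDerivAt_factor (b : Bool) (c : ℝ) (i : Fin 3) (x : E3) :
    HasFDerivAt (fun x : E3 => wB b (x i - c))
      (sB b • EuclideanSpace.proj (𝕜 := ℝ) i) x := by
  cases b with
  | true =>
    simpa [wB, sB] using (hasFDerivAt_coord i x).sub_const c
  | false =>
    simpa [wB, sB, neg_smul, one_smul] using ((hasFDerivAt_coord i x).sub_const c).const_sub 1

lemma hasFDerivAt_locP (S : (Fin 3 → ℤ) → ℝ) (μ : Fin 3 → ℤ) (x : E3) :
    HasFDerivAt (locP S μ) (Lmap S μ x) x := by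
  unfold locP Lmap
  apply HasFDerivAt.fun_sum
  intro ε _
  have h : HasFDerivAt (fun x : E3 => ∏ i, wB (ε i) (x i - μ i))
      (∑ i : Fin 3, (∏ j ∈ Finset.univ.erase i, wB (ε j) (x j - μ j)) •
        (sB (ε i) • EuclideanSpace.proj (𝕜 := ℝ) i)) x := by
    exact HasFDerivAt.finset_prod (fun i _ => hasFDerivAt_factor (ε i) (μ i) i x)
  simpa [smul_smul, mul_comm] using h.mul_const (S (corner μ ε))

/-- generic partial-derivative-shaped function on the pi space -/
def pD (c : (Fin 3 → Bool) → ℝ) (a : Fin 3 → ℝ) (k : Fin 3) (y : Fin 3 → ℝ) : ℝ :=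
  ∑ ε : Fin 3 → Bool, c ε * sB (ε k) * ∏ j ∈ Finset.univ.erase k, wB (ε j) (y j - a j)

lemma Lmap_apply_single (S : (Fin 3 → ℤ) → ℝ) (μ : Fin 3 → ℤ) (x : E3) (k : Fin 3) :
    Lmap S μ x (EuclideanSpace.single k 1)
      = pD (fun ε => S (corner μ ε)) (fun i => (μ i : ℝ)) k (fun i => x i) := by
  unfold Lmap pD
  rw [ContinuousLinearMap.sum_apply]
  refine Finset.sum_congr rfl fun ε _ => ?_
  rw [ContinuousLinearMap.smul_apply, ContinuousLinearMap.sum_apply]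
  have : ∀ i : Fin 3, ((∏ j ∈ Finset.univ.erase i, wB (ε j) (x j - μ j)) •
      (sB (ε i) • EuclideanSpace.proj (𝕜 := ℝ) i)) (EuclideanSpace.single k 1)
      = (∏ j ∈ Finset.univ.erase i, wB (ε j) (x j - μ j)) * sB (ε i) *
        (if k = i then 1 else 0) := by
    intro i
    rw [ContinuousLinearMap.smul_apply, ContinuousLinearMap.smul_apply]
    simp [EuclideanSpace.single_apply, mul_assoc, eq_comm]
  rw [Finset.sum_congr rfl fun i _ => this i]
  simp [Finset.sum_ite_eq', mul_comm, mul_assoc, mul_left_comm]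

lemma norm_sq_eq_sum (L : E3 →L[ℝ] ℝ) :
    ‖L‖^2 = ∑ i : Fin 3, (L (EuclideanSpace.single i 1))^2 := by
  set v := (InnerProductSpace.toDual ℝ E3).symm L with hv
  have hL : ∀ y, L y = (@inner ℝ _ _ v y) := by
    intro y
    rw [hv]
    exact (InnerProductSpace.toDual_symm_apply (𝕜 := ℝ) (E := E3)).symm
  have hnorm : ‖L‖ = ‖v‖ := by
    rw [hv]; exact ((InnerProductSpace.toDual ℝ E3).symm.norm_map L).symm
  rw [hnorm]
  have h2 : ∀ i, L (EuclideanSpace.single i 1) = v i := by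
    intro i
    rw [hL]
    simp [EuclideanSpace.inner_single_right]
  simp only [h2]
  rw [EuclideanSpace.norm_eq]
  rw [Real.sq_sqrt (by positivity)]
  refine Finset.sum_congr rfl fun i _ => ?_
  rw [Real.norm_eq_abs, sq_abs]

/-! ### The open cubes -/

def Ucube (μ : Fin 3 → ℤ) : Set E3 := {x | ∀ i, x i ∈ Set.Ioo (μ i : ℝ) (μ i + 1)}

lemma isOpen_Ucube (μ : Fin 3 → ℤ) : IsOpen (Ucube μ) := by
  have : Ucube μ = ⋂ i, (fun x : E3 => x i) ⁻¹' (Set.Ioo (μ i : ℝ) (μ i + 1)) := by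
    ext x; simp [Ucube]
  rw [this]
  exact isOpen_iInter_of_finite fun i =>
    (isOpen_Ioo).preimage (EuclideanSpace.proj (𝕜 := ℝ) i).continuous

lemma floor_eq_of_mem (μ : Fin 3 → ℤ) (x : E3) (hx : x ∈ Ucube μ) (i : Fin 3) :
    ⌊x i⌋ = μ i := by
  have h := hx i
  rw [Int.floor_eq_iff]
  exact ⟨le_of_lt h.1, by exact_mod_cast h.2⟩

lemma interp_eqOn (S : (Fin 3 → ℤ) → ℝ) (μ : Fin 3 → ℤ) :
    Set.EqOn (trilinearInterp S) (locP S μ) (Ucube μ) := by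
  intro x hx
  have hf : ∀ i, ⌊x i⌋ = μ i := floor_eq_of_mem μ x hx
  unfold trilinearInterp locP corner wB
  simp only [hf]

lemma fderiv_on_cube (S : (Fin 3 → ℤ) → ℝ) (μ : Fin 3 → ℤ) (x : E3) (hx : x ∈ Ucube μ) :
    fderiv ℝ (trilinearInterp S) x = Lmap S μ x := by
  have hev : trilinearInterp S =ᶠ[nhds x] locP S μ :=
    Filter.eventuallyEq_of_mem ((isOpen_Ucube μ).mem_nhds hx) (interp_eqOn S μ)
  rw [hev.fderiv_eq]
  exact (hasFDerivAt_locP S μ x).fderiv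

/-! ### 1-d integrals -/

lemma continuous_wB (b : Bool) : Continuous (wB b) := by
  cases b with
  | true =>
    have h : wB true = fun t : ℝ => t := by funext t; simp [wB]
    rw [h]; fun_prop
  | false =>
    have h : wB false = fun t : ℝ => 1 - t := by funext t; simp [wB]
    rw [h]; fun_prop

lemma intInt (f : ℝ → ℝ) (hf : Continuous f) (a b : ℝ) : IntervalIntegrable f volume a b :=
  hf.intervalIntegrable a b

lemma integral_wB_mul (b b' : Bool) : ∫ t in (0:ℝ)..1, wB b t * wB b' t = JB b b' := by
  cases b <;> cases b' <;> simp only [wB, JB, if_true, if_false, Bool.true_eq_false,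
    Bool.false_eq_true]
  · rw [show (fun t : ℝ => (1-t)*(1-t))
        = fun t : ℝ => 1 - 2*t + t^2 from by funext t; ring]
    rw [intervalIntegral.integral_add (intInt _ (by fun_prop) _ _) (intInt _ (by fun_prop) _ _),
      intervalIntegral.integral_sub (intInt _ (by fun_prop) _ _) (intInt _ (by fun_prop) _ _),
      intervalIntegral.integral_const_mul]
    simp [integral_pow, integral_id]
    norm_num
  · rw [show (fun t : ℝ => (1-t)*t)
        = fun t : ℝ => t - t^2 from by funext t; ring]
    rw [intervalIntegral.integral_sub (intInt _ (by fun_prop) _ _) (intInt _ (by fun_prop) _ _)]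
    simp [integral_pow, integral_id]
    norm_num
  · rw [show (fun t : ℝ => t*(1-t))
        = fun t : ℝ => t - t^2 from by funext t; ring]
    rw [intervalIntegral.integral_sub (intInt _ (by fun_prop) _ _) (intInt _ (by fun_prop) _ _)]
    simp [integral_pow, integral_id]
    norm_num
  · rw [show (fun t : ℝ => t*t)
        = fun t : ℝ => t^2 from by funext t; ring]
    rw [integral_pow]
    norm_num

lemma integral_Ioo_wB (α : ℝ) (b b' : Bool) :
    ∫ t in Set.Ioo α (α+1), wB b (t - α) * wB b' (t - α) = JB b b' := by
  rw [← MeasureTheory.integral_Ioc_eq_integral_Ioo,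
    ← intervalIntegral.integral_of_le (by linarith)]
  have := intervalIntegral.integral_comp_sub_right (f := fun t => wB b t * wB b' t)
    (a := α) (b := α + 1) α
  rw [this]
  norm_num [integral_wB_mul]

lemma integral_Ioo_one (α : ℝ) : ∫ (_ : ℝ) in Set.Ioo α (α+1), (1:ℝ) = 1 := by
  simp [Real.volume_Ioo]

/-! ### The cube integral -/

def Cpi (a : Fin 3 → ℝ) : Set (Fin 3 → ℝ) := Set.univ.pi fun i => Set.Ioo (a i) (a i + 1)

lemma measurableSet_Cpi (a : Fin 3 → ℝ) : MeasurableSet (Cpi a) :=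
  MeasurableSet.univ_pi fun _ => measurableSet_Ioo

lemma integrable_ind_cont (a : Fin 3 → ℝ) (f : (Fin 3 → ℝ) → ℝ) (hf : Continuous f) :
    Integrable (Set.indicator (Cpi a) f) := by
  rw [integrable_indicator_iff (measurableSet_Cpi a)]
  have hK : IsCompact (Set.univ.pi fun i => Set.Icc (a i) (a i + 1)) :=
    isCompact_univ_pi fun i => isCompact_Icc
  exact (hf.continuousOn.integrableOn_compact hK).mono_set
    (Set.pi_mono fun i _ => Set.Ioo_subset_Icc_self)

lemma indicator_pi_prod (s : ∀ _ : Fin 3, Set ℝ) (f : Fin 3 → ℝ → ℝ) (y : Fin 3 → ℝ) :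
    Set.indicator (Set.univ.pi s) (fun y => ∏ j, f j (y j)) y
      = ∏ j, Set.indicator (s j) (f j) (y j) := by
  by_cases h : y ∈ Set.univ.pi s
  · rw [Set.indicator_of_mem h]
    exact Finset.prod_congr rfl fun j _ =>
      (Set.indicator_of_mem (h j (Set.mem_univ j)) (f j)).symm
  · rw [Set.indicator_of_notMem h]
    rw [Set.mem_pi] at h
    push_neg at h
    obtain ⟨j0, _, hj0⟩ := h
    exact (Finset.prod_eq_zero (Finset.mem_univ j0)
      (Set.indicator_of_notMem hj0 (f j0))).symm

lemma integral_sep (a : Fin 3 → ℝ) (k : Fin 3) (ε ε' : Fin 3 → Bool) :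
    ∫ y : Fin 3 → ℝ, Set.indicator (Cpi a)
        (fun y => ∏ j, (if j = k then 1 else wB (ε j) (y j - a j) * wB (ε' j) (y j - a j))) y
      = ∏ j, (if j = k then 1 else JB (ε j) (ε' j)) := by
  have h1 : ∀ y : Fin 3 → ℝ, Set.indicator (Cpi a)
      (fun y => ∏ j, (if j = k then 1 else wB (ε j) (y j - a j) * wB (ε' j) (y j - a j))) y
      = ∏ j, Set.indicator (Set.Ioo (a j) (a j + 1))
          (fun t => if j = k then 1 else wB (ε j) (t - a j) * wB (ε' j) (t - a j)) (y j) := by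
    intro y
    exact indicator_pi_prod _
      (fun j t => if j = k then 1 else wB (ε j) (t - a j) * wB (ε' j) (t - a j)) y
  rw [integral_congr_ae (Filter.Eventually.of_forall h1)]
  rw [MeasureTheory.integral_fintype_prod_volume_eq_prod
    (f := fun j t => Set.indicator (Set.Ioo (a j) (a j + 1))
      (fun t => if j = k then 1 else wB (ε j) (t - a j) * wB (ε' j) (t - a j)) t)]
  refine Finset.prod_congr rfl fun j _ => ?_
  rw [integral_indicator measurableSet_Ioo]
  by_cases hj : j = k
  · simp only [hj, if_pos rfl]
    exact integral_Ioo_one (a k)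
  · simp only [if_neg hj]
    exact integral_Ioo_wB (a j) (ε j) (ε' j)

lemma continuous_pD_term (a : Fin 3 → ℝ) (k : Fin 3) (ε ε' : Fin 3 → Bool) :
    Continuous (fun y : Fin 3 → ℝ =>
      ∏ j, (if j = k then (1:ℝ) else wB (ε j) (y j - a j) * wB (ε' j) (y j - a j))) := by
  apply continuous_finset_prod
  intro j _
  by_cases hj : j = k
  · simp only [hj, eq_self_iff_true, if_true]; exact continuous_const
  · simp only [if_neg hj]
    have h1 : Continuous fun y : Fin 3 → ℝ => wB (ε j) (y j - a j) :=
      (continuous_wB (ε j)).comp ((continuous_apply j).sub continuous_const)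
    have h2 : Continuous fun y : Fin 3 → ℝ => wB (ε' j) (y j - a j) :=
      (continuous_wB (ε' j)).comp ((continuous_apply j).sub continuous_const)
    exact h1.mul h2

/-- The main cube integral computation. -/
lemma cube_integral (c : (Fin 3 → Bool) → ℝ) (a : Fin 3 → ℝ) :
    ∫ y : Fin 3 → ℝ, Set.indicator (Cpi a) (fun y => ∑ k, (pD c a k y)^2) y = cubeE c := by
  have hsq : ∀ k (y : Fin 3 → ℝ), (pD c a k y)^2
      = ∑ q : (Fin 3 → Bool) × (Fin 3 → Bool),
          (c q.1 * sB (q.1 k)) * (c q.2 * sB (q.2 k)) *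
            ∏ j, (if j = k then 1 else wB (q.1 j) (y j - a j) * wB (q.2 j) (y j - a j)) := by
    intro k y
    rw [sq, pD, Finset.sum_mul_sum, ← Fintype.sum_prod_type']
    refine Fintype.sum_congr _ _ fun q => ?_
    have hprod : (∏ j ∈ Finset.univ.erase k, wB (q.1 j) (y j - a j)) *
        (∏ j ∈ Finset.univ.erase k, wB (q.2 j) (y j - a j))
        = ∏ j, (if j = k then 1 else wB (q.1 j) (y j - a j) * wB (q.2 j) (y j - a j)) := by
      rw [← Finset.prod_mul_distrib]
      symm
      rw [← Finset.prod_erase (f := fun j => if j = k then (1:ℝ)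
        else wB (q.1 j) (y j - a j) * wB (q.2 j) (y j - a j)) Finset.univ (if_pos rfl)]
      exact Finset.prod_congr rfl fun j hj => if_neg (Finset.ne_of_mem_erase hj)
    rw [← hprod]
    ring
  have hind : Set.indicator (Cpi a) (fun y => ∑ k, (pD c a k y)^2)
      = fun y => ∑ k : Fin 3, ∑ q : (Fin 3 → Bool) × (Fin 3 → Bool),
          (c q.1 * sB (q.1 k)) * (c q.2 * sB (q.2 k)) *
            Set.indicator (Cpi a)
              (fun y => ∏ j,
                (if j = k then 1 else wB (q.1 j) (y j - a j) * wB (q.2 j) (y j - a j))) y := by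
    funext y
    by_cases h : y ∈ Cpi a
    · rw [Set.indicator_of_mem h]
      refine Finset.sum_congr rfl fun k _ => ?_
      rw [hsq k y]
      refine Finset.sum_congr rfl fun q _ => ?_
      rw [Set.indicator_of_mem h]
    · rw [Set.indicator_of_notMem h]
      symm
      refine Finset.sum_eq_zero fun k _ => Finset.sum_eq_zero fun q _ => ?_
      rw [Set.indicator_of_notMem h, mul_zero]
  rw [hind]
  rw [MeasureTheory.integral_finset_sum _ (fun k _ => ?_)]
  · refine Finset.sum_congr rfl fun k _ => ?_
    rw [MeasureTheory.integral_finset_sum _ (fun q _ => ?_)]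
    · refine Finset.sum_congr rfl fun q _ => ?_
      rw [MeasureTheory.integral_const_mul]
      rw [integral_sep a k q.1 q.2]
    · exact ((integrable_ind_cont a _ (continuous_pD_term a k q.1 q.2)).const_mul _)
  · apply MeasureTheory.integrable_finset_sum
    intro q _
    exact ((integrable_ind_cont a _ (continuous_pD_term a k q.1 q.2)).const_mul _)

/-- thickening of a finite set of lattice points by `1` in sup norm -/
def thick (B : Finset (Fin 3 → ℤ)) : Finset (Fin 3 → ℤ) :=
  B.biUnion (fun σ => Finset.image (fun v : Fin 3 → Fin 3 => fun i => σ i + (v i : ℤ) - 1)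
    Finset.univ)

lemma mem_thick {B : Finset (Fin 3 → ℤ)} {σ τ : Fin 3 → ℤ} (hσ : σ ∈ B)
    (h : ∀ i, |τ i - σ i| ≤ 1) : τ ∈ thick B := by
  rw [thick, Finset.mem_biUnion]
  refine ⟨σ, hσ, ?_⟩
  rw [Finset.mem_image]
  refine ⟨fun i => ⟨(τ i - σ i + 1).toNat, ?_⟩, Finset.mem_univ _, ?_⟩
  · have := h i; rw [abs_le] at this; omega
  · funext i
    beta_reduce
    have := h i; rw [abs_le] at this
    have h2 : ((⟨(τ i - σ i + 1).toNat, by omega⟩ : Fin 3) : ℤ) = τ i - σ i + 1 := by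
      simp only [Fin.val_mk]; omega
    omega

lemma subset_thick (B : Finset (Fin 3 → ℤ)) : B ⊆ thick B := by
  intro σ hσ
  exact mem_thick hσ (fun i => by simp)

section WithS
variable (S : (Fin 3 → ℤ) → ℝ) (hS : (Function.support S).Finite)

def Nset : Finset (Fin 3 → ℤ) := thick hS.toFinset
def NN : Finset (Fin 3 → ℤ) := thick (Nset S hS)

lemma mem_Nset_of_ne {σ : Fin 3 → ℤ} (h : S σ ≠ 0) : σ ∈ Nset S hS :=
  subset_thick _ (by simp [Function.mem_support, h])

def Tdelta (δ : Fin 3 → ℤ) : ℝ :=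
  ∑ ν ∈ NN S hS, (S (fun i => ν i + δ i) - S ν)^2

/-- any big enough finset gives `Tdelta` -/
lemma sum_eq_Tdelta (δ : Fin 3 → ℤ) (hδ : ∀ i, |δ i| ≤ 1) (V : Finset (Fin 3 → ℤ))
    (hV : ∀ ν, (S (fun i => ν i + δ i) - S ν)^2 ≠ 0 → ν ∈ V) :
    ∑ ν ∈ V, (S (fun i => ν i + δ i) - S ν)^2 = Tdelta S hS δ := by
  have hNN : ∀ ν, (S (fun i => ν i + δ i) - S ν)^2 ≠ 0 → ν ∈ NN S hS := by
    intro ν hν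
    have : S (fun i => ν i + δ i) ≠ 0 ∨ S ν ≠ 0 := by
      by_contra h; push_neg at h; simp [h.1, h.2] at hν
    rcases this with h | h
    · refine mem_thick (mem_Nset_of_ne S hS h) (fun i => ?_)
      simpa using (by simpa [abs_sub_comm] using (by simpa using hδ i) : |ν i - (ν i + δ i)| ≤ 1)
    · exact subset_thick _ (mem_Nset_of_ne S hS h)
  have h1 : ∑ ν ∈ V, (S (fun i => ν i + δ i) - S ν)^2
      = ∑ ν ∈ V ∪ NN S hS, (S (fun i => ν i + δ i) - S ν)^2 :=
    Finset.sum_subset Finset.subset_union_left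
      (fun ν _ hν => by by_contra h; exact hν (hV ν h))
  have h2 : Tdelta S hS δ = ∑ ν ∈ V ∪ NN S hS, (S (fun i => ν i + δ i) - S ν)^2 :=
    Finset.sum_subset Finset.subset_union_right
      (fun ν _ hν => by by_contra h; exact hν (hNN ν h))
  rw [h1, ← h2]

end WithS

section WithS2
variable (S : (Fin 3 → ℤ) → ℝ) (hS : (Function.support S).Finite)

def unCorner (B : Finset (Fin 3 → ℤ)) : Finset (Fin 3 → ℤ) :=
  B.biUnion (fun σ => Finset.image (fun ε : Fin 3 → Bool => fun i => σ i - if ε i then 1 else 0)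
    Finset.univ)

lemma mem_unCorner {B : Finset (Fin 3 → ℤ)} {μ : Fin 3 → ℤ} (ε : Fin 3 → Bool)
    (h : corner μ ε ∈ B) : μ ∈ unCorner B := by
  rw [unCorner, Finset.mem_biUnion]
  refine ⟨corner μ ε, h, ?_⟩
  rw [Finset.mem_image]
  exact ⟨ε, Finset.mem_univ _, by funext i; simp [corner]⟩

def Mset : Finset (Fin 3 → ℤ) := unCorner (Nset S hS)
def Fset : Finset (Fin 3 → ℤ) := unCorner hS.toFinset

lemma corner_zero_of_not_mem_Fset {μ : Fin 3 → ℤ} (h : μ ∉ Fset S hS) (ε : Fin 3 → Bool) :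
    S (corner μ ε) = 0 := by
  by_contra hc
  exact h (mem_unCorner ε (by simp [Function.mem_support, hc]))

lemma Fset_subset_Mset : Fset S hS ⊆ Mset S hS := by
  intro μ hμ
  rw [Fset, unCorner, Finset.mem_biUnion] at hμ
  obtain ⟨σ, hσ, hμ⟩ := hμ
  rw [Mset, unCorner, Finset.mem_biUnion]
  exact ⟨σ, subset_thick _ hσ, hμ⟩

lemma abs_δfun_le (q : (Fin 3 → Bool) × (Fin 3 → Bool)) (i : Fin 3) : |δfun q i| ≤ 1 := by
  rcases hb1 : q.1 i <;> rcases hb2 : q.2 i <;> simp [δfun, hb1, hb2]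

/-- Step L3 inner: sum over cubes of one pair-difference squared equals `Tdelta`. -/
lemma sum_Mset_eq_Tdelta (q : (Fin 3 → Bool) × (Fin 3 → Bool)) :
    ∑ μ ∈ Mset S hS, (S (corner μ q.1) - S (corner μ q.2))^2 = Tdelta S hS (δfun q) := by
  have key : ∀ μ : Fin 3 → ℤ, corner μ q.1 = fun i => (corner μ q.2) i + δfun q i := by
    intro μ; funext i; simp only [corner, δfun]; ring
  have hinj : Set.InjOn (fun μ => corner μ q.2) (Mset S hS) := by
    intro μ1 _ μ2 _ h
    funext i
    have := congrFun h i
    simp only [corner] at this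
    omega
  rw [show (∑ μ ∈ Mset S hS, (S (corner μ q.1) - S (corner μ q.2))^2)
      = ∑ μ ∈ Mset S hS, (S (fun i => (corner μ q.2) i + δfun q i) - S (corner μ q.2))^2 from
    Finset.sum_congr rfl fun μ _ => by rw [← key μ]]
  rw [← Finset.sum_image (f := fun ν => (S (fun i => ν i + δfun q i) - S ν)^2) hinj]
  apply sum_eq_Tdelta S hS _ (abs_δfun_le q)
  intro ν hν
  have hne : S (fun i => ν i + δfun q i) ≠ 0 ∨ S ν ≠ 0 := by
    by_contra h; push_neg at h; simp [h.1, h.2] at hν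
  rw [Finset.mem_image]
  rcases hne with h | h
  · refine ⟨fun i => ν i + δfun q i - if q.1 i then 1 else 0, ?_, ?_⟩
    · refine mem_unCorner q.1 ?_
      have : corner (fun i => ν i + δfun q i - if q.1 i then 1 else 0) q.1
          = fun i => ν i + δfun q i := by funext i; simp [corner]
      rw [this]
      exact mem_Nset_of_ne S hS h
    · funext i; simp only [corner, δfun]; ring
  · refine ⟨fun i => ν i - if q.2 i then 1 else 0, ?_, ?_⟩
    · refine mem_unCorner q.2 ?_
      have : corner (fun i => ν i - if q.2 i then 1 else 0) q.2 = ν := by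
        funext i; simp [corner]
      rw [this]
      exact mem_Nset_of_ne S hS h
    · funext i; simp only [corner]; ring

/-- Step L1–L3: cube sum as weighted sum of `Tdelta` over corner pairs. -/
lemma cubeSum_eq_pairSum :
    ∑ μ ∈ Fset S hS, localE (fun ε => S (corner μ ε))
      = ∑ q : (Fin 3 → Bool) × (Fin 3 → Bool), Wt q * Tdelta S hS (δfun q) := by
  have h1 : ∑ μ ∈ Fset S hS, localE (fun ε => S (corner μ ε))
      = ∑ μ ∈ Mset S hS, localE (fun ε => S (corner μ ε)) := by
    apply Finset.sum_subset (Fset_subset_Mset S hS)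
    intro μ _ hμ
    have := corner_zero_of_not_mem_Fset S hS hμ
    simp [localE, this]
  rw [h1]
  unfold localE
  rw [Finset.sum_comm]
  refine Finset.sum_congr rfl fun q _ => ?_
  rw [← Finset.mul_sum, sum_Mset_eq_Tdelta S hS q]

end WithS2

def D2 : Finset (Fin 3 → ℤ) :=
  ((Finset.univ : Finset ((Fin 3 → Bool) × (Fin 3 → Bool))).filter (fun q => ham q = 2)).image δfun
def D3 : Finset (Fin 3 → ℤ) :=
  ((Finset.univ : Finset ((Fin 3 → Bool) × (Fin 3 → Bool))).filter (fun q => ham q = 3)).image δfun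

lemma card_fiber_D2 : ∀ b ∈ D2,
    (((Finset.univ : Finset ((Fin 3 → Bool) × (Fin 3 → Bool))).filter (fun q => ham q = 2)).filter
      (fun q => δfun q = b)).card = 2 := by decide

lemma card_fiber_D3 : ∀ b ∈ D3,
    (((Finset.univ : Finset ((Fin 3 → Bool) × (Fin 3 → Bool))).filter (fun q => ham q = 3)).filter
      (fun q => δfun q = b)).card = 1 := by decide

lemma mem_D2_abs : ∀ δ ∈ D2, ∀ i, |δ i| ≤ 1 := by decide
lemma mem_D3_abs : ∀ δ ∈ D3, ∀ i, |δ i| ≤ 1 := by decide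

lemma vec3_eq (δ : Fin 3 → ℤ) : δ = ![δ 0, δ 1, δ 2] := by
  funext i; fin_cases i <;> rfl

lemma mem_D2_iff (δ : Fin 3 → ℤ) : δ ∈ D2 ↔ ∑ i, (δ i)^2 = 2 := by
  constructor
  · revert δ; decide
  · intro h
    rw [Fin.sum_univ_three] at h
    have h0 : (δ 0)^2 ≤ 2 := by nlinarith [sq_nonneg (δ 1), sq_nonneg (δ 2)]
    have h1 : (δ 1)^2 ≤ 2 := by nlinarith [sq_nonneg (δ 0), sq_nonneg (δ 2)]
    have h2 : (δ 2)^2 ≤ 2 := by nlinarith [sq_nonneg (δ 0), sq_nonneg (δ 1)]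
    have b0 : -1 ≤ δ 0 ∧ δ 0 ≤ 1 := by constructor <;> nlinarith
    have b1 : -1 ≤ δ 1 ∧ δ 1 ≤ 1 := by constructor <;> nlinarith
    have b2 : -1 ≤ δ 2 ∧ δ 2 ≤ 1 := by constructor <;> nlinarith
    rw [vec3_eq δ]
    obtain ⟨b0l, b0r⟩ := b0; obtain ⟨b1l, b1r⟩ := b1; obtain ⟨b2l, b2r⟩ := b2
    set a := δ 0; set b := δ 1; set c := δ 2
    clear_value a b c
    interval_cases a <;> interval_cases b <;> interval_cases c <;>
      first | decide | (exfalso; norm_num at h)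

lemma mem_D3_iff (δ : Fin 3 → ℤ) : δ ∈ D3 ↔ ∑ i, (δ i)^2 = 3 := by
  constructor
  · revert δ; decide
  · intro h
    rw [Fin.sum_univ_three] at h
    have h0 : (δ 0)^2 ≤ 3 := by nlinarith [sq_nonneg (δ 1), sq_nonneg (δ 2)]
    have h1 : (δ 1)^2 ≤ 3 := by nlinarith [sq_nonneg (δ 0), sq_nonneg (δ 2)]
    have h2 : (δ 2)^2 ≤ 3 := by nlinarith [sq_nonneg (δ 0), sq_nonneg (δ 1)]
    have b0 : -1 ≤ δ 0 ∧ δ 0 ≤ 1 := by constructor <;> nlinarith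
    have b1 : -1 ≤ δ 1 ∧ δ 1 ≤ 1 := by constructor <;> nlinarith
    have b2 : -1 ≤ δ 2 ∧ δ 2 ≤ 1 := by constructor <;> nlinarith
    rw [vec3_eq δ]
    obtain ⟨b0l, b0r⟩ := b0; obtain ⟨b1l, b1r⟩ := b1; obtain ⟨b2l, b2r⟩ := b2
    set a := δ 0; set b := δ 1; set c := δ 2
    clear_value a b c
    interval_cases a <;> interval_cases b <;> interval_cases c <;>
      first | decide | (exfalso; norm_num at h)

lemma ham_le_three (q : (Fin 3 → Bool) × (Fin 3 → Bool)) : ham q ≤ 3 := by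
  have := Finset.card_filter_le (Finset.univ : Finset (Fin 3)) (fun i => q.1 i ≠ q.2 i)
  simpa [ham] using this

section WithS3
variable (S : (Fin 3 → ℤ) → ℝ) (hS : (Function.support S).Finite)

lemma pairSum_eq_deltaSum :
    ∑ q : (Fin 3 → Bool) × (Fin 3 → Bool), Wt q * Tdelta S hS (δfun q)
      = (∑ δ ∈ D2, (1/12 : ℝ) * Tdelta S hS δ) + ∑ δ ∈ D3, (1/24 : ℝ) * Tdelta S hS δ := by
  have hsplit : (Finset.univ : Finset ((Fin 3 → Bool) × (Fin 3 → Bool))).filter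
        (fun q => 2 ≤ ham q)
      = ((Finset.univ : Finset _).filter (fun q => ham q = 2))
        ∪ ((Finset.univ : Finset _).filter (fun q => ham q = 3)) := by
    ext q
    simp only [Finset.mem_filter, Finset.mem_union, Finset.mem_univ, true_and]
    have := ham_le_three q
    omega
  have hdisj : Disjoint ((Finset.univ : Finset ((Fin 3 → Bool) × (Fin 3 → Bool))).filter
        (fun q => ham q = 2))
      ((Finset.univ : Finset _).filter (fun q => ham q = 3)) := by
    rw [Finset.disjoint_left]
    intro q h2 h3
    simp only [Finset.mem_filter] at h2 h3
    omega
  have h1 : ∑ q : (Fin 3 → Bool) × (Fin 3 → Bool), Wt q * Tdelta S hS (δfun q)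
      = ∑ q ∈ (Finset.univ : Finset _).filter (fun q => 2 ≤ ham q),
          (1/24 : ℝ) * Tdelta S hS (δfun q) := by
    rw [Finset.sum_filter]
    refine Finset.sum_congr rfl fun q _ => ?_
    by_cases h : 2 ≤ ham q <;> simp [Wt, h]
  rw [h1, hsplit, Finset.sum_union hdisj]
  refine congrArg₂ (· + ·) ?_ ?_
  · rw [Finset.sum_comp (fun δ => (1/24 : ℝ) * Tdelta S hS δ) δfun]
    rw [show ((Finset.univ : Finset ((Fin 3 → Bool) × (Fin 3 → Bool))).filter
      (fun q => ham q = 2)).image δfun = D2 from rfl]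
    refine Finset.sum_congr rfl fun δ hδ => ?_
    rw [card_fiber_D2 δ hδ]
    push_cast
    ring
  · rw [Finset.sum_comp (fun δ => (1/24 : ℝ) * Tdelta S hS δ) δfun]
    rw [show ((Finset.univ : Finset ((Fin 3 → Bool) × (Fin 3 → Bool))).filter
      (fun q => ham q = 3)).image δfun = D3 from rfl]
    refine Finset.sum_congr rfl fun δ hδ => ?_
    rw [card_fiber_D3 δ hδ]
    push_cast
    ring

end WithS3

section WithS4
variable (S : (Fin 3 → ℤ) → ℝ) (hS : (Function.support S).Finite)

lemma finsum_pairs (m : ℤ) (c : ℝ) (D : Finset (Fin 3 → ℤ))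
    (hD : ∀ δ : Fin 3 → ℤ, δ ∈ D ↔ ∑ i, (δ i)^2 = m)
    (habs : ∀ δ ∈ D, ∀ i, |δ i| ≤ 1) :
    (∑ᶠ (p : (Fin 3 → ℤ) × (Fin 3 → ℤ)) (_ : ∑ i, (p.1 i - p.2 i) ^ 2 = m),
        c * (S p.1 - S p.2) ^ 2)
      = ∑ δ ∈ D, c * Tdelta S hS δ := by
  have hdvec : ∀ p : (Fin 3 → ℤ) × (Fin 3 → ℤ), (∑ i, (p.1 i - p.2 i) ^ 2 = m)
      ↔ (fun i => p.1 i - p.2 i) ∈ D := by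
    intro p; rw [hD]
  -- reduce the finsum to a finite sum over Nset ×ˢ Nset
  have hred : (∑ᶠ (p : (Fin 3 → ℤ) × (Fin 3 → ℤ)) (_ : ∑ i, (p.1 i - p.2 i) ^ 2 = m),
        c * (S p.1 - S p.2) ^ 2)
      = ∑ p ∈ (Nset S hS) ×ˢ (Nset S hS),
          (if (∑ i, (p.1 i - p.2 i) ^ 2 = m) then c * (S p.1 - S p.2) ^ 2 else 0) := by
    have : ∀ p : (Fin 3 → ℤ) × (Fin 3 → ℤ),
        (∑ᶠ (_ : ∑ i, (p.1 i - p.2 i) ^ 2 = m), c * (S p.1 - S p.2) ^ 2)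
        = (if (∑ i, (p.1 i - p.2 i) ^ 2 = m) then c * (S p.1 - S p.2) ^ 2 else 0) :=
      fun p => finsum_eq_if
    rw [finsum_congr this]
    apply finsum_eq_sum_of_support_subset
    intro p hp
    simp only [Function.mem_support, ne_eq, ite_eq_right_iff, not_forall] at hp
    obtain ⟨hcond, hne⟩ := hp
    have hΔ : S p.1 ≠ S p.2 := by
      intro h; apply hne; rw [h]; ring
    have habs' : ∀ i, |p.1 i - p.2 i| ≤ 1 := by
      intro i
      exact habs _ ((hdvec p).1 hcond) i
    have hmem : p.1 ∈ Nset S hS ∧ p.2 ∈ Nset S hS := by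
      rcases ne_or_eq (S p.1) 0 with h | h
      · have h1 : p.1 ∈ hS.toFinset := by simp [Function.mem_support, h]
        exact ⟨subset_thick _ h1, mem_thick h1 (fun i => by
          have := habs' i; rw [abs_sub_comm] at this; exact this)⟩
      · have h2 : S p.2 ≠ 0 := by rw [h] at hΔ; exact fun hh => hΔ hh.symm
        have h1 : p.2 ∈ hS.toFinset := by simp [Function.mem_support, h2]
        exact ⟨mem_thick h1 (fun i => habs' i), subset_thick _ h1⟩
    simp only [Finset.coe_product, Set.mem_prod, Finset.mem_coe]
    exact hmem
  rw [hred]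
  -- rewrite each indicator as a sum over D and swap
  have hstep : ∀ p ∈ (Nset S hS) ×ˢ (Nset S hS),
      (if (∑ i, (p.1 i - p.2 i) ^ 2 = m) then c * (S p.1 - S p.2) ^ 2 else 0)
      = ∑ δ ∈ D, (if (fun i => p.1 i - p.2 i) = δ then c * (S p.1 - S p.2) ^ 2 else 0) := by
    intro p _
    rw [Finset.sum_ite_eq D (fun i => p.1 i - p.2 i) (fun _ => c * (S p.1 - S p.2) ^ 2)]
    by_cases h : (∑ i, (p.1 i - p.2 i) ^ 2 = m)
    · rw [if_pos h, if_pos ((hdvec p).1 h)]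
    · rw [if_neg h, if_neg (fun hh => h ((hdvec p).2 hh))]
  rw [Finset.sum_congr rfl hstep, Finset.sum_comm]
  refine Finset.sum_congr rfl fun δ hδ => ?_
  rw [← Finset.sum_filter]
  -- bijection with the set of second coordinates
  set W := ((Nset S hS) ×ˢ (Nset S hS)).filter (fun p => (fun i => p.1 i - p.2 i) = δ) with hW
  have hmemW : ∀ p ∈ W, p.1 = fun i => p.2 i + δ i := by
    intro p hp
    rw [hW, Finset.mem_filter] at hp
    funext i
    have := congrFun hp.2 i
    beta_reduce at this
    omega
  have hbij : ∑ p ∈ W, c * (S p.1 - S p.2) ^ 2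
      = ∑ ν ∈ W.image Prod.snd, c * (S (fun i => ν i + δ i) - S ν) ^ 2 := by
    refine (Finset.sum_nbij' (fun ν => ((fun i => ν i + δ i), ν)) Prod.snd ?_ ?_ ?_ ?_ ?_).symm
    · intro ν hν
      rw [Finset.mem_image] at hν
      obtain ⟨p, hp, hpν⟩ := hν
      have := hmemW p hp
      have hpeq : p = ((fun i => ν i + δ i), ν) := by
        rw [Prod.ext_iff]
        constructor
        · rw [this, hpν]
        · exact hpν
      beta_reduce
      rw [← hpeq]; exact hp
    · intro p hp
      exact Finset.mem_image_of_mem Prod.snd hp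
    · intro ν _; rfl
    · intro p hp
      have := hmemW p hp
      rw [Prod.ext_iff]; exact ⟨this.symm, rfl⟩
    · intro ν _; rfl
  rw [hbij, ← Finset.mul_sum]
  congr 1
  apply sum_eq_Tdelta S hS δ (habs δ hδ)
  intro ν hν
  have hne : S (fun i => ν i + δ i) ≠ 0 ∨ S ν ≠ 0 := by
    by_contra h; push_neg at h; simp [h.1, h.2] at hν
  have habsδ := habs δ hδ
  have hmem : ((fun i => ν i + δ i), ν) ∈ W := by
    rw [hW, Finset.mem_filter]
    constructor
    · rw [Finset.mem_product]
      rcases hne with h | h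
      · have h1 : (fun i => ν i + δ i) ∈ hS.toFinset := by simp [Function.mem_support, h]
        refine ⟨subset_thick _ h1, mem_thick h1 (fun i => ?_)⟩
        simp only
        have := habsδ i
        rw [abs_le] at *
        constructor <;> omega
      · have h1 : ν ∈ hS.toFinset := by simp [Function.mem_support, h]
        refine ⟨mem_thick h1 (fun i => ?_), subset_thick _ h1⟩
        simp only
        have := habsδ i
        rw [abs_le] at *
        constructor <;> omega
    · funext i; simp only; ring
  exact Finset.mem_image_of_mem Prod.snd hmem

end WithS4


/-! ### Global decomposition -/

def eqv : E3 ≃ᵐ (Fin 3 → ℝ) := (MeasurableEquiv.toLp 2 (Fin 3 → ℝ)).symm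

def aZ (μ : Fin 3 → ℤ) : Fin 3 → ℝ := fun i => (μ i : ℝ)

lemma mem_Ucube_iff (μ : Fin 3 → ℤ) (y : Fin 3 → ℝ) :
    eqv.symm y ∈ Ucube μ ↔ y ∈ Cpi (aZ μ) := by
  constructor
  · intro h
    rw [Cpi, Set.mem_univ_pi]
    intro i
    exact h i
  · intro h i
    exact (Set.mem_univ_pi.1 h) i

lemma continuous_pDsq (c : (Fin 3 → Bool) → ℝ) (a : Fin 3 → ℝ) :
    Continuous fun y : Fin 3 → ℝ => ∑ k : Fin 3, (pD c a k y)^2 := by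
  apply continuous_finset_sum
  intro k _
  apply Continuous.pow
  apply continuous_finset_sum
  intro ε _
  apply Continuous.mul continuous_const
  apply continuous_finset_prod
  intro j _
  exact (continuous_wB (ε j)).comp ((continuous_apply j).sub continuous_const)

section Global
variable (S : (Fin 3 → ℤ) → ℝ) (hS : (Function.support S).Finite)

lemma integral_eq_cubeSum :
    ∫ x : E3, ‖fderiv ℝ (trilinearInterp S) x‖ ^ 2
      = ∑ μ ∈ Fset S hS, localE (fun ε => S (corner μ ε)) := by
  set G : (Fin 3 → ℝ) → ℝ := fun y => ‖fderiv ℝ (trilinearInterp S) (eqv.symm y)‖^2 with hG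
  have h0 : ∫ x : E3, ‖fderiv ℝ (trilinearInterp S) x‖ ^ 2 = ∫ y, G y :=
    (((EuclideanSpace.volume_preserving_symm_measurableEquiv_toLp (Fin 3)).symm).integral_comp'
      (fun x => ‖fderiv ℝ (trilinearInterp S) x‖^2)).symm
  rw [h0]
  have hZ : (volume : Measure (Fin 3 → ℝ))
      (⋃ (i : Fin 3), ⋃ (n : ℤ), {y : Fin 3 → ℝ | y i = (n:ℝ)}) = 0 := by
    refine measure_iUnion_null fun i => measure_iUnion_null fun n => ?_
    rw [show (volume : Measure (Fin 3 → ℝ)) = Measure.pi fun _ => volume from rfl]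
    exact Measure.pi_hyperplane _ i _
  have hae : G =ᵐ[volume] fun y => ∑ μ ∈ Fset S hS, Set.indicator (Cpi (aZ μ)) G y := by
    have hcompl : ∀ᵐ y : (Fin 3 → ℝ) ∂volume,
        y ∉ ⋃ (i : Fin 3), ⋃ (n : ℤ), {y : Fin 3 → ℝ | y i = (n:ℝ)} :=
      compl_mem_ae_iff.2 hZ
    filter_upwards [hcompl] with y hy
    have hni : ∀ i (n : ℤ), y i ≠ (n : ℝ) := by
      intro i n h
      exact hy (Set.mem_iUnion.2 ⟨i, Set.mem_iUnion.2 ⟨n, h⟩⟩)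
    set μy : Fin 3 → ℤ := fun i => ⌊y i⌋ with hμy
    have hymem : y ∈ Cpi (aZ μy) := by
      rw [Cpi, Set.mem_univ_pi]
      intro i
      constructor
      · exact lt_of_le_of_ne (Int.floor_le (y i)) (fun h => hni i ⌊y i⌋ h.symm)
      · have := Int.lt_floor_add_one (y i)
        show y i < aZ μy i + 1
        rw [show aZ μy i = (⌊y i⌋ : ℝ) from rfl]
        exact_mod_cast this
    have huniq : ∀ μ' : Fin 3 → ℤ, y ∈ Cpi (aZ μ') → μ' = μy := by
      intro μ' hmem
      funext i
      have h := (Set.mem_univ_pi.1 hmem) i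
      have h2 : y i < (μ' i : ℝ) + 1 := h.2
      have : ⌊y i⌋ = μ' i := by
        rw [Int.floor_eq_iff]
        exact ⟨le_of_lt h.1, by exact_mod_cast h2⟩
      rw [hμy]
      exact this.symm
    by_cases hF : μy ∈ Fset S hS
    · symm
      rw [Finset.sum_eq_single_of_mem μy hF (fun μ' _ hne => ?_)]
      · exact Set.indicator_of_mem hymem G
      · apply Set.indicator_of_notMem
        intro hmem
        exact hne (huniq μ' hmem)
    · have hzero : ∀ ε, S (corner μy ε) = 0 := corner_zero_of_not_mem_Fset S hS hF
      have hx : eqv.symm y ∈ Ucube μy := (mem_Ucube_iff μy y).2 hymem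
      have hGy : G y = 0 := by
        rw [hG]
        simp only
        rw [fderiv_on_cube S μy _ hx]
        have hL : Lmap S μy (eqv.symm y) = 0 := by
          unfold Lmap
          simp [hzero]
        rw [hL]
        simp
      rw [hGy]
      symm
      apply Finset.sum_eq_zero
      intro μ' hμ'
      apply Set.indicator_of_notMem
      intro hmem
      rw [huniq μ' hmem] at hμ'
      exact hF hμ'
  rw [integral_congr_ae hae]
  have hindeq : ∀ μ : Fin 3 → ℤ, Set.indicator (Cpi (aZ μ)) G
      = Set.indicator (Cpi (aZ μ))
          (fun y => ∑ k, (pD (fun ε => S (corner μ ε)) (aZ μ) k y)^2) := by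
    intro μ
    funext y
    by_cases h : y ∈ Cpi (aZ μ)
    · rw [Set.indicator_of_mem h, Set.indicator_of_mem h]
      have hx : eqv.symm y ∈ Ucube μ := (mem_Ucube_iff μ y).2 h
      rw [hG]
      simp only
      rw [fderiv_on_cube S μ _ hx, norm_sq_eq_sum]
      refine Finset.sum_congr rfl fun k _ => ?_
      rw [Lmap_apply_single]
      rfl
    · rw [Set.indicator_of_notMem h, Set.indicator_of_notMem h]
  rw [MeasureTheory.integral_finset_sum _ (fun μ _ => ?_)]
  · refine Finset.sum_congr rfl fun μ _ => ?_
    rw [hindeq μ, cube_integral, cubeE_eq_localE]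
  · rw [hindeq μ]
    exact integrable_ind_cont _ _ (continuous_pDsq _ _)

end Global

end

end TrilinearProofAux

open TrilinearProofAux in
theorem integral_gradient_sq_interp_eq_latticeT
    (S : (Fin 3 → ℤ) → ℝ) (hS : (Function.support S).Finite) :
    ∫ x : EuclideanSpace ℝ (Fin 3), ‖fderiv ℝ (trilinearInterp S) x‖ ^ 2
      = latticeT S := by
  rw [integral_eq_cubeSum S hS, cubeSum_eq_pairSum S hS, pairSum_eq_deltaSum S hS]
  rw [latticeT]
  rw [finsum_pairs S hS 2 (1/12) D2 mem_D2_iff mem_D2_abs,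
    finsum_pairs S hS 3 (1/24) D3 mem_D3_iff mem_D3_abs]
end

section
/- Let β ≥ 2, let S : ℤ³ → ℝ be nonnegative and finitely supported, and let φ be its piecewise-trilinear interpolation. Then ∫_{ℝ³} φ^β ≤ Σ_{σ∈ℤ³} S(σ)^β. -/
open MeasureTheory Finset

namespace TriAux

/-- corner offset -/
def ebit (ε : Fin 3 → Bool) : Fin 3 → ℤ := fun i => if ε i then 1 else 0

/-- 1D weight -/
def wt (b : Bool) (t : ℝ) : ℝ := if b then t else 1 - t

lemma wt_nonneg {b : Bool} {t : ℝ} (h0 : 0 ≤ t) (h1 : t ≤ 1) : 0 ≤ wt b t := by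
  cases b <;> simp [wt] <;> linarith

lemma continuous_wt (b : Bool) (c : ℝ) : Continuous fun t : ℝ => wt b (t - c) := by
  cases b <;> simp only [wt, Bool.false_eq_true, if_false, if_true] <;> fun_prop

/-- unit cube at τ -/
def cube (τ : Fin 3 → ℤ) : Set (Fin 3 → ℝ) :=
  Set.univ.pi fun i => Set.Ico (τ i : ℝ) (τ i + 1)

lemma measurableSet_cube (τ : Fin 3 → ℤ) : MeasurableSet (cube τ) :=
  MeasurableSet.univ_pi fun _ => measurableSet_Ico

lemma mem_cube_iff (τ : Fin 3 → ℤ) (x : Fin 3 → ℝ) :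
    x ∈ cube τ ↔ ∀ i, ⌊x i⌋ = τ i := by
  simp only [cube, Set.mem_pi, Set.mem_univ, forall_true_left, Set.mem_Ico]
  refine forall_congr' fun i => ?_
  rw [Int.floor_eq_iff]

noncomputable def hfun (β : ℝ) (S : (Fin 3 → ℤ) → ℝ) (τ : Fin 3 → ℤ) (x : Fin 3 → ℝ) : ℝ :=
  ∑ ε : Fin 3 → Bool, (∏ i, wt (ε i) (x i - τ i)) * S (τ + ebit ε) ^ β

lemma continuous_hfun (β : ℝ) (S : (Fin 3 → ℤ) → ℝ) (τ : Fin 3 → ℤ) :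
    Continuous (hfun β S τ) := by
  refine continuous_finset_sum _ fun ε _ => Continuous.mul ?_ continuous_const
  exact continuous_finset_prod _ fun i _ =>
    (continuous_wt (ε i) (τ i)).comp (continuous_apply i)

lemma cube_subset_Icc (τ : Fin 3 → ℤ) :
    cube τ ⊆ Set.Icc (fun i => (τ i : ℝ)) (fun i => (τ i : ℝ) + 1) := by
  intro x hx
  simp only [cube, Set.mem_pi, Set.mem_univ, forall_true_left, Set.mem_Ico] at hx
  constructor <;> intro i <;> [exact (hx i).1; exact (hx i).2.le]

lemma integrableOn_cube {f : (Fin 3 → ℝ) → ℝ} (hf : Continuous f) (τ : Fin 3 → ℤ) :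
    IntegrableOn f (cube τ) := by
  exact (hf.continuousOn.integrableOn_compact isCompact_Icc).mono_set (cube_subset_Icc τ)

lemma sum_weights (t : Fin 3 → ℝ) :
    ∑ ε : Fin 3 → Bool, ∏ i, wt (ε i) (t i) = 1 := by
  have := Finset.prod_univ_sum (fun _ : Fin 3 => (Finset.univ : Finset Bool))
      (fun i b => wt b (t i))
  rw [Fintype.piFinset_univ] at this
  rw [← this]
  refine Finset.prod_eq_one fun i _ => ?_
  rw [Fintype.sum_bool]
  simp [wt]

lemma integral_wt (b : Bool) (a : ℝ) :
    ∫ t in Set.Ico a (a + 1), wt b (t - a) = 1 / 2 := by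
  rw [MeasureTheory.integral_Ico_eq_integral_Ioo, ← MeasureTheory.integral_Ioc_eq_integral_Ioo,
    ← intervalIntegral.integral_of_le (by linarith)]
  have h := intervalIntegral.integral_comp_sub_right (a := a) (b := a + 1)
      (fun t => wt b t) a
  rw [h]
  have h0 : a - a = 0 := by ring
  have h1 : a + 1 - a = 1 := by ring
  rw [h0, h1]
  cases b
  · simp only [wt, Bool.false_eq_true, if_false]
    rw [intervalIntegral.integral_sub intervalIntegrable_const
      (intervalIntegral.intervalIntegrable_id)]
    simp [integral_id]
    norm_num
  · simp only [wt, if_true]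
    rw [integral_id]; norm_num

end TriAux

namespace TriAux

lemma jensen_step {β : ℝ} (hβ : 1 ≤ β) {S : (Fin 3 → ℤ) → ℝ} (hpos : ∀ σ, 0 ≤ S σ)
    (τ : Fin 3 → ℤ) (x : Fin 3 → ℝ) (hx : ∀ i, 0 ≤ x i - τ i ∧ x i - τ i ≤ 1) :
    (∑ ε : Fin 3 → Bool, (∏ i, wt (ε i) (x i - τ i)) * S (τ + ebit ε)) ^ β
      ≤ hfun β S τ x := by
  have hw : ∀ ε : Fin 3 → Bool, (0:ℝ) ≤ ∏ i, wt (ε i) (x i - τ i) := fun ε =>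
    Finset.prod_nonneg fun i _ => wt_nonneg (hx i).1 (hx i).2
  have hsum : ∑ ε : Fin 3 → Bool, ∏ i, wt (ε i) (x i - τ i) = 1 :=
    sum_weights fun i => x i - τ i
  have h := (convexOn_rpow hβ).map_sum_le (t := Finset.univ)
      (p := fun ε : Fin 3 → Bool => S (τ + ebit ε))
      (w := fun ε : Fin 3 → Bool => ∏ i, wt (ε i) (x i - τ i))
      (fun ε _ => hw ε) hsum (fun ε _ => hpos _)
  simpa [smul_eq_mul, hfun] using h

lemma indicator_prod_eq (τ : Fin 3 → ℤ) (ε : Fin 3 → Bool) :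
    (cube τ).indicator (fun x => ∏ i, wt (ε i) (x i - τ i))
      = fun x => ∏ i, (Set.Ico ((τ i : ℝ)) (τ i + 1)).indicator
          (fun t => wt (ε i) (t - τ i)) (x i) := by
  funext x
  by_cases hx : x ∈ cube τ
  · rw [Set.indicator_of_mem hx]
    refine Finset.prod_congr rfl fun i _ => ?_
    rw [Set.indicator_of_mem (hx i (Set.mem_univ i))]
  · rw [Set.indicator_of_notMem hx]
    have : ∃ i, x i ∉ Set.Ico ((τ i : ℝ)) (τ i + 1) := by
      by_contra h
      push_neg at h
      exact hx fun i _ => h i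
    obtain ⟨i, hi⟩ := this
    exact (Finset.prod_eq_zero (Finset.mem_univ i) (Set.indicator_of_notMem hi _)).symm

lemma integral_cube_prod (τ : Fin 3 → ℤ) (ε : Fin 3 → Bool) :
    ∫ x in cube τ, ∏ i, wt (ε i) (x i - τ i) = 1 / 8 := by
  rw [← integral_indicator (measurableSet_cube τ), indicator_prod_eq]
  rw [MeasureTheory.volume_pi]; beta_reduce
  rw [MeasureTheory.integral_fintype_prod_eq_prod
    (fun i t => (Set.Ico ((τ i : ℝ)) (τ i + 1)).indicator (fun s => wt (ε i) (s - τ i)) t)]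
  have h : ∀ i : Fin 3,
      (∫ t : ℝ, (Set.Ico ((τ i : ℝ)) (τ i + 1)).indicator (fun s => wt (ε i) (s - τ i)) t)
        = 1 / 2 := fun i => by
    rw [integral_indicator measurableSet_Ico, integral_wt]
  rw [Finset.prod_congr rfl fun i _ => h i]
  norm_num

lemma integral_hfun (β : ℝ) (S : (Fin 3 → ℤ) → ℝ) (τ : Fin 3 → ℤ) :
    ∫ x in cube τ, hfun β S τ x
      = ∑ ε : Fin 3 → Bool, (1 / 8 : ℝ) * S (τ + ebit ε) ^ β := by
  unfold hfun
  rw [integral_finset_sum]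
  · refine Finset.sum_congr rfl fun ε _ => ?_
    rw [integral_mul_const, integral_cube_prod, mul_comm]
  · intro ε _
    refine integrableOn_cube ?_ τ
    exact (continuous_finset_prod _ fun i _ =>
      (continuous_wt (ε i) (τ i)).comp (continuous_apply i)).mul continuous_const

end TriAux

theorem integral_interp_rpow_le_sum (β : ℝ) (hβ : 2 ≤ β)
    (S : (Fin 3 → ℤ) → ℝ) (hS : (Function.support S).Finite)
    (hpos : ∀ σ, 0 ≤ S σ) :
    ∫ x : EuclideanSpace ℝ (Fin 3), trilinearInterp S x ^ β
      ≤ ∑ᶠ σ : Fin 3 → ℤ, S σ ^ β := by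
  classical
  have hβ0 : β ≠ 0 := by linarith
  have hβ1 : (1:ℝ) ≤ β := by linarith
  set T : Finset (Fin 3 → ℤ) :=
    hS.toFinset.biUnion
      (fun σ => Finset.image (fun ε : Fin 3 → Bool => σ - TriAux.ebit ε) Finset.univ) with hTdef
  have hT : ∀ σ, S σ ≠ 0 → ∀ ε : Fin 3 → Bool, σ - TriAux.ebit ε ∈ T := by
    intro σ hσ ε
    refine Finset.mem_biUnion.2 ⟨σ, ?_, Finset.mem_image.2 ⟨ε, Finset.mem_univ _, rfl⟩⟩
    simpa using hσ
  set g : (Fin 3 → ℝ) → ℝ :=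
    fun x => ∑ τ ∈ T, (TriAux.cube τ).indicator (TriAux.hfun β S τ) x with hg
  have htrans : ∫ x : EuclideanSpace ℝ (Fin 3), trilinearInterp S x ^ β
      = ∫ x : Fin 3 → ℝ,
          trilinearInterp S ((MeasurableEquiv.toLp 2 (Fin 3 → ℝ)) x) ^ β := by
    rw [← (MeasurePreserving.symm (MeasurableEquiv.toLp 2 (Fin 3 → ℝ)).symm
      (EuclideanSpace.volume_preserving_symm_measurableEquiv_toLp (Fin 3))).integral_comp'
      (fun y => trilinearInterp S y ^ β)]
    rfl
  rw [htrans]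
  -- the value of the interpolation in pi coordinates
  have hval : ∀ x : Fin 3 → ℝ,
      trilinearInterp S ((MeasurableEquiv.toLp 2 (Fin 3 → ℝ)) x)
        = ∑ ε : Fin 3 → Bool,
            (∏ i, TriAux.wt (ε i) (x i - (⌊x i⌋ : ℝ))) *
              S ((fun i => ⌊x i⌋) + TriAux.ebit ε) := by
    intro x
    rfl
  have hnonneg : ∀ x : Fin 3 → ℝ,
      0 ≤ trilinearInterp S ((MeasurableEquiv.toLp 2 (Fin 3 → ℝ)) x) := by
    intro x
    rw [hval x]
    refine Finset.sum_nonneg fun ε _ => mul_nonneg ?_ (hpos _)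
    exact Finset.prod_nonneg fun i _ =>
      TriAux.wt_nonneg (by exact sub_nonneg.2 (Int.floor_le _))
        (by have := Int.sub_one_lt_floor (x i); linarith)
  have hpoint : ∀ x : Fin 3 → ℝ,
      trilinearInterp S ((MeasurableEquiv.toLp 2 (Fin 3 → ℝ)) x) ^ β ≤ g x := by
    intro x
    set τ : Fin 3 → ℤ := fun i => ⌊x i⌋ with hτ
    have hxcube : x ∈ TriAux.cube τ := (TriAux.mem_cube_iff τ x).2 fun i => rfl
    have hsingle : ∀ τ' ∈ T, τ' ≠ τ →
        (TriAux.cube τ').indicator (TriAux.hfun β S τ') x = 0 := by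
      intro τ' _ hne
      refine Set.indicator_of_notMem (fun hmem => hne ?_) _
      funext i
      exact ((TriAux.mem_cube_iff τ' x).1 hmem i).symm
    by_cases hτT : τ ∈ T
    · have hgx : g x = TriAux.hfun β S τ x := by
        simp only [hg]
        rw [Finset.sum_eq_single τ hsingle (fun h => absurd hτT h)]
        exact Set.indicator_of_mem hxcube _
      rw [hgx, hval x]
      refine TriAux.jensen_step hβ1 hpos τ x fun i => ?_
      constructor
      · exact sub_nonneg.2 (Int.floor_le _)
      · have := Int.sub_one_lt_floor (x i); simp only [hτ]; linarith
    · have hgx : g x = 0 :=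
        Finset.sum_eq_zero fun τ' hτ' => hsingle τ' hτ' (fun h => hτT (h ▸ hτ'))
      have hzero : ∀ ε : Fin 3 → Bool, S (τ + TriAux.ebit ε) = 0 := by
        intro ε
        by_contra h
        have h2 := hT _ h ε
        rw [add_sub_cancel_right] at h2
        exact hτT h2
      rw [hgx, hval x, Finset.sum_eq_zero fun ε _ => by rw [hzero ε, mul_zero],
        Real.zero_rpow hβ0]
  have hgint : Integrable g := by
    refine integrable_finset_sum _ fun τ _ => ?_
    exact (TriAux.integrableOn_cube (TriAux.continuous_hfun β S τ) τ).integrable_indicator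
      (TriAux.measurableSet_cube τ)
  have h1 : (∫ x : Fin 3 → ℝ,
      trilinearInterp S ((MeasurableEquiv.toLp 2 (Fin 3 → ℝ)) x) ^ β) ≤ ∫ x, g x :=
    integral_mono_of_nonneg (Filter.Eventually.of_forall fun x =>
        Real.rpow_nonneg (hnonneg x) β) hgint
      (Filter.Eventually.of_forall hpoint)
  refine h1.trans ?_
  have h2 : ∫ x, g x
      = ∑ τ ∈ T, ∑ ε : Fin 3 → Bool, (1 / 8 : ℝ) * S (τ + TriAux.ebit ε) ^ β := by
    rw [hg, integral_finset_sum _ (fun τ _ =>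
      (TriAux.integrableOn_cube (TriAux.continuous_hfun β S τ) τ).integrable_indicator
        (TriAux.measurableSet_cube τ))]
    refine Finset.sum_congr rfl fun τ _ => ?_
    rw [integral_indicator (TriAux.measurableSet_cube τ), TriAux.integral_hfun]
  rw [h2]
  have hc0 : ∀ σ, S σ = 0 → S σ ^ β = 0 := fun σ h => by rw [h, Real.zero_rpow hβ0]
  have h3 : ∀ ε : Fin 3 → Bool,
      ∑ τ ∈ T, S (τ + TriAux.ebit ε) ^ β = ∑ᶠ σ, S σ ^ β := by
    intro ε
    have hinj : ∀ a ∈ T, ∀ b ∈ T,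
        a + TriAux.ebit ε = b + TriAux.ebit ε → a = b := fun a _ b _ h =>
      add_right_cancel h
    rw [← Finset.sum_image (f := fun σ => S σ ^ β) (g := fun τ => τ + TriAux.ebit ε)
      (s := T) hinj]
    refine (finsum_eq_sum_of_support_subset _ ?_).symm
    intro σ hσ
    simp only [Function.mem_support] at hσ
    have hSσ : S σ ≠ 0 := fun h => hσ (hc0 σ h)
    exact Finset.mem_coe.2 (Finset.mem_image.2
      ⟨σ - TriAux.ebit ε, hT σ hSσ ε, by rw [sub_add_cancel]⟩)
  rw [Finset.sum_comm]
  refine le_of_eq ?_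
  calc ∑ ε : Fin 3 → Bool, ∑ τ ∈ T, (1 / 8 : ℝ) * S (τ + TriAux.ebit ε) ^ β
      = ∑ ε : Fin 3 → Bool, (1 / 8 : ℝ) * ∑ᶠ σ, S σ ^ β := by
        refine Finset.sum_congr rfl fun ε _ => ?_
        rw [← Finset.mul_sum, h3 ε]
    _ = ∑ᶠ σ, S σ ^ β := by
        rw [Finset.sum_const, Finset.card_univ]
        have : Fintype.card (Fin 3 → Bool) = 8 := by simp
        rw [this, nsmul_eq_mul, ← mul_assoc]
        norm_num
end

section
/- The constant I₀ = (2/π)^{3/4} ∫₀^∞ (1 + x⁴ − x²(x⁴+2)^{1/2}) dx satisfies I₀ = 2^{3/2} Γ(3/4) / (5 π^{1/4} Γ(5/4)); in particular the integrand 1 + x⁴ − x²√(x⁴+2) is nonnegative and integrable on (0,∞). -/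
open MeasureTheory Real Set Filter

noncomputable def fI (x:ℝ) : ℝ := 1 + x^4 - x^2*Real.sqrt (x^4+2)
noncomputable def mI (x:ℝ) : ℝ := x^6 / (Real.sqrt (x^4+2))^5
lemma spos (x:ℝ) : (0:ℝ) < x^4+2 := by positivity
lemma wpos (x:ℝ) : 0 < Real.sqrt (x^4+2) := Real.sqrt_pos.2 (spos x)
lemma wsq (x:ℝ) : (Real.sqrt (x^4+2))^2 = x^4+2 := Real.sq_sqrt (spos x).le
lemma wge (x:ℝ) : x^2 ≤ Real.sqrt (x^4+2) := by
  have : x^2 = Real.sqrt (x^4) := by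
    rw [show x^4 = (x^2)^2 by ring, Real.sqrt_sq (by positivity)]
  rw [this]; exact Real.sqrt_le_sqrt (by linarith)
lemma fI_eq (x:ℝ) : fI x = 1/(1+x^4+x^2*Real.sqrt (x^4+2)) := by
  have hw := wsq x; have hwp := wpos x
  have hd : 0 < 1+x^4+x^2*Real.sqrt (x^4+2) := by positivity
  rw [fI, eq_div_iff hd.ne']; nlinarith [hw]
lemma fI_nonneg (x:ℝ) : 0 ≤ fI x := by rw [fI_eq]; positivity

lemma fI_le (x:ℝ) : fI x ≤ 2/(1+x^2) := by
  rw [fI_eq]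
  have hwp := wpos x
  have h1 : 0 < 1+x^4+x^2*Real.sqrt (x^4+2) := by positivity
  have h2 : (0:ℝ) < 1+x^2 := by positivity
  rw [div_le_div_iff₀ h1 h2]
  nlinarith [sq_nonneg (x^2-1), mul_nonneg (sq_nonneg x) hwp.le]

lemma mI_nonneg (x:ℝ) : 0 ≤ mI x := by
  have := wpos x; rw [mI]; positivity

lemma mI_le {x:ℝ} (hx : 0 ≤ x) : mI x ≤ 2/(1+x^2) := by
  have hwp := wpos x
  have hw := wsq x
  have hge := wge x
  have h2 : (0:ℝ) < 1+x^2 := by positivity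
  have h5 : (0:ℝ) < (Real.sqrt (x^4+2))^5 := by positivity
  rw [mI, div_le_div_iff₀ h5 h2]
  have key : x^2*(x^4+2)^2 ≤ (Real.sqrt (x^4+2))^5 := by
    calc x^2*(x^4+2)^2 ≤ Real.sqrt (x^4+2) * (x^4+2)^2 := by nlinarith [sq_nonneg (x^4+2)]
    _ = (Real.sqrt (x^4+2))^5 := by rw [show ((Real.sqrt (x^4+2)))^5 = Real.sqrt (x^4+2) * ((Real.sqrt (x^4+2))^2)^2 by ring, hw]
  nlinarith [mul_nonneg (mul_nonneg (sq_nonneg x) (sq_nonneg x)) (sq_nonneg x), sq_nonneg (x^3-x), mul_nonneg hx hx]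

lemma cont_f : Continuous fI := by
  unfold fI
  fun_prop

lemma cont_m : Continuous mI := by
  unfold mI
  apply Continuous.div (by fun_prop) (by fun_prop)
  intro x
  exact (pow_pos (wpos x) 5).ne'

lemma int_bound : IntegrableOn (fun x:ℝ => 2/(1+x^2)) (Ioi 0) := by
  have h : IntegrableOn (fun x:ℝ => (1+x^2)⁻¹) (Ioi (0:ℝ)) := integrable_inv_one_add_sq.integrableOn
  have h2 : IntegrableOn (fun x:ℝ => 2*(1+x^2)⁻¹) (Ioi (0:ℝ)) := h.const_mul 2
  exact h2.congr_fun (fun x _ => by rw [div_eq_mul_inv]) measurableSet_Ioi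

lemma int_f : IntegrableOn fI (Ioi 0) := by
  apply Integrable.mono' int_bound cont_f.aestronglyMeasurable.restrict
  filter_upwards [ae_restrict_mem measurableSet_Ioi] with x hx
  rw [Real.norm_eq_abs, abs_of_nonneg (fI_nonneg x)]
  exact fI_le x

lemma int_m : IntegrableOn mI (Ioi 0) := by
  apply Integrable.mono' int_bound cont_m.aestronglyMeasurable.restrict
  filter_upwards [ae_restrict_mem measurableSet_Ioi] with x hx
  rw [Real.norm_eq_abs, abs_of_nonneg (mI_nonneg x)]
  exact mI_le (le_of_lt hx)

noncomputable def GI (x:ℝ) : ℝ := x + x^5/5 - x^3*Real.sqrt (x^4+2)/3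
  + 2*x^7/(15*Real.sqrt (x^4+2)) - 8*x^7/(15*(Real.sqrt (x^4+2))^3)
lemma GI_deriv (x:ℝ) : HasDerivAt GI (fI x - (32/5)*mI x) x := by
  have hwp := wpos x
  have hw := wsq x
  have hs : HasDerivAt (fun y:ℝ => Real.sqrt (y^4+2)) (4*x^3/(2*Real.sqrt (x^4+2))) x := by
    have h1 : HasDerivAt (fun y:ℝ => y^4+2) (4*x^3) x := by
      simpa using ((hasDerivAt_pow 4 x).add_const 2)
    exact h1.sqrt (spos x).ne'
  have h1 : HasDerivAt (fun y:ℝ => y) 1 x := hasDerivAt_id x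
  have h2 : HasDerivAt (fun y:ℝ => y^5/5) (5*x^4/5) x := (hasDerivAt_pow 5 x).div_const 5
  have h3 : HasDerivAt (fun y:ℝ => y^3*Real.sqrt (y^4+2)/3)
      ((3*x^2*Real.sqrt (x^4+2) + x^3*(4*x^3/(2*Real.sqrt (x^4+2))))/3) x :=
    (((hasDerivAt_pow 3 x).mul hs).div_const 3)
  have h4 : HasDerivAt (fun y:ℝ => 2*y^7/(15*Real.sqrt (y^4+2)))
      ((2*(7*x^6)*(15*Real.sqrt (x^4+2)) - 2*x^7*(15*(4*x^3/(2*Real.sqrt (x^4+2)))))/(15*Real.sqrt (x^4+2))^2) x := by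
    exact (((hasDerivAt_pow 7 x).const_mul 2).div ((hs.const_mul 15)) (by positivity))
  have h5 : HasDerivAt (fun y:ℝ => 8*y^7/(15*(Real.sqrt (y^4+2))^3))
      ((8*(7*x^6)*(15*(Real.sqrt (x^4+2))^3) - 8*x^7*(15*(3*(Real.sqrt (x^4+2))^2*(4*x^3/(2*Real.sqrt (x^4+2))))))/(15*(Real.sqrt (x^4+2))^3)^2) x := by
    have hcube : HasDerivAt (fun y:ℝ => (Real.sqrt (y^4+2))^3)
        (3*(Real.sqrt (x^4+2))^2*(4*x^3/(2*Real.sqrt (x^4+2)))) x := by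
      exact (hs.pow 3).congr_deriv (by norm_num)
    exact (((hasDerivAt_pow 7 x).const_mul 8).div (hcube.const_mul 15) (by positivity))
  have H := (((h1.add h2).sub h3).add h4).sub h5
  have : GI = fun y:ℝ => y + y^5/5 - y^3*Real.sqrt (y^4+2)/3
      + 2*y^7/(15*Real.sqrt (y^4+2)) - 8*y^7/(15*(Real.sqrt (y^4+2))^3) := rfl
  rw [this]
  refine H.congr_deriv ?_
  symm
  unfold fI mI
  set w := Real.sqrt (x^4+2) with hwdef
  field_simp
  ring_nf
  linear_combination (1440*x^6 - 120*w^2*x^6) * hw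

lemma GI_bounds {x:ℝ} (hx1 : 1 ≤ x) : 0 ≤ GI x ∧ GI x ≤ 5*(x^3)⁻¹ := by
  have hx0 : (0:ℝ) < x := lt_of_lt_of_le one_pos hx1
  set w := Real.sqrt (x^4+2) with hwdef
  have hwp : 0 < w := wpos x
  have hw : w^2 = x^4+2 := wsq x
  have hwge : x^2 ≤ w := wge x
  have hwle : w ≤ x^2+1 := by
    rw [hwdef, show x^2+1 = Real.sqrt ((x^2+1)^2) by rw [Real.sqrt_sq (by positivity)]]
    exact Real.sqrt_le_sqrt (by nlinarith)
  have e1 : w^3 = w*(x^4+2) := by rw [pow_succ, pow_succ, pow_one, ← pow_two, hw]; ring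
  have e3 : w^4 = (x^4+2)^2 := by rw [show w^4 = (w^2)^2 by ring, hw]
  have hGId : GI x = x*(1/(1+x^4+x^2*w))/3 + 2*(x*(2*(w+2*x^2)/(w*(w+x^2)^2)))/15
      + 8*(x*(2*(w^2+w*x^2+x^4)/(w^3*(w+x^2))))/15 := by
    have hd1 : (0:ℝ) < 1+x^4+x^2*w := by positivity
    have hd2 : (0:ℝ) < w+x^2 := by positivity
    rw [GI]
    rw [← hwdef]
    field_simp
    ring_nf
    linear_combination (120*x^6 + 120*x^10 + 240*w*x^4 + 360*w*x^8 + 300*w^2*x^2 + 510*w^2*x^6 - 30*w^2*x^10 + 150*w^3 + 420*w^3*x^4 - 135*w^3*x^8 + 150*w^4*x^2 - 180*w^4*x^6 - 75*w^5*x^4) * hw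
  have b1 : x*(1/(1+x^4+x^2*w)) ≤ 1/x^3 := by
    rw [mul_one_div, div_le_div_iff₀ (by positivity) (by positivity)]
    nlinarith [mul_nonneg (mul_nonneg hx0.le hx0.le) hwp.le]
  have b2 : x*(2*(w+2*x^2)/(w*(w+x^2)^2)) ≤ 2/x^3 := by
    rw [mul_div_assoc', div_le_div_iff₀ (by positivity) (by positivity)]
    nlinarith [e1, hw, hwge, hwp.le, mul_pos hwp hx0]
  have b3 : x*(2*(w^2+w*x^2+x^4)/(w^3*(w+x^2))) ≤ 7/x^3 := by
    rw [mul_div_assoc', div_le_div_iff₀ (by positivity) (by positivity)]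
    nlinarith [e1, e3, hw, hwge, hwle, hwp.le, sq_nonneg (x^2-1), sq_nonneg (x^4-x^2)]
  have n1 : 0 ≤ x*(1/(1+x^4+x^2*w)) := by positivity
  have n2 : 0 ≤ x*(2*(w+2*x^2)/(w*(w+x^2)^2)) := by positivity
  have n3 : 0 ≤ x*(2*(w^2+w*x^2+x^4)/(w^3*(w+x^2))) := by positivity
  have ht : (0:ℝ) ≤ 1/x^3 := by positivity
  constructor
  · rw [hGId]
    generalize x * (1/(1+x^4+x^2*w)) = A1 at b1 n1 ⊢
    generalize x * (2*(w+2*x^2)/(w*(w+x^2)^2)) = A2 at b2 n2 ⊢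
    generalize x * (2*(w^2+w*x^2+x^4)/(w^3*(w+x^2))) = A3 at b3 n3 ⊢
    linarith
  · rw [hGId, show (5:ℝ)*(x^3)⁻¹ = 5*(1/x^3) by rw [one_div]]
    rw [show (2:ℝ)/x^3 = 2*(1/x^3) by ring] at b2
    rw [show (7:ℝ)/x^3 = 7*(1/x^3) by ring] at b3
    generalize (1:ℝ)/x^3 = t at b1 b2 b3 ht ⊢
    generalize x * (1/(1+x^4+x^2*w)) = A1 at b1 n1 ⊢
    generalize x * (2*(w+2*x^2)/(w*(w+x^2)^2)) = A2 at b2 n2 ⊢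
    generalize x * (2*(w^2+w*x^2+x^4)/(w^3*(w+x^2))) = A3 at b3 n3 ⊢
    linarith

lemma GI_tendsto : Tendsto GI atTop (nhds 0) := by
  have hp : Tendsto (fun x:ℝ => x^3) atTop atTop := tendsto_pow_atTop (by norm_num)
  have hinv : Tendsto (fun x:ℝ => (x^3)⁻¹) atTop (nhds 0) := tendsto_inv_atTop_zero.comp hp
  have h5 : Tendsto (fun x:ℝ => 5*(x^3)⁻¹) atTop (nhds (5*0)) := hinv.const_mul 5
  rw [mul_zero] at h5
  refine tendsto_of_tendsto_of_tendsto_of_le_of_le' tendsto_const_nhds h5 ?_ ?_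
  · filter_upwards [eventually_ge_atTop (1:ℝ)] with x hx using (GI_bounds hx).1
  · filter_upwards [eventually_ge_atTop (1:ℝ)] with x hx using (GI_bounds hx).2

lemma key_eq : ∫ x in Ioi (0:ℝ), fI x = (32/5) * ∫ x in Ioi (0:ℝ), mI x := by
  have hint : IntegrableOn (fun x => fI x - (32/5)*mI x) (Ioi (0:ℝ)) :=
    int_f.sub (int_m.const_mul _)
  have h0 : (∫ x in Ioi (0:ℝ), (fI x - (32/5)*mI x)) = 0 - GI 0 := by
    refine integral_Ioi_of_hasDerivAt_of_tendsto' (fun x _ => GI_deriv x) hint GI_tendsto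
  have hG0 : GI 0 = 0 := by
    simp [GI]
  rw [hG0, zero_sub, neg_zero] at h0
  have := integral_sub int_f (int_m.const_mul (32/5))
  rw [h0] at this
  have h2 : (∫ x in Ioi (0:ℝ), (32/5)*mI x) = (32/5) * ∫ x in Ioi (0:ℝ), mI x :=
    integral_const_mul _ _
  linarith [this, h2]

lemma mI_rpow (x:ℝ) : mI x = x^6 / (x^4+2)^((5:ℝ)/2) := by
  rw [mI]
  congr 1
  rw [Real.sqrt_eq_rpow, ← Real.rpow_natCast ((x^4+2)^((1:ℝ)/2)) 5,
    ← Real.rpow_mul (spos x).le]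
  norm_num

lemma phi_deriv (x:ℝ) : HasDerivAt (fun y:ℝ => y^4/(y^4+2)) (8*x^3/(x^4+2)^2) x := by
  have h1 : HasDerivAt (fun y:ℝ => y^4) (4*x^3) x := by simpa using hasDerivAt_pow 4 x
  have h2 : HasDerivAt (fun y:ℝ => y^4+2) (4*x^3) x := h1.add_const 2
  have := h1.div h2 (spos x).ne'
  refine this.congr_deriv ?_
  congr 1
  ring

lemma phi_image : (fun x:ℝ => x^4/(x^4+2)) '' (Ioi 0) = Ioo 0 1 := by
  ext t
  constructor
  · rintro ⟨x, hx, rfl⟩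
    have hx0 : (0:ℝ) < x := hx
    constructor
    · exact div_pos (by positivity) (spos x)
    · rw [div_lt_one (spos x)]; linarith
  · rintro ⟨ht0, ht1⟩
    have h1t : (0:ℝ) < 1 - t := by linarith
    have ha : (0:ℝ) < 2*t/(1-t) := by positivity
    refine ⟨(2*t/(1-t))^((1:ℝ)/4), ?_, ?_⟩
    · exact Real.rpow_pos_of_pos ha _
    · have hx4 : ((2*t/(1-t))^((1:ℝ)/4))^(4:ℕ) = 2*t/(1-t) := by
        rw [← Real.rpow_natCast (((2*t/(1-t))^((1:ℝ)/4))) 4, ← Real.rpow_mul ha.le]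
        norm_num
      simp only [hx4]
      field_simp
      ring

lemma phi_inj : InjOn (fun x:ℝ => x^4/(x^4+2)) (Ioi 0) := by
  have : StrictMonoOn (fun x:ℝ => x^4/(x^4+2)) (Ioi 0) := by
    intro a ha b hb hab
    simp only
    rw [div_lt_div_iff₀ (spos a) (spos b)]
    have ha0 : (0:ℝ) < a := ha
    have h4 : a^4 < b^4 := pow_lt_pow_left₀ hab ha0.le (by norm_num)
    nlinarith
  exact this.injOn

lemma subst_eq : ∫ t in Ioo (0:ℝ) 1, t^((3:ℝ)/4) * (1-t)^(-((1:ℝ)/4))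
    = 8 * 2^(-((1:ℝ)/4)) * ∫ x in Ioi (0:ℝ), mI x := by
  rw [← phi_image,
    integral_image_eq_integral_abs_deriv_smul measurableSet_Ioi
      (fun x _ => (phi_deriv x).hasDerivWithinAt) phi_inj]
  rw [← integral_const_mul]
  refine setIntegral_congr_fun measurableSet_Ioi (fun x hx => ?_)
  have hx0 : (0:ℝ) < x := hx
  have hs : (0:ℝ) < x^4+2 := spos x
  have h1 : |8*x^3/(x^4+2)^2| = 8*x^3/(x^4+2)^2 := abs_of_pos (by positivity)
  have hx43 : (x^4)^((3:ℝ)/4) = x^3 := by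
    rw [← Real.rpow_natCast x 4, ← Real.rpow_mul hx0.le]
    norm_num
  have h2 : (x^4/(x^4+2))^((3:ℝ)/4) = x^3 / (x^4+2)^((3:ℝ)/4) := by
    rw [Real.div_rpow (by positivity) hs.le, hx43]
  have h3 : 1 - x^4/(x^4+2) = 2/(x^4+2) := by field_simp; ring
  have h4 : ((2:ℝ)/(x^4+2))^(-((1:ℝ)/4)) = 2^(-((1:ℝ)/4)) * (x^4+2)^((1:ℝ)/4) := by
    rw [Real.div_rpow (by norm_num) hs.le, Real.rpow_neg hs.le, div_eq_mul_inv, inv_inv]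
  have hsq : (x^4+2)^2 = (x^4+2)^((2:ℝ)) := by
    rw [← Real.rpow_natCast (x^4+2) 2]; norm_num
  rw [smul_eq_mul, h1, h2, h3, h4, mI_rpow, hsq]
  have hne : ∀ r:ℝ, (x^4+2)^(r:ℝ) ≠ 0 := fun r => (Real.rpow_pos_of_pos hs r).ne'
  have m1 : (x^4+2)^((1:ℝ)/4)*(x^4+2)^((5:ℝ)/2) = (x^4+2)^((11:ℝ)/4) := by
    rw [← Real.rpow_add hs]; norm_num
  have m2 : (x^4+2)^((2:ℝ))*(x^4+2)^((3:ℝ)/4) = (x^4+2)^((11:ℝ)/4) := by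
    rw [← Real.rpow_add hs]; norm_num
  generalize (2:ℝ)^(-((1:ℝ)/4)) = Q
  field_simp
  linear_combination Q * m1 - Q * m2

lemma betaval : ∫ t in Ioo (0:ℝ) 1, t^((3:ℝ)/4) * (1-t)^(-((1:ℝ)/4))
    = Real.Gamma (7/4) * Real.Gamma (3/4) / Real.Gamma (5/2) := by
  have h1 : (∫ t in Ioo (0:ℝ) 1, t^((3:ℝ)/4) * (1-t)^(-((1:ℝ)/4)))
      = ∫ t in (0:ℝ)..1, t^((3:ℝ)/4) * (1-t)^(-((1:ℝ)/4)) := by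
    rw [intervalIntegral.integral_of_le zero_le_one, integral_Ioc_eq_integral_Ioo]
  have h2 : Complex.betaIntegral (7/4) (3/4)
      = ((∫ t in (0:ℝ)..1, t^((3:ℝ)/4) * (1-t)^(-((1:ℝ)/4)) : ℝ) : ℂ) := by
    rw [Complex.betaIntegral, ← intervalIntegral.integral_ofReal]
    refine intervalIntegral.integral_congr (fun x hx => ?_)
    rw [uIcc_of_le zero_le_one] at hx
    obtain ⟨hx0, hx1⟩ := hx
    rw [Complex.ofReal_mul]
    rw [Complex.ofReal_cpow hx0, Complex.ofReal_cpow (by linarith : (0:ℝ) ≤ 1-x)]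
    push_cast
    norm_num
  have hbeta := Complex.Gamma_mul_Gamma_eq_betaIntegral
    (s := 7/4) (t := 3/4) (by norm_num [Complex.ofReal_re]) (by norm_num)
  have hsum : (7/4 : ℂ) + 3/4 = ((5/2:ℝ):ℂ) := by norm_num
  have h74 : (7/4 : ℂ) = ((7/4:ℝ):ℂ) := by norm_num
  have h34 : (3/4 : ℂ) = ((3/4:ℝ):ℂ) := by norm_num
  rw [hsum, h2] at hbeta
  rw [h74, h34, Complex.Gamma_ofReal, Complex.Gamma_ofReal, Complex.Gamma_ofReal] at hbeta
  have hG : Real.Gamma (5/2) ≠ 0 := (Real.Gamma_pos_of_pos (by norm_num)).ne'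
  rw [h1, eq_div_iff hG]
  rw [← Complex.ofReal_mul, ← Complex.ofReal_mul] at hbeta
  have hreal := Complex.ofReal_inj.mp hbeta
  rw [mul_comm]
  convert hreal.symm using 2

lemma final_alg (K : ℝ)
    (hKey : 8*2^(-((1:ℝ)/4))*K = Real.Gamma (7/4)*Real.Gamma (3/4)/Real.Gamma (5/2)) :
    (2/π : ℝ)^((3:ℝ)/4)*((32/5)*K)
      = 2^((3:ℝ)/2)*Real.Gamma (3/4)/(5*π^((1:ℝ)/4)*Real.Gamma (5/4)) := by
  have hπ := Real.pi_pos
  have hc : 0 < Real.Gamma (3/4) := Real.Gamma_pos_of_pos (by norm_num)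
  set c := Real.Gamma (3/4) with hcdef
  have r5 : Real.sqrt 2 * Real.sqrt 2 = 2 := Real.mul_self_sqrt (by norm_num)
  have g74 : Real.Gamma (7/4) = (3/4)*c := by
    rw [show (7/4:ℝ) = 3/4+1 by norm_num, Real.Gamma_add_one (by norm_num), hcdef]
  have g52 : Real.Gamma (5/2) = (3/4)*Real.sqrt π := by
    rw [show (5/2:ℝ) = 3/2+1 by norm_num, Real.Gamma_add_one (by norm_num),
      show (3/2:ℝ) = 1/2+1 by norm_num, Real.Gamma_add_one (by norm_num),
      Real.Gamma_one_half_eq]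
    ring
  have g14 : Real.Gamma (1/4) * c = Real.sqrt 2 * π := by
    have h := Real.Gamma_mul_Gamma_one_sub (1/4)
    rw [show (1:ℝ) - 1/4 = 3/4 by norm_num, ← hcdef] at h
    rw [h, show π * (1/4:ℝ) = π/4 by ring, Real.sin_pi_div_four]
    rw [div_div_eq_mul_div, div_eq_iff (by positivity)]
    linear_combination (-π) * r5
  have g54 : Real.Gamma (5/4) = (1/4)*Real.Gamma (1/4) := by
    rw [show (5/4:ℝ) = 1/4+1 by norm_num, Real.Gamma_add_one (by norm_num)]
  have h14 : 0 < Real.Gamma (1/4) := Real.Gamma_pos_of_pos (by norm_num)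
  have hGval : Real.Gamma (1/4) = 2^((1:ℝ)/2)*π/c := by
    rw [eq_div_iff hc.ne', ← Real.sqrt_eq_rpow]
    exact g14
  have hsπ : (0:ℝ) < Real.sqrt π := by positivity
  have h2m : (0:ℝ) < 2^(-((1:ℝ)/4)) := Real.rpow_pos_of_pos two_pos _
  have hq : (2:ℝ)^(-((1:ℝ)/4)) * 2^((1:ℝ)/4) = 1 := by
    rw [← Real.rpow_add two_pos]; norm_num
  have hKval : K = 2^((1:ℝ)/4)*c^2/(8*π^((1:ℝ)/2)) := by
    rw [g74, g52] at hKey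
    field_simp at hKey
    rw [show π^((1:ℝ)/2) = Real.sqrt π by rw [Real.sqrt_eq_rpow],
      eq_div_iff (show (8:ℝ)*Real.sqrt π ≠ 0 by positivity)]
    linear_combination ((2:ℝ)^((1:ℝ)/4)) * hKey - 8*K*Real.sqrt π*hq
  have l2 : (2:ℝ)^((3:ℝ)/4)*2^((1:ℝ)/4)*2^((1:ℝ)/2) = 2^((3:ℝ)/2) := by
    rw [← Real.rpow_add two_pos, ← Real.rpow_add two_pos]; norm_num
  have lpi : π^((1:ℝ)/4)*π^((1:ℝ)) = π^((3:ℝ)/4)*π^((1:ℝ)/2) := by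
    rw [← Real.rpow_add hπ, ← Real.rpow_add hπ]; norm_num
  rw [Real.rpow_one] at lpi
  have hmain : (2:ℝ)^((3:ℝ)/4)*2^((1:ℝ)/4)*(π^((1:ℝ)/4)*2^((1:ℝ)/2)*π)
      = 2^((3:ℝ)/2)*(π^((3:ℝ)/4)*π^((1:ℝ)/2)) := by
    linear_combination (π^((1:ℝ)/4)*π) * l2 + (2:ℝ)^((3:ℝ)/2) * lpi
  have e1 : (2/π:ℝ)^((3:ℝ)/4) = 2^((3:ℝ)/4) / π^((3:ℝ)/4) := by
    rw [Real.div_rpow (by norm_num : (0:ℝ) ≤ 2) hπ.le]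
  rw [hKval, g54, hGval, e1]
  have hp34 : (0:ℝ) < π^((3:ℝ)/4) := Real.rpow_pos_of_pos hπ _
  have hp14 : (0:ℝ) < π^((1:ℝ)/4) := Real.rpow_pos_of_pos hπ _
  have hp12 : (0:ℝ) < π^((1:ℝ)/2) := Real.rpow_pos_of_pos hπ _
  have h212 : (0:ℝ) < (2:ℝ)^((1:ℝ)/2) := Real.rpow_pos_of_pos two_pos _
  field_simp
  linear_combination 32 * hmain

theorem foldy_constant_value :
    ((2 / π : ℝ) ^ ((3 : ℝ) / 4) *
        ∫ x in Set.Ioi (0 : ℝ), (1 + x ^ 4 - x ^ 2 * Real.sqrt (x ^ 4 + 2))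
      = 2 ^ ((3 : ℝ) / 2) * Real.Gamma (3 / 4)
          / (5 * π ^ ((1 : ℝ) / 4) * Real.Gamma (5 / 4))) ∧
    (∀ x ∈ Set.Ioi (0 : ℝ), 0 ≤ 1 + x ^ 4 - x ^ 2 * Real.sqrt (x ^ 4 + 2)) ∧
    IntegrableOn (fun x : ℝ => 1 + x ^ 4 - x ^ 2 * Real.sqrt (x ^ 4 + 2))
      (Set.Ioi 0) := by
  refine ⟨?_, fun x _ => fI_nonneg x, int_f⟩
  have hI : (∫ x in Set.Ioi (0:ℝ), (1 + x ^ 4 - x ^ 2 * Real.sqrt (x ^ 4 + 2)))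
      = ∫ x in Set.Ioi (0:ℝ), fI x := rfl
  rw [hI, key_eq]
  have hKey : 8*2^(-((1:ℝ)/4)) * (∫ x in Set.Ioi (0:ℝ), mI x)
      = Real.Gamma (7/4)*Real.Gamma (3/4)/Real.Gamma (5/2) := by
    rw [← subst_eq, betaval]
  exact final_alg _ hKey
end

section
/- Let A be an N×N Hermitian matrix, and for k = 0,…,N−1 let A^k be the matrix consisting of the k-th supra- and infra-diagonals of A. Let ψ ∈ ℂ^N be a unit vector, d_k = (ψ, A^k ψ), and λ = (ψ, Aψ) = Σ_k d_k. Then for every positive integer M ≤ N there exist n ∈ [0, N−M] and a unit vector φ ∈ ℂ^N supported on indices n+1,…,n+M such that (φ, Aφ) ≤ λ + (C/M²)Σ_{k=1}^{M−1} k²|d_k| + C Σ_{k=M}^{N−1} |d_k|, for a universal constant C > 0. -/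
open Matrix

open Finset


noncomputable def locF (M : ℕ) (m : ℤ) : ℝ := max (((m:ℝ)+1) * ((M:ℝ) - (m:ℝ))) 0

noncomputable def locG (M : ℕ) (k : ℤ) : ℝ :=
  ∑ m ∈ Finset.Ico (0:ℤ) (M:ℤ), locF M m * locF M (m - k)

lemma locF_nonneg (M : ℕ) (m : ℤ) : 0 ≤ locF M m := le_max_right _ _

lemma locF_eq_zero (M : ℕ) {m : ℤ} (h : m < 0 ∨ (M:ℤ) ≤ m) : locF M m = 0 := by
  have : ((m:ℝ)+1) * ((M:ℝ) - (m:ℝ)) ≤ 0 := by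
    rcases h with h | h
    · have h1 : (m:ℝ) + 1 ≤ 0 := by
        have : ((m+1 : ℤ) : ℝ) ≤ ((0:ℤ) : ℝ) := by exact_mod_cast (by omega : m + 1 ≤ 0)
        push_cast at this; linarith
      have h2 : (0:ℝ) ≤ (M:ℝ) - m := by
        have hm : (m:ℝ) ≤ 0 := by linarith
        have hM : (0:ℝ) ≤ (M:ℝ) := by positivity
        linarith
      nlinarith
    · have h1 : (M:ℝ) ≤ (m:ℝ) := by exact_mod_cast h
      have h2 : (0:ℝ) ≤ (m:ℝ)+1 := by
        have : (0:ℝ) ≤ (M:ℝ) := by positivity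
        linarith
      nlinarith
  rw [locF]; exact max_eq_right this

lemma locF_eq (M : ℕ) {m : ℤ} (h0 : 0 ≤ m) (h1 : m < (M:ℤ)) :
    locF M m = ((m:ℝ)+1) * ((M:ℝ) - (m:ℝ)) := by
  have ha : (0:ℝ) ≤ (m:ℝ) := by exact_mod_cast h0
  have hb : (m:ℝ) + 1 ≤ (M:ℝ) := by
    have : ((m+1:ℤ):ℝ) ≤ ((M:ℤ):ℝ) := by exact_mod_cast (by omega : m + 1 ≤ (M:ℤ))
    push_cast at this; linarith
  have : (0:ℝ) ≤ ((m:ℝ)+1) * ((M:ℝ) - (m:ℝ)) := by nlinarith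
  rw [locF]; exact max_eq_left this

lemma locF_mul_eq_zero_left (M : ℕ) {m : ℤ} (k : ℤ) (h : m ∉ Finset.Ico (0:ℤ) (M:ℤ)) :
    locF M m * locF M (m - k) = 0 := by
  rw [Finset.mem_Ico, not_and_or, not_le, not_lt] at h
  rw [locF_eq_zero M h, zero_mul]

lemma locF_mul_eq_zero_right (M : ℕ) {m : ℤ} (k : ℤ) (h : m ∉ Finset.Ico k ((M:ℤ)+k)) :
    locF M m * locF M (m - k) = 0 := by
  rw [Finset.mem_Ico, not_and_or, not_le, not_lt] at h
  have : m - k < 0 ∨ (M:ℤ) ≤ m - k := by omega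
  rw [locF_eq_zero M this, mul_zero]

lemma locG_ext (M : ℕ) (k : ℤ) {a b : ℤ} (ha : a ≤ 0) (hb : (M:ℤ) ≤ b) :
    ∑ m ∈ Finset.Ico a b, locF M m * locF M (m - k) = locG M k := by
  rw [locG]
  symm
  apply Finset.sum_subset (Finset.Ico_subset_Ico ha hb)
  intro m _ hm
  exact locF_mul_eq_zero_left M k hm

lemma locG_shift (M : ℕ) (k : ℤ) :
    locG M k = ∑ m ∈ Finset.Ico k ((M:ℤ)+k), locF M m * locF M (m - k) := by
  rw [← locG_ext M k (a := min 0 k) (b := max (M:ℤ) ((M:ℤ)+k)) (min_le_left _ _) (le_max_left _ _)]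
  symm
  apply Finset.sum_subset (Finset.Ico_subset_Ico (min_le_right _ _) (le_max_right _ _))
  intro m _ hm
  exact locF_mul_eq_zero_right M k hm

lemma locG_symm (M : ℕ) (k : ℤ) : locG M (-k) = locG M k := by
  rw [locG_shift M k,
    show Finset.Ico k ((M:ℤ)+k) = (Finset.Ico (0:ℤ) (M:ℤ)).map (addRightEmbedding k) by
      rw [Finset.map_add_right_Ico, zero_add],
    Finset.sum_map]
  simp only [addRightEmbedding_apply, add_sub_cancel_right]
  rw [locG]
  apply Finset.sum_congr rfl
  intro m _
  rw [sub_neg_eq_add, mul_comm]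

lemma locG_zero_of_ge (M : ℕ) {k : ℤ} (h : (M:ℤ) ≤ k) : locG M k = 0 := by
  rw [locG]
  apply Finset.sum_eq_zero
  intro m hm
  rw [Finset.mem_Ico] at hm
  have hz := locF_eq_zero M (m := m - k) (Or.inl (by omega))
  rw [hz, mul_zero]

lemma locG_abs (M : ℕ) (k : ℤ) : locG M k = locG M (k.natAbs) := by
  rcases Int.natAbs_eq k with h | h
  · rw [← h]
  · nth_rewrite 1 [h]; exact locG_symm M _

lemma loc_sum_int_eq (b : ℕ) (h : ℤ → ℝ) :
    ∑ m ∈ Finset.Ico (0:ℤ) (b:ℤ), h m = ∑ m ∈ Finset.range b, h (m:ℤ) := by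
  refine Finset.sum_nbij' (fun m => m.toNat) (fun m => (m:ℤ)) ?_ ?_ ?_ ?_ ?_
  · intro a ha; rw [Finset.mem_Ico] at ha; rw [Finset.mem_range]; omega
  · intro a ha; rw [Finset.mem_range] at ha; rw [Finset.mem_Ico]; omega
  · intro a ha; rw [Finset.mem_Ico] at ha; omega
  · intro a _; simp
  · intro a ha; rw [Finset.mem_Ico] at ha; rw [Int.toNat_of_nonneg ha.1]

lemma loc_sum_q (M b : ℕ) :
    ∑ m ∈ Finset.Ico (0:ℤ) (b:ℤ), (((m:ℝ)+1) * ((M:ℝ) - (m:ℝ)))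
      = (M:ℝ)*(b:ℝ)*((b:ℝ)+1)/2 - ((b:ℝ)-1)*(b:ℝ)*((b:ℝ)+1)/3 := by
  rw [loc_sum_int_eq]
  induction b with
  | zero => simp
  | succ b ih =>
    rw [Finset.sum_range_succ, ih]
    push_cast
    ring

lemma locG_zero_eq (M : ℕ) : locG M 0 = ∑ m ∈ Finset.Ico (0:ℤ) (M:ℤ), locF M m * locF M m := by
  rw [locG]; apply Finset.sum_congr rfl; intro m _; rw [sub_zero]

lemma loc_sum_f (M : ℕ) :
    ∑ m ∈ Finset.Ico (0:ℤ) (M:ℤ), locF M m = (M:ℝ)*((M:ℝ)+1)*((M:ℝ)+2)/6 := by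
  have : ∑ m ∈ Finset.Ico (0:ℤ) (M:ℤ), locF M m
      = ∑ m ∈ Finset.Ico (0:ℤ) (M:ℤ), (((m:ℝ)+1) * ((M:ℝ) - (m:ℝ))) := by
    apply Finset.sum_congr rfl
    intro m hm
    rw [Finset.mem_Ico] at hm
    exact locF_eq M hm.1 hm.2
  rw [this, loc_sum_q]
  ring

lemma locG_zero_lower (M : ℕ) (hM : 1 ≤ M) : (M:ℝ)^5/36 ≤ locG M 0 := by
  have hM1 : (1:ℝ) ≤ (M:ℝ) := by exact_mod_cast hM
  have hcs := Finset.sum_mul_sq_le_sq_mul_sq (Finset.Ico (0:ℤ) (M:ℤ))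
      (fun _ => (1:ℝ)) (fun m => locF M m)
  simp only [one_mul, one_pow] at hcs
  have hcard : ((Finset.Ico (0:ℤ) (M:ℤ)).card : ℝ) = (M:ℝ) := by
    rw [Int.card_Ico]; simp
  rw [Finset.sum_const, loc_sum_f] at hcs
  rw [nsmul_eq_mul, hcard] at hcs
  have hG : locG M 0 = ∑ m ∈ Finset.Ico (0:ℤ) (M:ℤ), locF M m ^ 2 := by
    rw [locG_zero_eq]; apply Finset.sum_congr rfl; intro m _; ring
  rw [← hG] at hcs
  nlinarith [sq_nonneg ((M:ℝ)^2 - 1), sq_nonneg (M:ℝ), pow_pos (lt_of_lt_of_le one_pos hM1) 5]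

lemma locG_diff (M : ℕ) (hM : 1 ≤ M) (k : ℤ) (hk0 : 0 ≤ k) (hkM : k ≤ (M:ℤ)) :
    0 ≤ locG M 0 - locG M k ∧ locG M 0 - locG M k ≤ 38*(M:ℝ)^3*(k:ℝ)^2 := by
  have hM1 : (1:ℝ) ≤ (M:ℝ) := by exact_mod_cast hM
  set R := Finset.Ico (-(M:ℤ)) (2*(M:ℤ)) with hR
  have hM0 : (0:ℤ) ≤ (M:ℤ) := by positivity
  have h1 : ∑ m ∈ R, locF M m * locF M m = locG M 0 := by
    rw [← locG_ext M 0 (a := -(M:ℤ)) (b := 2*(M:ℤ)) (by omega) (by omega)]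
    apply Finset.sum_congr rfl; intro m _; rw [sub_zero]
  have h3 : ∑ m ∈ R, locF M m * locF M (m - k) = locG M k :=
    locG_ext M k (by omega) (by omega)
  have h2 : ∑ m ∈ R, locF M (m - k) * locF M (m - k) = locG M 0 := by
    rw [show R = (Finset.Ico (-(M:ℤ)-k) (2*(M:ℤ)-k)).map (addRightEmbedding k) by
      rw [Finset.map_add_right_Ico, show -(M:ℤ)-k+k = -(M:ℤ) by ring,
        show 2*(M:ℤ)-k+k = 2*(M:ℤ) by ring], Finset.sum_map]
    simp only [addRightEmbedding_apply, add_sub_cancel_right]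
    rw [← locG_ext M 0 (a := -(M:ℤ)-k) (b := 2*(M:ℤ)-k) (by omega) (by omega)]
    apply Finset.sum_congr rfl; intro m _; rw [sub_zero]
  have hkey : ∑ m ∈ R, (locF M m - locF M (m - k))^2 = 2*(locG M 0) - 2*(locG M k) := by
    have hexp : ∀ m ∈ R, (locF M m - locF M (m - k))^2
        = (locF M m * locF M m + locF M (m-k) * locF M (m-k)) - 2*(locF M m * locF M (m - k)) := by
      intro m _; ring
    rw [Finset.sum_congr rfl hexp, Finset.sum_sub_distrib, Finset.sum_add_distrib,
      ← Finset.mul_sum, h1, h2, h3]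
    ring
  constructor
  · have : 0 ≤ ∑ m ∈ R, (locF M m - locF M (m - k))^2 :=
      Finset.sum_nonneg (fun m _ => sq_nonneg _)
    linarith [hkey ▸ this]
  · have hterm : ∀ m ∈ R, (locF M m - locF M (m - k))^2 ≤ 25*(M:ℝ)^2*(k:ℝ)^2 := by
      intro m hm
      rw [Finset.mem_Ico] at hm
      have habs : |locF M m - locF M (m - k)|
          ≤ |(((m:ℝ)+1) * ((M:ℝ) - (m:ℝ))) - ((((m:ℤ)-k:ℤ):ℝ)+1) * ((M:ℝ) - (((m:ℤ)-k:ℤ):ℝ))| := by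
        exact abs_max_sub_max_le_abs _ _ 0
      have heq : (((m:ℝ)+1) * ((M:ℝ) - (m:ℝ))) - ((((m:ℤ)-k:ℤ):ℝ)+1) * ((M:ℝ) - (((m:ℤ)-k:ℤ):ℝ))
          = (k:ℝ) * ((M:ℝ) - 1 - 2*(m:ℝ) + (k:ℝ)) := by push_cast; ring
      rw [heq, abs_mul] at habs
      have hm1 : -(M:ℝ) ≤ (m:ℝ) := by exact_mod_cast hm.1
      have hm2 : (m:ℝ) ≤ 2*(M:ℝ) := by exact_mod_cast le_of_lt hm.2
      have hk1 : (0:ℝ) ≤ (k:ℝ) := by exact_mod_cast hk0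
      have hk2 : (k:ℝ) ≤ (M:ℝ) := by exact_mod_cast hkM
      have hMr : (0:ℝ) ≤ (M:ℝ) := by positivity
      have hbd : |(M:ℝ) - 1 - 2*(m:ℝ) + (k:ℝ)| ≤ 5*(M:ℝ) := by
        rw [abs_le]; constructor <;> linarith
      have hkk : |(k:ℝ)| = (k:ℝ) := abs_of_nonneg hk1
      rw [hkk] at habs
      have hle : |locF M m - locF M (m - k)| ≤ (k:ℝ) * (5*(M:ℝ)) := by
        calc |locF M m - locF M (m - k)| ≤ (k:ℝ) * |(M:ℝ) - 1 - 2*(m:ℝ) + (k:ℝ)| := habs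
        _ ≤ (k:ℝ) * (5*(M:ℝ)) := by apply mul_le_mul_of_nonneg_left hbd hk1
      calc (locF M m - locF M (m - k))^2 = |locF M m - locF M (m - k)|^2 := (sq_abs _).symm
        _ ≤ ((k:ℝ) * (5*(M:ℝ)))^2 := by
            apply pow_le_pow_left₀ (abs_nonneg _) hle
        _ = 25*(M:ℝ)^2*(k:ℝ)^2 := by ring
    have hsum := Finset.sum_le_card_nsmul R _ _ hterm
    rw [nsmul_eq_mul] at hsum
    have hcard : ((R.card : ℕ) : ℝ) ≤ 3*(M:ℝ) := by
      rw [hR, Int.card_Ico]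
      have : ((2*(M:ℤ) - -(M:ℤ)).toNat : ℤ) = 3*(M:ℤ) := by omega
      have h2 : ((2*(M:ℤ) - -(M:ℤ)).toNat : ℝ) = 3*(M:ℝ) := by exact_mod_cast this
      rw [h2]
    have hMk : (0:ℝ) ≤ 25*(M:ℝ)^2*(k:ℝ)^2 := by positivity
    have : ∑ m ∈ R, (locF M m - locF M (m - k))^2 ≤ 3*(M:ℝ) * (25*(M:ℝ)^2*(k:ℝ)^2) :=
      le_trans hsum (mul_le_mul_of_nonneg_right hcard hMk)
    rw [hkey] at this
    nlinarith

noncomputable def locE (N : ℕ) (A : Matrix (Fin N) (Fin N) ℂ) (ψ : Fin N → ℂ) (i j : Fin N) : ℝ :=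
  ((starRingEnd ℂ) (ψ i) * (A i j * ψ j)).re

lemma loc_dot_re (N : ℕ) (A : Matrix (Fin N) (Fin N) ℂ) (ψ : Fin N → ℂ) :
    (dotProduct (star ψ) (A.mulVec ψ)).re = ∑ i, ∑ j, locE N A ψ i j := by
  rw [dotProduct, Complex.re_sum]
  apply Finset.sum_congr rfl
  intro i _
  rw [Matrix.mulVec, dotProduct, Pi.star_apply, Finset.mul_sum, Complex.re_sum]
  rfl

lemma loc_diag_re (N : ℕ) (A : Matrix (Fin N) (Fin N) ℂ) (ψ : Fin N → ℂ) (k : ℕ) :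
    (dotProduct (star ψ)
      (Matrix.mulVec (Matrix.of fun i j : Fin N =>
        if ((i : ℤ) - (j : ℤ)).natAbs = k then A i j else 0) ψ)).re
    = ∑ i : Fin N, ∑ j : Fin N, (if ((i : ℤ) - (j : ℤ)).natAbs = k then locE N A ψ i j else 0) := by
  rw [loc_dot_re]
  apply Finset.sum_congr rfl; intro i _
  apply Finset.sum_congr rfl; intro j _
  rw [locE, locE, Matrix.of_apply]
  split
  · rfl
  · simp

lemma loc_fiber (N : ℕ) (A : Matrix (Fin N) (Fin N) ℂ) (ψ : Fin N → ℂ) (w : ℕ → ℝ) :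
    ∑ i : Fin N, ∑ j : Fin N, w (((i:ℤ)-(j:ℤ)).natAbs) * locE N A ψ i j
      = ∑ k ∈ Finset.range N, w k *
          (∑ i : Fin N, ∑ j : Fin N, (if ((i:ℤ)-(j:ℤ)).natAbs = k then locE N A ψ i j else 0)) := by
  have hswap : ∑ k ∈ Finset.range N, w k *
          (∑ i : Fin N, ∑ j : Fin N, (if ((i:ℤ)-(j:ℤ)).natAbs = k then locE N A ψ i j else 0))
      = ∑ i : Fin N, ∑ j : Fin N, ∑ k ∈ Finset.range N,
          (if ((i:ℤ)-(j:ℤ)).natAbs = k then w k * locE N A ψ i j else 0) := by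
    have h1 : ∑ k ∈ Finset.range N, w k *
          (∑ i : Fin N, ∑ j : Fin N, (if ((i:ℤ)-(j:ℤ)).natAbs = k then locE N A ψ i j else 0))
        = ∑ k ∈ Finset.range N, ∑ i : Fin N, ∑ j : Fin N,
          (if ((i:ℤ)-(j:ℤ)).natAbs = k then w k * locE N A ψ i j else 0) := by
      apply Finset.sum_congr rfl; intro k _
      rw [Finset.mul_sum]
      apply Finset.sum_congr rfl; intro i _
      rw [Finset.mul_sum]
      apply Finset.sum_congr rfl; intro j _
      rw [mul_ite, mul_zero]
    rw [h1, Finset.sum_comm]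
    apply Finset.sum_congr rfl; intro i _
    rw [Finset.sum_comm]
  rw [hswap]
  apply Finset.sum_congr rfl; intro i _
  apply Finset.sum_congr rfl; intro j _
  have hmem : (((i:ℤ)-(j:ℤ)).natAbs) ∈ Finset.range N := by
    rw [Finset.mem_range]
    have hi := i.isLt
    have hj := j.isLt
    omega
  rw [Finset.sum_eq_single_of_mem _ hmem]
  · rw [if_pos rfl]
  · intro b _ hb
    rw [if_neg (fun h => hb h.symm)]

lemma loc_window (N M : ℕ) (i j : Fin N) :
    ∑ n ∈ Finset.Ico (1-(M:ℤ)) (N:ℤ), locF M ((i:ℤ)-n) * locF M ((j:ℤ)-n)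
      = locG M ((i:ℤ)-(j:ℤ)) := by
  have hi := i.isLt
  have hrw : ∑ n ∈ Finset.Ico (1-(M:ℤ)) (N:ℤ), locF M ((i:ℤ)-n) * locF M ((j:ℤ)-n)
      = ∑ m ∈ Finset.Ico ((i:ℤ)+1-(N:ℤ)) ((i:ℤ)+(M:ℤ)), locF M m * locF M (m - ((i:ℤ)-(j:ℤ))) := by
    refine Finset.sum_nbij' (fun n => (i:ℤ) - n) (fun m => (i:ℤ) - m) ?_ ?_ ?_ ?_ ?_
    · intro a ha; rw [Finset.mem_Ico] at ha ⊢; omega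
    · intro a ha; rw [Finset.mem_Ico] at ha ⊢; omega
    · intro a _; omega
    · intro a _; omega
    · intro a _
      congr 2
      omega
  rw [hrw]
  exact locG_ext M _ (by omega) (by omega)

noncomputable def locP (N M : ℕ) (ψ : Fin N → ℂ) (n : ℤ) : ℝ :=
  ∑ i : Fin N, (locF M ((i:ℤ)-n))^2 * ‖ψ i‖^2

noncomputable def locQ (N M : ℕ) (A : Matrix (Fin N) (Fin N) ℂ) (ψ : Fin N → ℂ) (n : ℤ) : ℝ :=
  ∑ i : Fin N, ∑ j : Fin N, (locF M ((i:ℤ)-n) * locF M ((j:ℤ)-n)) * locE N A ψ i j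

lemma loc_sumP (N M : ℕ) (ψ : Fin N → ℂ) (hψ : ∑ i, ‖ψ i‖ ^ 2 = 1) :
    ∑ n ∈ Finset.Ico (1-(M:ℤ)) (N:ℤ), locP N M ψ n = locG M 0 := by
  unfold locP
  rw [Finset.sum_comm]
  have : ∀ i : Fin N, ∑ n ∈ Finset.Ico (1-(M:ℤ)) (N:ℤ),
      (locF M ((i:ℤ)-n))^2 * ‖ψ i‖^2 = locG M 0 * ‖ψ i‖^2 := by
    intro i
    rw [← Finset.sum_mul]
    congr 1
    rw [show locG M 0 = locG M ((i:ℤ)-(i:ℤ)) by norm_num, ← loc_window N M i i]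
    apply Finset.sum_congr rfl; intro n _; ring
  rw [Finset.sum_congr rfl (fun i _ => this i), ← Finset.mul_sum, hψ, mul_one]

lemma loc_sumQ (N M : ℕ) (A : Matrix (Fin N) (Fin N) ℂ) (ψ : Fin N → ℂ) :
    ∑ n ∈ Finset.Ico (1-(M:ℤ)) (N:ℤ), locQ N M A ψ n
      = ∑ i : Fin N, ∑ j : Fin N, locG M ((i:ℤ)-(j:ℤ)) * locE N A ψ i j := by
  unfold locQ
  rw [Finset.sum_comm]
  apply Finset.sum_congr rfl; intro i _
  rw [Finset.sum_comm]
  apply Finset.sum_congr rfl; intro j _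
  rw [← Finset.sum_mul, loc_window]

noncomputable def locDab (N : ℕ) (A : Matrix (Fin N) (Fin N) ℂ) (ψ : Fin N → ℂ) (k : ℕ) : ℝ :=
  ‖dotProduct (star ψ)
    (Matrix.mulVec (Matrix.of fun i j : Fin N =>
      if ((i : ℤ) - (j : ℤ)).natAbs = k then A i j else 0) ψ)‖

lemma loc_sumQ_bound (N M : ℕ) (hM : 0 < M) (hMN : M ≤ N)
    (A : Matrix (Fin N) (Fin N) ℂ) (ψ : Fin N → ℂ) :
    ∑ n ∈ Finset.Ico (1-(M:ℤ)) (N:ℤ), locQ N M A ψ n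
      ≤ locG M 0 * ((∑ i : Fin N, ∑ j : Fin N, locE N A ψ i j)
          + (1500/(M:ℝ)^2) * ∑ k ∈ Finset.Ico 1 M, (k:ℝ)^2 * locDab N A ψ k
          + 1500 * ∑ k ∈ Finset.Ico M N, locDab N A ψ k) := by
  set S := locG M 0 with hSdef
  have hM1 : (1:ℝ) ≤ (M:ℝ) := by exact_mod_cast hM
  have hS : (M:ℝ)^5/36 ≤ S := locG_zero_lower M hM
  have hSpos : (0:ℝ) < S := lt_of_lt_of_le (by positivity) hS
  set E : ℕ → ℝ := fun k =>
    ∑ i : Fin N, ∑ j : Fin N, (if ((i:ℤ)-(j:ℤ)).natAbs = k then locE N A ψ i j else 0) with hEdef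
  have hEabs : ∀ k, |E k| ≤ locDab N A ψ k := by
    intro k
    rw [hEdef]
    dsimp only
    rw [← loc_diag_re]
    exact Complex.abs_re_le_norm _
  -- split the double sum
  have hsplit : ∑ i : Fin N, ∑ j : Fin N, locG M ((i:ℤ)-(j:ℤ)) * locE N A ψ i j
      = S * (∑ i : Fin N, ∑ j : Fin N, locE N A ψ i j)
        + ∑ k ∈ Finset.range N, (locG M (k:ℤ) - S) * E k := by
    have hfib := loc_fiber N A ψ (fun k => locG M (k:ℤ) - S)
    have hL : ∑ i : Fin N, ∑ j : Fin N, locG M ((i:ℤ)-(j:ℤ)) * locE N A ψ i j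
        = ∑ i : Fin N, ∑ j : Fin N,
            ((fun k => locG M (k:ℤ) - S) (((i:ℤ)-(j:ℤ)).natAbs) * locE N A ψ i j
              + S * locE N A ψ i j) := by
      apply Finset.sum_congr rfl; intro i _
      apply Finset.sum_congr rfl; intro j _
      dsimp only
      rw [locG_abs]
      ring
    rw [hL]
    rw [Finset.sum_congr rfl (fun i _ => Finset.sum_add_distrib), Finset.sum_add_distrib, hfib]
    rw [Finset.sum_congr rfl (fun i _ => (Finset.mul_sum _ _ _).symm), ← Finset.mul_sum]
    ring
  rw [loc_sumQ, hsplit]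
  have hmain : ∑ k ∈ Finset.range N, (locG M (k:ℤ) - S) * E k
      ≤ S * ((1500/(M:ℝ)^2) * ∑ k ∈ Finset.Ico 1 M, (k:ℝ)^2 * locDab N A ψ k)
        + S * (1500 * ∑ k ∈ Finset.Ico M N, locDab N A ψ k) := by
    have hdnn : ∀ k, 0 ≤ locDab N A ψ k := fun k => norm_nonneg _
    rw [Finset.range_eq_Ico, ← Finset.sum_Ico_consecutive _ (Nat.zero_le M) hMN,
      ← Finset.sum_Ico_consecutive _ (Nat.zero_le 1) hM]
    have h0 : ∑ k ∈ Finset.Ico (0:ℕ) 1, (locG M ((k:ℕ):ℤ) - S) * E k = 0 := by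
      rw [← Finset.range_eq_Ico, Finset.sum_range_one]
      norm_num
      left; simp [hSdef]
    have hA : ∑ k ∈ Finset.Ico 1 M, (locG M (k:ℤ) - S) * E k
        ≤ S * ((1500/(M:ℝ)^2) * ∑ k ∈ Finset.Ico 1 M, (k:ℝ)^2 * locDab N A ψ k) := by
      have hcoef : 38*(M:ℝ)^3 ≤ S * (1500/(M:ℝ)^2) := by
        rw [mul_div_assoc', le_div_iff₀ (by positivity)]
        nlinarith [hS]
      calc ∑ k ∈ Finset.Ico 1 M, (locG M (k:ℤ) - S) * E k
          ≤ ∑ k ∈ Finset.Ico 1 M, S * (1500/(M:ℝ)^2) * ((k:ℝ)^2 * locDab N A ψ k) := by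
            apply Finset.sum_le_sum
            intro k hk
            rw [Finset.mem_Ico] at hk
            have hd := locG_diff M hM (k:ℤ) (by positivity) (by exact_mod_cast le_of_lt hk.2)
            have habsE := hEabs k
            have hk2 : (0:ℝ) ≤ (k:ℝ)^2 := by positivity
            calc (locG M (k:ℤ) - S) * E k ≤ |(locG M (k:ℤ) - S) * E k| := le_abs_self _
              _ = (S - locG M (k:ℤ)) * |E k| := by
                  rw [abs_mul, abs_sub_comm, abs_of_nonneg hd.1]
              _ ≤ (S - locG M (k:ℤ)) * locDab N A ψ k :=
                  mul_le_mul_of_nonneg_left habsE hd.1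
              _ ≤ (38*(M:ℝ)^3*(k:ℝ)^2) * locDab N A ψ k :=
                  mul_le_mul_of_nonneg_right hd.2 (hdnn k)
              _ ≤ S * (1500/(M:ℝ)^2) * ((k:ℝ)^2 * locDab N A ψ k) := by
                  rw [show S * (1500/(M:ℝ)^2) * ((k:ℝ)^2 * locDab N A ψ k)
                      = (S * (1500/(M:ℝ)^2) * (k:ℝ)^2) * locDab N A ψ k by ring,
                    show (38*(M:ℝ)^3*(k:ℝ)^2) * locDab N A ψ k
                      = (38*(M:ℝ)^3*(k:ℝ)^2) * locDab N A ψ k from rfl]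
                  apply mul_le_mul_of_nonneg_right _ (hdnn k)
                  apply mul_le_mul_of_nonneg_right hcoef hk2
        _ = S * ((1500/(M:ℝ)^2) * ∑ k ∈ Finset.Ico 1 M, (k:ℝ)^2 * locDab N A ψ k) := by
            simp only [Finset.mul_sum]
            apply Finset.sum_congr rfl; intro k _; ring
    have hB : ∑ k ∈ Finset.Ico M N, (locG M (k:ℤ) - S) * E k
        ≤ S * (1500 * ∑ k ∈ Finset.Ico M N, locDab N A ψ k) := by
      calc ∑ k ∈ Finset.Ico M N, (locG M (k:ℤ) - S) * E k
          ≤ ∑ k ∈ Finset.Ico M N, S * (1500 * locDab N A ψ k) := by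
            apply Finset.sum_le_sum
            intro k hk
            rw [Finset.mem_Ico] at hk
            have hg0 : locG M (k:ℤ) = 0 := locG_zero_of_ge M (by exact_mod_cast hk.1)
            rw [hg0, zero_sub, neg_mul]
            have h1 : -(S * E k) ≤ S * |E k| := by
              rw [← mul_neg]
              exact mul_le_mul_of_nonneg_left (neg_le_abs _) hSpos.le
            refine h1.trans ?_
            apply mul_le_mul_of_nonneg_left _ hSpos.le
            calc |E k| ≤ locDab N A ψ k := hEabs k
              _ ≤ 1500 * locDab N A ψ k := by nlinarith [hdnn k]
        _ = S * (1500 * ∑ k ∈ Finset.Ico M N, locDab N A ψ k) := by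
            simp only [Finset.mul_sum]
    linarith
  calc S * (∑ i : Fin N, ∑ j : Fin N, locE N A ψ i j)
        + ∑ k ∈ Finset.range N, (locG M (k:ℤ) - S) * E k
      ≤ S * (∑ i : Fin N, ∑ j : Fin N, locE N A ψ i j)
        + (S * ((1500/(M:ℝ)^2) * ∑ k ∈ Finset.Ico 1 M, (k:ℝ)^2 * locDab N A ψ k)
          + S * (1500 * ∑ k ∈ Finset.Ico M N, locDab N A ψ k)) := by linarith
    _ = S * ((∑ i : Fin N, ∑ j : Fin N, locE N A ψ i j)
          + (1500/(M:ℝ)^2) * ∑ k ∈ Finset.Ico 1 M, (k:ℝ)^2 * locDab N A ψ k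
          + 1500 * ∑ k ∈ Finset.Ico M N, locDab N A ψ k) := by ring

lemma loc_exists (N M : ℕ) (hM : 0 < M) (hMN : M ≤ N)
    (A : Matrix (Fin N) (Fin N) ℂ) (ψ : Fin N → ℂ)
    (hψ : ∑ i, ‖ψ i‖ ^ 2 = 1) :
    ∃ n ∈ Finset.Ico (1-(M:ℤ)) (N:ℤ), 0 < locP N M ψ n ∧
      locQ N M A ψ n ≤ locP N M ψ n *
        ((∑ i : Fin N, ∑ j : Fin N, locE N A ψ i j)
          + (1500/(M:ℝ)^2) * ∑ k ∈ Finset.Ico 1 M, (k:ℝ)^2 * locDab N A ψ k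
          + 1500 * ∑ k ∈ Finset.Ico M N, locDab N A ψ k) := by
  set T := Finset.Ico (1-(M:ℤ)) (N:ℤ) with hT
  set R : ℝ := (∑ i : Fin N, ∑ j : Fin N, locE N A ψ i j)
      + (1500/(M:ℝ)^2) * ∑ k ∈ Finset.Ico 1 M, (k:ℝ)^2 * locDab N A ψ k
      + 1500 * ∑ k ∈ Finset.Ico M N, locDab N A ψ k with hR
  have hM1 : (1:ℝ) ≤ (M:ℝ) := by exact_mod_cast hM
  have hS : (M:ℝ)^5/36 ≤ locG M 0 := locG_zero_lower M hM
  have hSpos : (0:ℝ) < locG M 0 := lt_of_lt_of_le (by positivity) hS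
  have hPnn : ∀ n : ℤ, 0 ≤ locP N M ψ n := by
    intro n
    apply Finset.sum_nonneg
    intro i _
    positivity
  have hQzero : ∀ n : ℤ, locP N M ψ n = 0 → locQ N M A ψ n = 0 := by
    intro n hP
    have hterm := (Finset.sum_eq_zero_iff_of_nonneg (fun i _ => by positivity)).mp hP
    apply Finset.sum_eq_zero
    intro i _
    apply Finset.sum_eq_zero
    intro j _
    have hi := hterm i (Finset.mem_univ i)
    have : locF M ((i:ℤ)-n) = 0 ∨ ψ i = 0 := by
      rcases mul_eq_zero.mp hi with h | h
      · left; exact pow_eq_zero_iff (n := 2) (by norm_num) |>.mp h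
      · right
        have := pow_eq_zero_iff (n := 2) (by norm_num) |>.mp h
        exact norm_eq_zero.mp this
    rcases this with h | h
    · rw [h, zero_mul, zero_mul]
    · rw [locE, h]
      simp
  set T' := T.filter (fun n => 0 < locP N M ψ n) with hT'
  have hT'ne : T'.Nonempty := by
    by_contra hc
    rw [Finset.not_nonempty_iff_eq_empty] at hc
    have hall : ∀ n ∈ T, locP N M ψ n = 0 := by
      intro n hn
      by_contra hne
      have hpos : 0 < locP N M ψ n := lt_of_le_of_ne (hPnn n) (Ne.symm hne)
      have : n ∈ T' := Finset.mem_filter.mpr ⟨hn, hpos⟩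
      rw [hc] at this
      exact absurd this (Finset.notMem_empty n)
    have : ∑ n ∈ T, locP N M ψ n = 0 := Finset.sum_eq_zero hall
    rw [loc_sumP N M ψ hψ] at this
    linarith
  have hsum : ∑ n ∈ T', (locQ N M A ψ n - R * locP N M ψ n) ≤ ∑ n ∈ T', (0:ℝ) := by
    rw [Finset.sum_const_zero]
    have heq : ∑ n ∈ T', (locQ N M A ψ n - R * locP N M ψ n)
        = ∑ n ∈ T, (locQ N M A ψ n - R * locP N M ψ n) := by
      apply Finset.sum_subset (Finset.filter_subset _ _)
      intro n hn hn'
      have hP0 : locP N M ψ n = 0 := by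
        by_contra hne
        exact hn' (Finset.mem_filter.mpr ⟨hn, lt_of_le_of_ne (hPnn n) (Ne.symm hne)⟩)
      rw [hP0, hQzero n hP0, mul_zero, sub_zero]
    rw [heq, Finset.sum_sub_distrib, ← Finset.mul_sum, loc_sumP N M ψ hψ]
    have := loc_sumQ_bound N M hM hMN A ψ
    rw [← hT] at this
    rw [← hR] at this
    linarith [this]
  obtain ⟨n, hnT', hn⟩ := Finset.exists_le_of_sum_le hT'ne hsum
  have hmem := Finset.mem_filter.mp hnT'
  exact ⟨n, hmem.1, hmem.2, by linarith [hn]⟩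

/-- Localization of large matrices: for a Hermitian `N×N` matrix `A` with `k`-th
supra/infra-diagonal parts `A^k`, a unit vector `ψ`, and `d_k = (ψ, A^k ψ)`, for every
`M ≤ N` there is a window of length `M` and a unit vector `φ` supported in that window
with `(φ, Aφ) ≤ (ψ, Aψ) + (C/M²) Σ_{k=1}^{M-1} k²|d_k| + C Σ_{k=M}^{N-1} |d_k|`. -/
theorem localization_of_large_matrices :
    ∃ C > (0 : ℝ), ∀ (N : ℕ) (A : Matrix (Fin N) (Fin N) ℂ), A.IsHermitian →
      ∀ ψ : Fin N → ℂ, (∑ i, ‖ψ i‖ ^ 2 = 1) →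
      ∀ M : ℕ, 0 < M → M ≤ N →
      ∃ (n : ℕ) (φ : Fin N → ℂ), n + M ≤ N ∧
        (∑ i, ‖φ i‖ ^ 2 = 1) ∧
        (∀ i : Fin N, ((i : ℕ) < n ∨ n + M ≤ (i : ℕ)) → φ i = 0) ∧
        (dotProduct (star φ) (A.mulVec φ)).re ≤
          (dotProduct (star ψ) (A.mulVec ψ)).re
            + (C / (M : ℝ) ^ 2) * ∑ k ∈ Finset.Ico 1 M, (k : ℝ) ^ 2 *
                ‖dotProduct (star ψ)
                  (Matrix.mulVec
                    (Matrix.of fun i j : Fin N =>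
                      if ((i : ℤ) - (j : ℤ)).natAbs = k then A i j else 0) ψ)‖
            + C * ∑ k ∈ Finset.Ico M N,
                ‖dotProduct (star ψ)
                  (Matrix.mulVec
                    (Matrix.of fun i j : Fin N =>
                      if ((i : ℤ) - (j : ℤ)).natAbs = k then A i j else 0) ψ)‖ := by
  refine ⟨1500, by norm_num, ?_⟩
  intro N A _hA ψ hψ M hM hMN
  obtain ⟨n, hnT, hPpos, hQle⟩ := loc_exists N M hM hMN A ψ hψ
  rw [Finset.mem_Ico] at hnT
  set c := locP N M ψ n with hc
  set r := Real.sqrt c with hrdef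
  have hrpos : 0 < r := Real.sqrt_pos.mpr hPpos
  have hr2 : r * r = c := Real.mul_self_sqrt hPpos.le
  set φ : Fin N → ℂ := fun i => ((locF M ((i:ℤ)-n) / r : ℝ) : ℂ) * ψ i with hφ
  have hNM : (0:ℤ) ≤ (N:ℤ) - (M:ℤ) := by
    have : (M:ℤ) ≤ (N:ℤ) := by exact_mod_cast hMN
    omega
  set nz : ℤ := max 0 (min n ((N:ℤ) - (M:ℤ))) with hnz
  have hnz0 : 0 ≤ nz := le_max_left _ _
  have hnzNM : nz ≤ (N:ℤ) - (M:ℤ) := max_le hNM (min_le_right _ _)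
  have hcast : (nz.toNat : ℤ) = nz := Int.toNat_of_nonneg hnz0
  refine ⟨nz.toNat, φ, by omega, ?_, ?_, ?_⟩
  · -- normalization
    have hterm : ∀ i : Fin N, ‖φ i‖^2
        = (locF M ((i:ℤ)-n))^2 * ‖ψ i‖^2 / c := by
      intro i
      rw [hφ]
      dsimp only
      rw [norm_mul, Complex.norm_real, Real.norm_eq_abs, mul_pow, sq_abs, div_pow]
      rw [show r^2 = c by rw [sq]; exact hr2]
      ring
    rw [Finset.sum_congr rfl (fun i _ => hterm i), ← Finset.sum_div]
    rw [show ∑ i : Fin N, (locF M ((i:ℤ)-n))^2 * ‖ψ i‖^2 = c from rfl]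
    exact div_self hPpos.ne'
  · -- support
    intro i hi
    have hiN := i.isLt
    have hzero : locF M ((i:ℤ)-n) = 0 := by
      apply locF_eq_zero
      rcases hi with hlt | hge
      · left
        have h1 : (i:ℤ) < nz := by omega
        have h2 : nz ≤ n := by
          rcases le_or_gt (min n ((N:ℤ)-(M:ℤ))) 0 with h | h
          · exfalso
            have hz : nz = 0 := by rw [hnz]; exact max_eq_left h
            omega
          · have hz : nz = min n ((N:ℤ)-(M:ℤ)) := by rw [hnz]; exact max_eq_right h.le
            rw [hz]; exact min_le_left _ _
        omega
      · right
        have h1 : nz + (M:ℤ) ≤ (i:ℤ) := by omega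
        rcases le_or_gt n ((N:ℤ)-(M:ℤ)) with h | h
        · rcases le_or_gt 0 n with h0 | h0
          · have hz : nz = n := by rw [hnz, min_eq_left h]; exact max_eq_right h0
            omega
          · have hz : nz = 0 := by rw [hnz, min_eq_left h]; exact max_eq_left h0.le
            omega
        · have hz : nz = (N:ℤ)-(M:ℤ) := by
            rw [hnz, min_eq_right h.le]; exact max_eq_right hNM
          omega
    rw [hφ]
    dsimp only
    rw [hzero]
    norm_num
  · -- the inequality
    have hij : ∀ i j : Fin N, locE N A φ i j
        = (locF M ((i:ℤ)-n) * locF M ((j:ℤ)-n)) * locE N A ψ i j / c := by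
      intro i j
      rw [locE, locE, hφ]
      dsimp only
      rw [_root_.map_mul, Complex.conj_ofReal]
      have hre : ((locF M ((i:ℤ)-n)/r : ℝ):ℂ) * (starRingEnd ℂ) (ψ i)
            * (A i j * (((locF M ((j:ℤ)-n)/r : ℝ):ℂ) * ψ j))
          = (((locF M ((i:ℤ)-n)/r) * (locF M ((j:ℤ)-n)/r) : ℝ):ℂ)
            * ((starRingEnd ℂ) (ψ i) * (A i j * ψ j)) := by
        push_cast
        ring
      rw [hre]
      rw [show ∀ (x : ℝ) (z : ℂ), ((x:ℂ) * z).re = x * z.re from fun x z => by simp]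
      rw [div_mul_div_comm, hr2]
      ring
    have hQn : (dotProduct (star φ) (A.mulVec φ)).re = locQ N M A ψ n / c := by
      rw [loc_dot_re, locQ, Finset.sum_div]
      apply Finset.sum_congr rfl; intro i _
      rw [Finset.sum_div]
      apply Finset.sum_congr rfl; intro j _
      exact hij i j
    rw [hQn]
    rw [div_le_iff₀ hPpos]
    have hRs : (dotProduct (star ψ) (A.mulVec ψ)).re
            + ((1500:ℝ) / (M : ℝ) ^ 2) * ∑ k ∈ Finset.Ico 1 M, (k : ℝ) ^ 2 *
                ‖dotProduct (star ψ)
                  (Matrix.mulVec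
                    (Matrix.of fun i j : Fin N =>
                      if ((i : ℤ) - (j : ℤ)).natAbs = k then A i j else 0) ψ)‖
            + 1500 * ∑ k ∈ Finset.Ico M N,
                ‖dotProduct (star ψ)
                  (Matrix.mulVec
                    (Matrix.of fun i j : Fin N =>
                      if ((i : ℤ) - (j : ℤ)).natAbs = k then A i j else 0) ψ)‖
        = (∑ i : Fin N, ∑ j : Fin N, locE N A ψ i j)
          + (1500/(M:ℝ)^2) * ∑ k ∈ Finset.Ico 1 M, (k:ℝ)^2 * locDab N A ψ k
          + 1500 * ∑ k ∈ Finset.Ico M N, locDab N A ψ k := by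
      rw [loc_dot_re]
      rfl
    rw [hRs]
    linarith [hQle]
end
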